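/- arXiv:2104.12238 — 7 statements merged into one kernel-verified Lean document; each statement's English description precedes it below -/
import Mathlib

section
/- Let (X, μ) be a finite measure space, let 0 < δ < 1, let A > 0, and let f : X → ℝ be a measurable function such that for all real λ ≠ 0 one has |∫_X e^{iλ f(x)} dμ(x)| ≤ A |λ|^{-δ}. Then there is a constant C_δ, depending only on δ, such that for every c ∈ ℝ and every ε > 0, μ({x ∈ X : |f(x) − c| ≤ ε}) ≤ C_δ · A · ε^δ. -/
/-!
The indicator of `[-1, 1]` is dominated by `e · exp (-x²)`, and `√π · exp (-x²)` is the Fourier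
transform of the Gaussian `exp (-l²)` at frequency `2x`. Integrating against the law `ν` of
`(f - c) / ε` and applying Fubini expresses `√π ∫ exp (-x²) dν` as `∫ φ(2l) exp (-l²) dl`, where
`φ` is the characteristic function of `ν`. The decay `‖φ λ‖ ≤ A ε^δ |λ|^(-δ)` bounds this by
`A ε^δ 2^(-δ) ∫ |l|^(-δ) exp (-l²) dl`, which is finite because `δ < 1`.
-/

open MeasureTheory Real Complex Metric

lemma integrable_abs_rpow_mul_exp_neg_sq {s : ℝ} (hs : -1 < s) :
    Integrable (fun x : ℝ => |x| ^ s * Real.exp (-x ^ 2)) := by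
  have hpos : Integrable (fun x : ℝ => x ^ s * Real.exp (-x ^ 2)) := by
    simpa using integrable_rpow_mul_exp_neg_mul_sq one_pos hs
  have hneg : Integrable (fun x : ℝ => (-x) ^ s * Real.exp (-x ^ 2)) := by
    simpa using hpos.comp_neg
  refine (hpos.norm.add hneg.norm).mono' (by fun_prop) (.of_forall fun x => ?_)
  rcases le_or_gt 0 x with hx | hx
  · rw [abs_of_nonneg hx]
    exact le_add_of_le_of_nonneg le_rfl (norm_nonneg _)
  · rw [abs_of_neg hx]
    exact le_add_of_nonneg_of_le (norm_nonneg _) le_rfl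

lemma integral_exp_mul_I_mul_exp_neg_sq (x : ℝ) :
    ∫ l : ℝ, cexp (↑(2 * l) * x * I) * cexp (-l ^ 2) = √π * Real.exp (-x ^ 2) := by
  have h := fourierIntegral_gaussian (b := 1) (by norm_num) (2 * x)
  have hsqrt : ((π : ℂ) / 1) ^ (1 / 2 : ℂ) = √π := by
    rw [div_one, sqrt_eq_rpow, ofReal_cpow pi_pos.le]
    norm_num
  rw [hsqrt] at h
  push_cast
  convert h using 3 with l
  · ring_nf
  · ring

lemma norm_charFun_map_mul_sub (ν : Measure ℝ) (a c t : ℝ) :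
    ‖charFun (ν.map fun x => a * (x - c)) t‖ = ‖charFun ν (a * t)‖ := by
  simp_rw [charFun_map_mul_comp (measurable_sub_const c).aemeasurable, sub_eq_add_neg,
    charFun_map_add_const, norm_mul, norm_exp_ofReal_mul_I, mul_one]

noncomputable def smallBallConst (δ : ℝ) : ℝ :=
  Real.exp 1 * 2 ^ (-δ) * (∫ x : ℝ, |x| ^ (-δ) * Real.exp (-x ^ 2)) / √π

lemma smallBallConst_nonneg (δ : ℝ) : 0 ≤ smallBallConst δ := by
  have : 0 ≤ ∫ x : ℝ, |x| ^ (-δ) * Real.exp (-x ^ 2) := integral_nonneg fun x => by positivity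
  unfold smallBallConst
  positivity

section FiniteMeasure

variable {ν : Measure ℝ} [IsFiniteMeasure ν]

lemma measureReal_closedBall_le_exp_one_mul_integral :
    ν.real (closedBall 0 1) ≤ Real.exp 1 * ∫ x, Real.exp (-x ^ 2) ∂ν := by
  rw [← integral_indicator_one measurableSet_closedBall, ← integral_const_mul]
  refine integral_mono ((integrable_const 1).indicator measurableSet_closedBall)
    ((integrable_const (Real.exp 1)).mono' (by fun_prop) (.of_forall fun x => ?_)) fun x => ?_
  · rw [norm_mul, Real.norm_of_nonneg (exp_pos _).le, Real.norm_of_nonneg (exp_pos _).le]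
    exact mul_le_of_le_one_right (exp_pos _).le (exp_le_one_iff.mpr (by nlinarith))
  · by_cases hx : x ∈ closedBall (0 : ℝ) 1
    · have hx2 : x ^ 2 ≤ 1 := by
        rw [mem_closedBall, dist_zero_right, Real.norm_eq_abs] at hx
        nlinarith [abs_nonneg x, sq_abs x]
      rw [Set.indicator_of_mem hx, Pi.one_apply, ← Real.exp_add]
      exact one_le_exp (by linarith)
    · rw [Set.indicator_of_notMem hx]
      positivity

lemma integral_charFun_two_mul_mul_exp_neg_sq :
    ∫ l : ℝ, charFun ν (2 * l) * cexp (-l ^ 2) = √π * ∫ x, Real.exp (-x ^ 2) ∂ν := by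
  have hint : Integrable (fun p : ℝ × ℝ => cexp (↑(2 * p.2) * p.1 * I) * cexp (-p.2 ^ 2))
      (ν.prod volume) := by
    have hg : Integrable (fun l : ℝ => Real.exp (-l ^ 2)) := by
      simpa using integrable_exp_neg_mul_sq one_pos
    refine ((integrable_const (1 : ℝ)).mul_prod hg).mono' (by fun_prop) (.of_forall fun p => ?_)
    rw [norm_mul, ← ofReal_mul, norm_exp_ofReal_mul_I, one_mul, ← ofReal_pow, ← ofReal_neg,
      norm_exp_ofReal]
    simp
  simp_rw [charFun_apply_real, ← integral_mul_const]
  rw [← integral_integral_swap hint]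
  simp_rw [integral_exp_mul_I_mul_exp_neg_sq]
  rw [integral_const_mul, integral_complex_ofReal]

theorem measureReal_closedBall_zero_one_le {δ B : ℝ} (hδ : δ < 1)
    (hν : ∀ t ≠ 0, ‖charFun ν t‖ ≤ B * |t| ^ (-δ)) :
    ν.real (closedBall 0 1) ≤ smallBallConst δ * B := by
  have hbound : ∀ l ≠ 0, ‖charFun ν (2 * l) * cexp (-l ^ 2)‖ ≤
      B * 2 ^ (-δ) * (|l| ^ (-δ) * Real.exp (-l ^ 2)) := by
    intro l hl
    rw [norm_mul, ← ofReal_pow, ← ofReal_neg, norm_exp_ofReal]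
    calc ‖charFun ν (2 * l)‖ * Real.exp (-l ^ 2)
        ≤ B * |2 * l| ^ (-δ) * Real.exp (-l ^ 2) := by
          gcongr
          exact hν _ (mul_ne_zero two_ne_zero hl)
      _ = B * 2 ^ (-δ) * (|l| ^ (-δ) * Real.exp (-l ^ 2)) := by
          rw [abs_mul, abs_two, mul_rpow zero_le_two (abs_nonneg l)]
          ring
  have hsmooth : √π * ∫ x, Real.exp (-x ^ 2) ∂ν ≤
      B * 2 ^ (-δ) * ∫ x : ℝ, |x| ^ (-δ) * Real.exp (-x ^ 2) :=
    calc √π * ∫ x, Real.exp (-x ^ 2) ∂ν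
        = ‖∫ l : ℝ, charFun ν (2 * l) * cexp (-l ^ 2)‖ := by
          rw [integral_charFun_two_mul_mul_exp_neg_sq, ← ofReal_mul, norm_real,
            Real.norm_of_nonneg (by positivity)]
      _ ≤ ∫ l : ℝ, B * 2 ^ (-δ) * (|l| ^ (-δ) * Real.exp (-l ^ 2)) :=
          norm_integral_le_of_norm_le
            ((integrable_abs_rpow_mul_exp_neg_sq (by linarith)).const_mul _)
            ((Measure.ae_ne volume 0).mono hbound)
      _ = B * 2 ^ (-δ) * ∫ x : ℝ, |x| ^ (-δ) * Real.exp (-x ^ 2) := integral_const_mul _ _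
  calc ν.real (closedBall 0 1) ≤ Real.exp 1 * ∫ x, Real.exp (-x ^ 2) ∂ν :=
        measureReal_closedBall_le_exp_one_mul_integral
    _ ≤ Real.exp 1 * (B * 2 ^ (-δ) * (∫ x : ℝ, |x| ^ (-δ) * Real.exp (-x ^ 2)) / √π) := by
        gcongr
        rw [le_div_iff₀ (by positivity)]
        linarith
    _ = smallBallConst δ * B := by
        rw [smallBallConst]
        ring

theorem measureReal_closedBall_le {δ B : ℝ} (hδ : δ < 1)
    (hν : ∀ t ≠ 0, ‖charFun ν t‖ ≤ B * |t| ^ (-δ)) (c : ℝ) {ε : ℝ} (hε : 0 < ε) :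
    ν.real (closedBall c ε) ≤ smallBallConst δ * B * ε ^ δ := by
  have hscaled : ∀ t ≠ 0, ‖charFun (ν.map fun x => ε⁻¹ * (x - c)) t‖ ≤
      B * ε ^ δ * |t| ^ (-δ) := by
    intro t ht
    rw [norm_charFun_map_mul_sub]
    refine (hν _ (mul_ne_zero (inv_ne_zero hε.ne') ht)).trans_eq ?_
    rw [abs_mul, abs_inv, abs_of_pos hε, mul_rpow (inv_nonneg.mpr hε.le) (abs_nonneg t),
      inv_rpow hε.le, rpow_neg hε.le, inv_inv]
    ring
  have hpreimage : (fun x => ε⁻¹ * (x - c)) ⁻¹' closedBall 0 1 = closedBall c ε := by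
    ext x
    simp only [Set.mem_preimage, mem_closedBall, Real.dist_eq, sub_zero, abs_mul, abs_inv,
      abs_of_pos hε, inv_mul_le_one₀ hε]
  calc ν.real (closedBall c ε)
      = (ν.map fun x => ε⁻¹ * (x - c)).real (closedBall 0 1) := by
        rw [map_measureReal_apply (by fun_prop) measurableSet_closedBall, hpreimage]
    _ ≤ smallBallConst δ * (B * ε ^ δ) := measureReal_closedBall_zero_one_le hδ hscaled
    _ = smallBallConst δ * B * ε ^ δ := by ring

end FiniteMeasure

theorem stmt_0_general (δ : ℝ) (hδ1 : δ < 1) :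
    ∃ C : ℝ, 0 < C ∧
      ∀ (X : Type) (_ : MeasurableSpace X) (μ : Measure X), IsFiniteMeasure μ →
        ∀ f : X → ℝ, Measurable f →
        ∀ A : ℝ, 0 < A →
        (∀ lam : ℝ, lam ≠ 0 →
          ‖∫ x, Complex.exp (Complex.I * (lam : ℂ) * (f x : ℂ)) ∂μ‖ ≤ A * |lam| ^ (-δ)) →
        ∀ (c : ℝ) (ε : ℝ), 0 < ε →
          μ {x | |f x - c| ≤ ε} ≤ ENNReal.ofReal (C * A * ε ^ δ) := by
  have hC : 0 < smallBallConst δ + 1 := by linarith [smallBallConst_nonneg δ]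
  refine ⟨smallBallConst δ + 1, hC, ?_⟩
  intro X _ μ _ f hf A hA hdecay c ε hε
  have hcharFun : ∀ t ≠ 0, ‖charFun (μ.map f) t‖ ≤ A * |t| ^ (-δ) := fun t ht => by
    rw [charFun_apply_real, integral_map hf.aemeasurable (by fun_prop)]
    simpa only [mul_comm I, mul_right_comm _ I] using hdecay t ht
  have hball : μ {x | |f x - c| ≤ ε} = μ.map f (closedBall c ε) := by
    rw [Measure.map_apply hf measurableSet_closedBall]
    simp only [Set.preimage, mem_closedBall, Real.dist_eq]
  rw [hball, ENNReal.le_ofReal_iff_toReal_le (measure_ne_top _ _) (by positivity)]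
  calc (μ.map f).real (closedBall c ε) ≤ smallBallConst δ * A * ε ^ δ :=
        measureReal_closedBall_le hδ1 hcharFun c hε
    _ ≤ (smallBallConst δ + 1) * A * ε ^ δ := by gcongr; linarith

/-- If `(X, μ)` is a finite measure space, `0 < δ < 1`, `A > 0`, and
`f : X → ℝ` is measurable with `|∫_X e^{iλ f} dμ| ≤ A |λ|^{-δ}` for all `λ ≠ 0`, then
there is a constant `C = C_δ` depending only on `δ` such that for every `c ∈ ℝ` and
`ε > 0`, `μ {x : |f x - c| ≤ ε} ≤ C · A · ε^δ`. -/
theorem stmt_0 (δ : ℝ) (hδ0 : 0 < δ) (hδ1 : δ < 1) :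
    ∃ C : ℝ, 0 < C ∧
      ∀ (X : Type) (_ : MeasurableSpace X) (μ : Measure X), IsFiniteMeasure μ →
        ∀ f : X → ℝ, Measurable f →
        ∀ A : ℝ, 0 < A →
        (∀ lam : ℝ, lam ≠ 0 →
          ‖∫ x, Complex.exp (Complex.I * (lam : ℂ) * (f x : ℂ)) ∂μ‖ ≤ A * |lam| ^ (-δ)) →
        ∀ (c : ℝ) (ε : ℝ), 0 < ε →
          μ {x | |f x - c| ≤ ε} ≤ ENNReal.ofReal (C * A * ε ^ δ) :=
  stmt_0_general δ hδ1
end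

section
/- Let N ≥ 2, let 0 < δ < 1, let A ≥ 1 and let M ≥ 0 be an integer. Let f be a smooth real-valued function on a compact interval I = [a, b] and suppose I can be partitioned into at most M + 1 subintervals on each of which f^{(N)} is single-signed, and suppose that for all real λ ≠ 0 and every subinterval J ⊆ I, |∫_J e^{iλ f(x)} dx| ≤ A |λ|^{-δ}. Then there is a constant C, depending only on d, N and δ, such that for every polynomial P of degree d ≥ 2 whose derivative P′ is monic, and for all real λ ≠ 0, |∫_I e^{iλ P(f(x))} dx| ≤ C · (M + 1) · A^{1/(1−δ)} · |λ|^{-δ/d}. -/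
open MeasureTheory

open Set

namespace Stmt3

def SgnOn (g : ℝ → ℝ) (s : Set ℝ) : Prop := (∀ x ∈ s, 0 ≤ g x) ∨ (∀ x ∈ s, g x ≤ 0)

lemma SgnOn.mono {g : ℝ → ℝ} {s t : Set ℝ} (h : SgnOn g t) (hst : s ⊆ t) : SgnOn g s := by
  rcases h with h | h
  · exact Or.inl fun x hx => h x (hst hx)
  · exact Or.inr fun x hx => h x (hst hx)

lemma le_on_Icc_of_Ioo {g : ℝ → ℝ} {s t c : ℝ} (hst : s < t)
    (hg : ContinuousOn g (Set.Icc s t)) (H : ∀ x ∈ Set.Ioo s t, c ≤ g x) :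
    ∀ x ∈ Set.Icc s t, c ≤ g x := by
  intro x hx
  have hcl : x ∈ closure (Set.Ioo s t) := by
    rw [closure_Ioo hst.ne]; exact hx
  have hne : (nhdsWithin x (Set.Ioo s t)).NeBot := mem_closure_iff_nhdsWithin_neBot.1 hcl
  have htd : Filter.Tendsto g (nhdsWithin x (Set.Ioo s t)) (nhds (g x)) :=
    (hg x hx).mono Set.Ioo_subset_Icc_self
  exact ge_of_tendsto htd (Filter.eventually_of_mem self_mem_nhdsWithin fun y hy => H y hy)

/-- Core integration by parts bound. -/
lemma ibp {s t K B : ℝ} (hst : s ≤ t) {α α' : ℝ → ℝ} {H H' ψ : ℝ → ℂ}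
    (hψ : ∀ x ∈ Set.Icc s t, (α x : ℂ) * H' x = ψ x)
    (hαc : ContinuousOn α (Set.Icc s t)) (hα'c : ContinuousOn α' (Set.Icc s t))
    (hHc : ContinuousOn H (Set.Icc s t)) (hH'c : ContinuousOn H' (Set.Icc s t))
    (hαd : ∀ x ∈ Set.Ioo s t, HasDerivAt α (α' x) x)
    (hHd : ∀ x ∈ Set.Ioo s t, HasDerivAt H (H' x) x)
    (hsign : (∀ x ∈ Set.Icc s t, 0 ≤ α' x) ∨ (∀ x ∈ Set.Icc s t, α' x ≤ 0))
    (hK : ∀ x ∈ Set.Icc s t, |α x| ≤ K) (hB : ∀ x ∈ Set.Icc s t, ‖H x‖ ≤ B) :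
    ‖∫ x in s..t, ψ x‖ ≤ 4 * K * B := by
  have hsm : s ∈ Set.Icc s t := ⟨le_refl s, hst⟩
  have htm : t ∈ Set.Icc s t := ⟨hst, le_refl t⟩
  have hK0 : 0 ≤ K := (abs_nonneg _).trans (hK s hsm)
  have hB0 : 0 ≤ B := (norm_nonneg _).trans (hB s hsm)
  have huIcc : Set.uIcc s t = Set.Icc s t := Set.uIcc_of_le hst
  have hmin : min s t = s := min_eq_left hst
  have hmax : max s t = t := max_eq_right hst
  -- rewrite integrand
  have hcongr : ∫ x in s..t, ψ x = ∫ x in s..t, (α x : ℂ) * H' x := by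
    apply intervalIntegral.integral_congr
    intro x hx
    rw [huIcc] at hx
    exact (hψ x hx).symm
  rw [hcongr]
  -- integration by parts
  have hαcℂ : ContinuousOn (fun x => (α x : ℂ)) (Set.uIcc s t) := by
    rw [huIcc]; exact Complex.continuous_ofReal.comp_continuousOn hαc
  have hHcu : ContinuousOn H (Set.uIcc s t) := by rw [huIcc]; exact hHc
  have hu' : IntervalIntegrable (fun x => (α' x : ℂ)) volume s t := by
    apply ContinuousOn.intervalIntegrable
    rw [huIcc]; exact Complex.continuous_ofReal.comp_continuousOn hα'c
  have hv' : IntervalIntegrable H' volume s t := by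
    apply ContinuousOn.intervalIntegrable
    rw [huIcc]; exact hH'c
  have hαdℂ : ∀ x ∈ Set.Ioo (min s t) (max s t),
      HasDerivAt (fun x => (α x : ℂ)) ((α' x : ℂ)) x := by
    rw [hmin, hmax]; exact fun x hx => (hαd x hx).ofReal_comp
  have hHdu : ∀ x ∈ Set.Ioo (min s t) (max s t), HasDerivAt H (H' x) x := by
    rw [hmin, hmax]; exact hHd
  have key := intervalIntegral.integral_mul_deriv_eq_deriv_mul_of_hasDerivAt
    hαcℂ hHcu hαdℂ hHdu hu' hv'
  rw [key]
  -- bound the remaining integral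
  have hcore : ‖∫ x in s..t, (α' x : ℂ) * H x‖ ≤ 2 * K * B := by
    have h1 : ‖∫ x in s..t, (α' x : ℂ) * H x‖ ≤ ∫ x in s..t, ‖(α' x : ℂ) * H x‖ :=
      intervalIntegral.norm_integral_le_integral_norm hst
    have hint1 : IntervalIntegrable (fun x => ‖(α' x : ℂ) * H x‖) volume s t := by
      apply ContinuousOn.intervalIntegrable
      rw [huIcc]
      exact ((Complex.continuous_ofReal.comp_continuousOn hα'c).mul hHc).norm
    -- FTC for α
    have hftc : ∫ x in s..t, α' x = α t - α s := by
      apply intervalIntegral.integral_eq_sub_of_hasDeriv_right_of_le hst hαc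
      · exact fun x hx => (hαd x hx).hasDerivWithinAt
      · apply ContinuousOn.intervalIntegrable; rw [huIcc]; exact hα'c
    have hbd : |α t - α s| ≤ 2 * K := by
      calc |α t - α s| ≤ |α t| + |α s| := abs_sub _ _
        _ ≤ K + K := add_le_add (hK t htm) (hK s hsm)
        _ = 2 * K := by ring
    rcases hsign with hpos | hneg
    · have h2 : ∫ x in s..t, ‖(α' x : ℂ) * H x‖ ≤ ∫ x in s..t, α' x * B := by
        apply intervalIntegral.integral_mono_on hst hint1
        · apply ContinuousOn.intervalIntegrable; rw [huIcc]
          exact (hα'c.mul continuousOn_const)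
        · intro x hx
          rw [norm_mul, Complex.norm_real, Real.norm_eq_abs, abs_of_nonneg (hpos x hx)]
          exact mul_le_mul_of_nonneg_left (hB x hx) (hpos x hx)
      have h3 : ∫ x in s..t, α' x * B = (α t - α s) * B := by
        rw [intervalIntegral.integral_mul_const, hftc]
      calc ‖∫ x in s..t, (α' x : ℂ) * H x‖ ≤ ∫ x in s..t, α' x * B := h1.trans h2
        _ = (α t - α s) * B := h3
        _ ≤ |α t - α s| * B := mul_le_mul_of_nonneg_right (le_abs_self _) hB0
        _ ≤ 2 * K * B := mul_le_mul_of_nonneg_right hbd hB0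
    · have h2 : ∫ x in s..t, ‖(α' x : ℂ) * H x‖ ≤ ∫ x in s..t, -α' x * B := by
        apply intervalIntegral.integral_mono_on hst hint1
        · apply ContinuousOn.intervalIntegrable; rw [huIcc]
          exact (hα'c.neg.mul continuousOn_const)
        · intro x hx
          rw [norm_mul, Complex.norm_real, Real.norm_eq_abs, abs_of_nonpos (hneg x hx)]
          exact mul_le_mul_of_nonneg_left (hB x hx) (neg_nonneg.2 (hneg x hx))
      have h3 : ∫ x in s..t, -α' x * B = -(α t - α s) * B := by
        simp_rw [neg_mul]
        rw [intervalIntegral.integral_neg, intervalIntegral.integral_mul_const, hftc]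
      calc ‖∫ x in s..t, (α' x : ℂ) * H x‖ ≤ ∫ x in s..t, -α' x * B := h1.trans h2
        _ = -(α t - α s) * B := h3
        _ ≤ |α t - α s| * B := by
            apply mul_le_mul_of_nonneg_right _ hB0
            rw [← abs_neg]; exact le_abs_self _
        _ ≤ 2 * K * B := mul_le_mul_of_nonneg_right hbd hB0
  have hub : ∀ x, x ∈ Set.Icc s t → ‖(α x : ℂ) * H x‖ ≤ K * B := by
    intro x hx
    rw [norm_mul, Complex.norm_real, Real.norm_eq_abs]
    exact mul_le_mul (hK x hx) (hB x hx) (norm_nonneg _) hK0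
  calc ‖(α t : ℂ) * H t - (α s : ℂ) * H s - ∫ x in s..t, (α' x : ℂ) * H x‖
      ≤ ‖(α t : ℂ) * H t - (α s : ℂ) * H s‖ + ‖∫ x in s..t, (α' x : ℂ) * H x‖ := norm_sub_le _ _
    _ ≤ (‖(α t : ℂ) * H t‖ + ‖(α s : ℂ) * H s‖) + ‖∫ x in s..t, (α' x : ℂ) * H x‖ :=
        add_le_add_left (norm_sub_le _ _) _
    _ ≤ (K * B + K * B) + 2 * K * B :=
        add_le_add (add_le_add (hub t htm) (hub s hsm)) hcore
    _ = 4 * K * B := by ring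


lemma norm_exp_I_mul (lam r : ℝ) : ‖Complex.exp (Complex.I * lam * (r : ℂ))‖ = 1 := by
  rw [Complex.norm_exp]
  simp [Complex.mul_re]

lemma exp_cont (Q : Polynomial ℝ) (lam : ℝ) :
    Continuous fun y : ℝ => Complex.exp (Complex.I * lam * ((Q.eval y : ℝ) : ℂ)) :=
  Complex.continuous_exp.comp
    (continuous_const.mul (Complex.continuous_ofReal.comp (Polynomial.continuous Q)))

lemma intervalIntegral_conj {g : ℝ → ℂ} {u v : ℝ} :
    ∫ y in u..v, (starRingEnd ℂ) (g y) = (starRingEnd ℂ) (∫ y in u..v, g y) := by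
  rw [intervalIntegral, intervalIntegral, integral_conj, integral_conj, map_sub]

lemma norm_int_exp_neg (Q : Polynomial ℝ) (lam u v : ℝ) :
    ‖∫ y in u..v, Complex.exp (Complex.I * lam * (((-Q).eval y : ℝ) : ℂ))‖
      = ‖∫ y in u..v, Complex.exp (Complex.I * lam * ((Q.eval y : ℝ) : ℂ))‖ := by
  have hpt : ∀ y : ℝ, Complex.exp (Complex.I * lam * (((-Q).eval y : ℝ) : ℂ))
      = (starRingEnd ℂ) (Complex.exp (Complex.I * lam * ((Q.eval y : ℝ) : ℂ))) := by
    intro y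
    rw [← Complex.exp_conj]
    congr 1
    simp only [map_mul, Complex.conj_I, Complex.conj_ofReal, Polynomial.eval_neg,
      Complex.ofReal_neg]
    ring
  simp_rw [hpt]
  rw [intervalIntegral_conj]
  exact RCLike.norm_conj _

lemma iterate_derivative_eq_C {R : Polynomial ℝ} {e : ℕ} (h : R.natDegree ≤ e) :
    Polynomial.derivative^[e] R = Polynomial.C ((e.factorial : ℝ) * R.coeff e) := by
  induction e generalizing R with
  | zero =>
    simp only [Function.iterate_zero_apply, Nat.factorial_zero, Nat.cast_one, one_mul]
    exact Polynomial.eq_C_of_natDegree_le_zero h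
  | succ e ih =>
    rw [Function.iterate_succ_apply, ih (by have := Polynomial.natDegree_derivative_le R; omega)]
    rw [Polynomial.coeff_derivative]
    congr 1
    push_cast [Nat.factorial_succ]
    ring

lemma eval_iterate_derivative_monic {P : Polynomial ℝ} {d : ℕ} (hd : 2 ≤ d)
    (hdeg : P.natDegree = d) (hmon : P.derivative.Monic) (y : ℝ) :
    (Polynomial.derivative^[d] P).eval y = ((d - 1).factorial : ℝ) := by
  have hP0 : P ≠ 0 := by
    intro h; rw [h, Polynomial.natDegree_zero] at hdeg; omega
  have hlc : P.coeff d ≠ 0 := by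
    rw [← hdeg]; exact Polynomial.leadingCoeff_ne_zero.2 hP0
  have hco : P.derivative.coeff (d - 1) = P.coeff d * d := by
    rw [Polynomial.coeff_derivative]
    have h1 : d - 1 + 1 = d := by omega
    rw [h1]
    congr 1
    exact_mod_cast congrArg Nat.cast h1
  have hne : P.derivative.coeff (d - 1) ≠ 0 := by
    rw [hco]
    exact mul_ne_zero hlc (by positivity)
  have hdd : P.derivative.natDegree = d - 1 := by
    have hle : P.derivative.natDegree ≤ d - 1 := by
      have := Polynomial.natDegree_derivative_le P; omega
    have hge := Polynomial.le_natDegree_of_ne_zero hne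
    omega
  have hco1 : P.derivative.coeff (d - 1) = 1 := by
    rw [← hdd]; exact hmon.coeff_natDegree
  have hiter : Polynomial.derivative^[d] P = Polynomial.derivative^[d - 1] P.derivative := by
    conv_lhs => rw [show d = (d - 1) + 1 by omega]
    rw [Function.iterate_succ_apply]
  rw [hiter, iterate_derivative_eq_C (le_of_eq hdd), hco1, mul_one, Polynomial.eval_C]


lemma vdc : ∀ k : ℕ, ∀ Q : Polynomial ℝ, ∀ lam m u v : ℝ, 0 < lam → 0 < m → u ≤ v →
    (∀ y ∈ Set.Icc u v, m ≤ (Polynomial.derivative^[k+1] Q).eval y) →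
    (k = 0 → SgnOn (fun y => (Polynomial.derivative^[2] Q).eval y) (Set.Icc u v)) →
    ‖∫ y in u..v, Complex.exp (Complex.I * lam * ((Q.eval y : ℝ) : ℂ))‖
      ≤ (7 * 2 ^ (k + 1) - 2) * (lam * m) ^ (-(1 / (k + 1 : ℝ))) := by
  intro k
  induction k with
  | zero =>
    intro Q lam m u v hlam hm huv hlow hsgn
    have hsgn2 := hsgn rfl
    have hlm : 0 < lam * m := mul_pos hlam hm
    have hit2 : Polynomial.derivative^[2] Q = Polynomial.derivative (Polynomial.derivative Q) := by
      rw [Function.iterate_succ_apply, Function.iterate_one]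
    have hlow' : ∀ y ∈ Set.Icc u v, m ≤ (Polynomial.derivative Q).eval y := by
      intro y hy
      have := hlow y hy
      rwa [Function.iterate_one] at this
    have hc : ∀ y ∈ Set.Icc u v, lam * m ≤ lam * (Polynomial.derivative Q).eval y :=
      fun y hy => mul_le_mul_of_nonneg_left (hlow' y hy) hlam.le
    have hcpos : ∀ y ∈ Set.Icc u v, 0 < lam * (Polynomial.derivative Q).eval y :=
      fun y hy => lt_of_lt_of_le hlm (hc y hy)
    have key := ibp (s := u) (t := v) (K := (lam * m)⁻¹) (B := 1) huv
      (α := fun y => (lam * (Polynomial.derivative Q).eval y)⁻¹)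
      (α' := fun y => -(lam * (Polynomial.derivative (Polynomial.derivative Q)).eval y) /
        (lam * (Polynomial.derivative Q).eval y) ^ 2)
      (H := fun y => -Complex.I * Complex.exp (Complex.I * lam * ((Q.eval y : ℝ) : ℂ)))
      (H' := fun y => ((lam * (Polynomial.derivative Q).eval y : ℝ) : ℂ) *
        Complex.exp (Complex.I * lam * ((Q.eval y : ℝ) : ℂ)))
      (ψ := fun y => Complex.exp (Complex.I * lam * ((Q.eval y : ℝ) : ℂ)))
      ?hψ ?hαc ?hα'c ?hHc ?hH'c ?hαd ?hHd ?hsign ?hK ?hB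
    case hψ =>
      intro y hy
      have hne : lam * (Polynomial.derivative Q).eval y ≠ 0 := (hcpos y hy).ne'
      have hneC : ((lam * (Polynomial.derivative Q).eval y : ℝ) : ℂ) ≠ 0 :=
        Complex.ofReal_ne_zero.2 hne
      rw [Complex.ofReal_inv, ← mul_assoc, inv_mul_cancel₀ hneC, one_mul]
    case hαc =>
      exact ((continuous_const.mul (Polynomial.continuous _)).continuousOn).inv₀
        fun y hy => (hcpos y hy).ne'
    case hα'c =>
      exact ContinuousOn.div
        ((continuous_const.mul (Polynomial.continuous _)).continuousOn).neg
        (((continuous_const.mul (Polynomial.continuous _)).pow 2).continuousOn)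
        fun y hy => pow_ne_zero 2 (hcpos y hy).ne'
    case hHc => exact (continuous_const.mul (exp_cont Q lam)).continuousOn
    case hH'c =>
      exact ((Complex.continuous_ofReal.comp
        (continuous_const.mul (Polynomial.continuous (Polynomial.derivative Q)))).mul
        (exp_cont Q lam)).continuousOn
    case hαd =>
      intro y hy
      have hd : HasDerivAt (fun y => lam * (Polynomial.derivative Q).eval y)
          (lam * (Polynomial.derivative (Polynomial.derivative Q)).eval y) y :=
        (Polynomial.hasDerivAt _ y).const_mul lam
      exact hd.inv (hcpos y (Set.Ioo_subset_Icc_self hy)).ne'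
    case hHd =>
      intro y hy
      have h1 : HasDerivAt (fun y : ℝ => Complex.I * lam * ((Q.eval y : ℝ) : ℂ))
          (Complex.I * lam * (((Polynomial.derivative Q).eval y : ℝ) : ℂ)) y :=
        ((Polynomial.hasDerivAt Q y).ofReal_comp).const_mul (Complex.I * lam)
      have h2 := (h1.cexp).const_mul (-Complex.I)
      refine h2.congr_deriv ?_
      push_cast
      linear_combination (-((lam : ℂ) * (((Polynomial.derivative Q).eval y : ℝ) : ℂ) *
        Complex.exp (Complex.I * lam * ((Q.eval y : ℝ) : ℂ)))) * Complex.I_mul_I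
    case hsign =>
      rcases hsgn2 with hp | hn
      · right
        intro y hy
        apply div_nonpos_of_nonpos_of_nonneg
        · have := hp y hy
          rw [hit2] at this
          simp only [neg_nonpos]
          exact mul_nonneg hlam.le this
        · positivity
      · left
        intro y hy
        apply div_nonneg
        · have := hn y hy
          rw [hit2] at this
          simp only [neg_nonneg]
          exact mul_nonpos_of_nonneg_of_nonpos hlam.le this
        · positivity
    case hK =>
      intro y hy
      rw [abs_of_pos (inv_pos.2 (hcpos y hy))]
      exact inv_anti₀ hlm (hc y hy)
    case hB =>
      intro y hy
      rw [norm_mul, norm_neg, Complex.norm_I, one_mul, norm_exp_I_mul]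
    refine key.trans ?_
    have h1 : (-(1 / ((0:ℕ) + 1 : ℝ))) = (-1 : ℝ) := by norm_num
    rw [h1, Real.rpow_neg_one]
    have : 0 ≤ (lam * m)⁻¹ := (inv_pos.2 hlm).le
    nlinarith
  | succ k ih =>
    intro Q lam m u v hlam hm huv hlow hsgn
    clear hsgn
    set g : ℝ → ℝ := fun y => (Polynomial.derivative^[k+1] Q).eval y with hg
    set g' : ℝ → ℝ := fun y => (Polynomial.derivative^[k+1+1] Q).eval y with hg'
    have hit : Polynomial.derivative (Polynomial.derivative^[k+1] Q)
        = Polynomial.derivative^[k+1+1] Q := (Function.iterate_succ_apply' _ _ _).symm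
    have hgd : ∀ y : ℝ, HasDerivAt g (g' y) y := by
      intro y
      have := Polynomial.hasDerivAt (Polynomial.derivative^[k+1] Q) y
      rw [hit] at this
      exact this
    have hgcont : Continuous g := Polynomial.continuous _
    have hlow' : ∀ y ∈ Set.Icc u v, m ≤ g' y := hlow
    have keydiff : ∀ y ∈ Set.Icc u v, ∀ z ∈ Set.Icc u v, z ≤ y → m * (y - z) ≤ g y - g z := by
      have hmono : MonotoneOn (fun y => g y - m * y) (Set.Icc u v) := by
        apply monotoneOn_of_deriv_nonneg (convex_Icc u v)
        · exact (hgcont.sub (continuous_const.mul continuous_id)).continuousOn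
        · intro y hy
          exact ((hgd y).sub ((hasDerivAt_id y).const_mul m)).differentiableAt.differentiableWithinAt
        · intro y hy
          rw [interior_Icc] at hy
          have hd : HasDerivAt (fun y => g y - m * y) (g' y - m * 1) y :=
            (hgd y).sub ((hasDerivAt_id y).const_mul m)
          rw [hd.deriv]
          have := hlow' y (Set.Ioo_subset_Icc_self hy)
          linarith
      intro y hy z hz hzy
      have := hmono hz hy hzy
      simp only at this
      linarith
    set ψ : ℝ → ℂ := fun y => Complex.exp (Complex.I * lam * ((Q.eval y : ℝ) : ℂ)) with hψdef
    have hψcont : Continuous ψ := exp_cont Q lam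
    have hψint : ∀ p q : ℝ, IntervalIntegrable ψ volume p q :=
      fun p q => hψcont.intervalIntegrable p q
    have hlm : 0 < lam * m := mul_pos hlam hm
    set r : ℝ := (lam * m) ^ (-(1 / ((k : ℝ) + 2))) with hr
    have hrpos : 0 < r := Real.rpow_pos_of_pos hlm _
    set T : Set ℝ := Set.Icc u v ∩ g ⁻¹' Set.Iic 0 with hT
    set S : Set ℝ := insert u T with hS
    have hScl : IsClosed S := by
      rw [hS, Set.insert_eq]
      exact isClosed_singleton.union (isClosed_Icc.inter (isClosed_Iic.preimage hgcont))
    have hSsub : S ⊆ Set.Icc u v := by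
      rw [hS]
      exact Set.insert_subset ⟨le_refl u, huv⟩ Set.inter_subset_left
    have hSne : S.Nonempty := ⟨u, Set.mem_insert u T⟩
    have hScp : IsCompact S := isCompact_Icc.of_isClosed_subset hScl hSsub
    have hSbdd : BddAbove S := BddAbove.mono hSsub bddAbove_Icc
    set y0 : ℝ := sSup S with hy0
    have hy0S : y0 ∈ S := hScp.sSup_mem hSne
    have hy0Icc : y0 ∈ Set.Icc u v := hSsub hy0S
    have hRclaim : ∀ y ∈ Set.Icc u v, y0 < y → m * (y - y0) ≤ g y := by
      intro y hy hlt
      by_contra hcon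
      push_neg at hcon
      have hgy : 0 < g y := by
        by_contra hgy
        push_neg at hgy
        have hyS : y ∈ S := Set.mem_insert_of_mem _ ⟨hy, hgy⟩
        have := le_csSup hSbdd hyS
        linarith
      set y2 : ℝ := y - g y / m with hy2
      have h1 : y0 < y2 := by
        have hlt2 : g y / m < y - y0 := by
          rw [div_lt_iff₀ hm]
          nlinarith
        simp only [hy2]
        linarith
      have h2 : y2 < y := by
        have : 0 < g y / m := div_pos hgy hm
        simp only [hy2]
        linarith
      have hy2Icc : y2 ∈ Set.Icc u v := ⟨le_trans hy0Icc.1 h1.le, le_trans h2.le hy.2⟩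
      have h3 := keydiff y hy y2 hy2Icc h2.le
      have h4 : m * (y - y2) = g y := by
        simp only [hy2]
        field_simp
        ring
      have h5 : g y2 ≤ 0 := by linarith
      have hyS : y2 ∈ S := Set.mem_insert_of_mem _ ⟨hy2Icc, h5⟩
      have := le_csSup hSbdd hyS
      linarith
    set p : ℝ := max (y0 - r) u with hp
    set q : ℝ := min (y0 + r) v with hq
    have hup : u ≤ p := le_max_right _ _
    have hpy0 : p ≤ y0 := max_le (by linarith) hy0Icc.1
    have hy0q : y0 ≤ q := le_min (by linarith) hy0Icc.2
    have hqv : q ≤ v := min_le_right _ _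
    have hpq : p ≤ q := le_trans hpy0 hy0q
    have e2 : (∫ y in p..q, ψ y) + (∫ y in q..v, ψ y) = ∫ y in p..v, ψ y :=
      intervalIntegral.integral_add_adjacent_intervals (hψint p q) (hψint q v)
    have e1 : (∫ y in u..p, ψ y) + (∫ y in p..v, ψ y) = ∫ y in u..v, ψ y :=
      intervalIntegral.integral_add_adjacent_intervals (hψint u p) (hψint p v)
    have hnorm : ‖∫ y in u..v, ψ y‖ ≤ ‖∫ y in u..p, ψ y‖ + ‖∫ y in p..q, ψ y‖
        + ‖∫ y in q..v, ψ y‖ := by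
      rw [← e1, ← e2]
      calc ‖(∫ y in u..p, ψ y) + ((∫ y in p..q, ψ y) + (∫ y in q..v, ψ y))‖
          ≤ ‖∫ y in u..p, ψ y‖ + ‖(∫ y in p..q, ψ y) + (∫ y in q..v, ψ y)‖ := norm_add_le _ _
        _ ≤ ‖∫ y in u..p, ψ y‖ + (‖∫ y in p..q, ψ y‖ + ‖∫ y in q..v, ψ y‖) := by
            have := norm_add_le (∫ y in p..q, ψ y) (∫ y in q..v, ψ y)
            linarith
        _ = _ := by ring
    have hCbr : (lam * (m * r)) ^ (-(1 / ((k : ℝ) + 1))) = r := by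
      have h1 : lam * (m * r) = (lam * m) ^ (1 - 1 / ((k : ℝ) + 2)) := by
        have h2 : (lam * m) ^ (1 - 1 / ((k : ℝ) + 2))
            = (lam * m) ^ (1 : ℝ) * (lam * m) ^ (-(1 / ((k : ℝ) + 2))) := by
          rw [← Real.rpow_add hlm]
          ring_nf
        rw [h2, Real.rpow_one, hr]
        ring
      rw [h1, ← Real.rpow_mul hlm.le, hr]
      congr 1
      have hk1 : ((k : ℝ) + 1) ≠ 0 := by positivity
      have hk2 : ((k : ℝ) + 2) ≠ 0 := by positivity
      field_simp
      ring
    have h2p : (1 : ℝ) ≤ 2 ^ (k + 1) := one_le_pow₀ (by norm_num)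
    have hcoef : (0 : ℝ) ≤ 7 * 2 ^ (k + 1) - 2 := by nlinarith
    have hmid : ‖∫ y in p..q, ψ y‖ ≤ 2 * r := by
      have h1 : ‖∫ y in p..q, ψ y‖ ≤ 1 * |q - p| := by
        apply intervalIntegral.norm_integral_le_of_norm_le_const
        intro x _
        exact le_of_eq (norm_exp_I_mul lam _)
      rw [one_mul] at h1
      have h2 : |q - p| ≤ 2 * r := by
        rw [abs_of_nonneg (by linarith)]
        have hple : y0 - r ≤ p := le_max_left _ _
        have hqle : q ≤ y0 + r := min_le_left _ _
        linarith
      linarith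
    have hright : ‖∫ y in q..v, ψ y‖ ≤ (7 * 2 ^ (k + 1) - 2) * r := by
      rcases eq_or_lt_of_le hqv with heq | hlt
      · rw [heq, intervalIntegral.integral_same, norm_zero]
        positivity
      · have hqy0r : q = y0 + r := by
          rcases le_total (y0 + r) v with h | h
          · exact min_eq_left h
          · exfalso
            have : q = v := min_eq_right h
            linarith
        have hlow2 : ∀ y ∈ Set.Icc q v, m * r ≤ (Polynomial.derivative^[k+1] Q).eval y := by
          intro y hy
          have hyIcc : y ∈ Set.Icc u v := ⟨le_trans (le_trans hup hpq) hy.1, hy.2⟩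
          have hy0y : y0 < y := by
            have := hy.1
            rw [hqy0r] at this
            linarith
          have hR := hRclaim y hyIcc hy0y
          have h4 : m * r ≤ m * (y - y0) := by
            apply mul_le_mul_of_nonneg_left _ hm.le
            have := hy.1
            rw [hqy0r] at this
            linarith
          have : m * (y - y0) ≤ g y := hR
          simp only [hg] at this
          linarith
        have hsgn2 : (k = 0) → SgnOn (fun y => (Polynomial.derivative^[2] Q).eval y)
            (Set.Icc q v) := by
          intro hk0
          subst hk0
          left
          intro y hy
          have hyIcc : y ∈ Set.Icc u v := ⟨le_trans (le_trans hup hpq) hy.1, hy.2⟩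
          have := hlow y hyIcc
          linarith
        have hIH := ih Q lam (m * r) q v hlam (mul_pos hm hrpos) hqv hlow2 hsgn2
        calc ‖∫ y in q..v, ψ y‖
            ≤ (7 * 2 ^ (k + 1) - 2) * (lam * (m * r)) ^ (-(1 / ((k : ℝ) + 1))) := hIH
          _ = (7 * 2 ^ (k + 1) - 2) * r := by rw [hCbr]
    have hleft : ‖∫ y in u..p, ψ y‖ ≤ (7 * 2 ^ (k + 1) - 2) * r := by
      rcases eq_or_lt_of_le hup with heq | hlt
      · rw [← heq, intervalIntegral.integral_same, norm_zero]
        positivity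
      · have hpy : p = y0 - r := by
          rcases le_total (y0 - r) u with h | h
          · exfalso
            have : p = u := max_eq_right h
            linarith
          · exact max_eq_left h
        have hy0T : y0 ∈ T := by
          rcases Set.mem_insert_iff.1 hy0S with h | h
          · exfalso
            rw [hpy, h] at hlt
            linarith
          · exact h
        have hgy0 : g y0 ≤ 0 := hy0T.2
        have hlow2 : ∀ y ∈ Set.Icc u p, m * r ≤ (Polynomial.derivative^[k+1] (-Q)).eval y := by
          intro y hy
          simp only [Polynomial.iterate_derivative_neg, Polynomial.eval_neg]
          have hyIcc : y ∈ Set.Icc u v := ⟨hy.1, le_trans hy.2 (le_trans hpy0 hy0Icc.2)⟩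
          have h3 := keydiff y0 hy0Icc y hyIcc (le_trans hy.2 hpy0)
          have h4 : m * r ≤ m * (y0 - y) := by
            apply mul_le_mul_of_nonneg_left _ hm.le
            have := hy.2
            rw [hpy] at this
            linarith
          have h5 : (Polynomial.derivative^[k+1] Q).eval y = g y := rfl
          rw [h5]
          linarith
        have hsgn2 : (k = 0) → SgnOn (fun y => (Polynomial.derivative^[2] (-Q)).eval y)
            (Set.Icc u p) := by
          intro hk0
          subst hk0
          right
          intro y hy
          simp only [Polynomial.iterate_derivative_neg, Polynomial.eval_neg]
          have hyIcc : y ∈ Set.Icc u v := ⟨hy.1, le_trans hy.2 (le_trans hpy0 hy0Icc.2)⟩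
          have := hlow y hyIcc
          linarith
        have hIH := ih (-Q) lam (m * r) u p hlam (mul_pos hm hrpos) hup hlow2 hsgn2
        rw [norm_int_exp_neg Q lam u p] at hIH
        calc ‖∫ y in u..p, ψ y‖
            ≤ (7 * 2 ^ (k + 1) - 2) * (lam * (m * r)) ^ (-(1 / ((k : ℝ) + 1))) := hIH
          _ = (7 * 2 ^ (k + 1) - 2) * r := by rw [hCbr]
    have hexp : (lam * m) ^ (-(1 / ((k + 1 : ℕ) + 1 : ℝ))) = r := by
      rw [hr]
      congr 1
      push_cast
      ring
    calc ‖∫ y in u..v, ψ y‖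
        ≤ (7 * 2 ^ (k + 1) - 2) * r + 2 * r + (7 * 2 ^ (k + 1) - 2) * r := by
          have := hnorm
          linarith
      _ = (7 * 2 ^ (k + 1 + 1) - 2) * r := by ring
      _ = (7 * 2 ^ (k + 1 + 1) - 2) * (lam * m) ^ (-(1 / ((k + 1 : ℕ) + 1 : ℝ))) := by
          rw [hexp]


lemma vdc_P {P : Polynomial ℝ} {d : ℕ} (hd : 2 ≤ d) (hdeg : P.natDegree = d)
    (hmon : P.derivative.Monic) {lam : ℝ} (hlam : 0 < lam) (p q : ℝ) :
    ‖∫ y in p..q, Complex.exp (Complex.I * lam * ((P.eval y : ℝ) : ℂ))‖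
      ≤ 7 * 2 ^ d * lam ^ (-(1 / (d : ℝ))) := by
  have main : ∀ p q : ℝ, p ≤ q →
      ‖∫ y in p..q, Complex.exp (Complex.I * lam * ((P.eval y : ℝ) : ℂ))‖
        ≤ 7 * 2 ^ d * lam ^ (-(1 / (d : ℝ))) := by
    intro p q hpq
    set m : ℝ := (((d - 1).factorial : ℕ) : ℝ) with hm
    have hm1 : (1 : ℝ) ≤ m := by
      rw [hm]
      exact_mod_cast Nat.one_le_iff_ne_zero.2 (Nat.factorial_ne_zero _)
    have hmpos : 0 < m := lt_of_lt_of_le one_pos hm1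
    have hlow : ∀ y ∈ Set.Icc p q, m ≤ (Polynomial.derivative^[(d-2)+1+1] P).eval y := by
      intro y _
      have h1 : (d - 2) + 1 + 1 = d := by omega
      rw [h1, eval_iterate_derivative_monic hd hdeg hmon]
    have hsgn : ((d : ℕ) - 2 + 1 = 0) →
        SgnOn (fun y => (Polynomial.derivative^[2] P).eval y) (Set.Icc p q) := by
      intro h; omega
    have hkey := vdc (d - 2 + 1) P lam m p q hlam hmpos hpq hlow hsgn
    have hexp : ((d - 2 + 1 : ℕ) : ℝ) + 1 = (d : ℝ) := by
      have : ((d - 2 + 1 + 1 : ℕ) : ℝ) = (d : ℝ) := by exact_mod_cast congrArg Nat.cast (by omega : d - 2 + 1 + 1 = d)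
      push_cast at this ⊢
      linarith
    rw [hexp] at hkey
    have hpow : (d - 2 + 1) + 1 = d := by omega
    rw [hpow] at hkey
    refine hkey.trans ?_
    have h2p : (0:ℝ) < 2 ^ d := by positivity
    have hdpos : (0:ℝ) < (d:ℝ) := by exact_mod_cast (by omega : 0 < d)
    have hexp0 : -(1 / (d:ℝ)) ≤ 0 := neg_nonpos.2 (by positivity)
    have hb1 : (lam * m) ^ (-(1 / (d : ℝ))) ≤ lam ^ (-(1 / (d : ℝ))) :=
      Real.rpow_le_rpow_of_nonpos hlam (by nlinarith) hexp0
    have hb0 : (0:ℝ) ≤ (lam * m) ^ (-(1 / (d:ℝ))) :=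
      (Real.rpow_pos_of_pos (by positivity) _).le
    calc (7 * 2 ^ d - 2) * (lam * m) ^ (-(1 / (d : ℝ)))
        ≤ (7 * 2 ^ d) * (lam * m) ^ (-(1 / (d : ℝ))) := by nlinarith
      _ ≤ 7 * 2 ^ d * lam ^ (-(1 / (d : ℝ))) :=
          mul_le_mul_of_nonneg_left hb1 (by positivity)
  rcases le_total p q with h | h
  · exact main p q h
  · rw [intervalIntegral.integral_symm, norm_neg]
    exact main q p h


lemma chain_le {t : ℕ → ℝ} {k : ℕ} (hstep : ∀ i < k, t i ≤ t (i+1)) :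
    ∀ i j, i ≤ j → j ≤ k → t i ≤ t j := by
  intro i j hij hjk
  induction j with
  | zero =>
    have h0 : i = 0 := by omega
    rw [h0]
  | succ j ihj =>
    rcases Nat.lt_or_ge i (j+1) with h | h
    · exact (ihj (by omega) (by omega)).trans (hstep j (by omega))
    · have h1 : i = j + 1 := by omega
      rw [h1]

lemma prefine {Pc Pn : ℝ → ℝ → Prop} {a b : ℝ} {K : ℕ}
    (hsplit : ∀ α β, a ≤ α → α ≤ β → β ≤ b → Pc α β →
      ∃ w, α ≤ w ∧ w ≤ β ∧ Pn α w ∧ Pn w β)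
    (h : ∃ k, k ≤ K ∧ ∃ t : ℕ → ℝ, t 0 = a ∧ t k = b ∧ (∀ i < k, t i ≤ t (i+1)) ∧
      ∀ i < k, Pc (t i) (t (i+1))) :
    ∃ k, k ≤ 2*K ∧ ∃ t : ℕ → ℝ, t 0 = a ∧ t k = b ∧ (∀ i < k, t i ≤ t (i+1)) ∧
      ∀ i < k, Pn (t i) (t (i+1)) := by
  obtain ⟨k, hk, t, ht0, htk, hstep, hPc⟩ := h
  have hmem : ∀ i ≤ k, a ≤ t i ∧ t i ≤ b := by
    intro i hi
    constructor
    · rw [← ht0]; exact chain_le hstep 0 i (by omega) hi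
    · rw [← htk]; exact chain_le hstep i k hi (le_refl k)
  have hex : ∀ i : ℕ, ∃ w : ℝ,
      i < k → (t i ≤ w ∧ w ≤ t (i+1) ∧ Pn (t i) w ∧ Pn w (t (i+1))) := by
    intro i
    by_cases hi : i < k
    · obtain ⟨w, hw⟩ := hsplit (t i) (t (i+1)) (hmem i (by omega)).1 (hstep i hi)
        (hmem (i+1) (by omega)).2 (hPc i hi)
      exact ⟨w, fun _ => hw⟩
    · exact ⟨0, fun h => absurd h hi⟩
  choose w hw using hex
  set t' : ℕ → ℝ := fun n => if n % 2 = 0 then t (n/2) else w (n/2) with ht'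
  have ht'even : ∀ n, t' (2*n) = t n := by
    intro n
    have h1 : (2*n) % 2 = 0 := by omega
    have h2 : (2*n)/2 = n := by omega
    simp [ht', h1, h2]
  have ht'odd : ∀ n, t' (2*n+1) = w n := by
    intro n
    have h1 : (2*n+1) % 2 = 1 := by omega
    have h2 : (2*n+1)/2 = n := by omega
    simp [ht', h1, h2]
  refine ⟨2*k, by omega, t', ?_, ?_, ?_, ?_⟩
  · have := ht'even 0
    simpa [ht0] using this
  · rw [ht'even k, htk]
  · intro i hi
    rcases Nat.even_or_odd i with ⟨q, hq⟩ | ⟨q, hq⟩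
    · have hqk : q < k := by omega
      rw [show i = 2*q by omega, show 2*q+1 = 2*q+1 from rfl, ht'even, ht'odd]
      exact (hw q hqk).1
    · have hqk : q < k := by omega
      rw [show i = 2*q+1 by omega, show 2*q+1+1 = 2*(q+1) by omega, ht'odd, ht'even]
      exact ((hw q hqk).2.1).trans (le_of_eq rfl)
  · intro i hi
    rcases Nat.even_or_odd i with ⟨q, hq⟩ | ⟨q, hq⟩
    · have hqk : q < k := by omega
      rw [show i = 2*q by omega, ht'even, show 2*q+1 = 2*q+1 from rfl, ht'odd]
      exact (hw q hqk).2.2.1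
    · have hqk : q < k := by omega
      rw [show i = 2*q+1 by omega, ht'odd, show 2*q+1+1 = 2*(q+1) by omega, ht'even]
      exact (hw q hqk).2.2.2

lemma sgn_of_neg {g : ℝ → ℝ} {s : Set ℝ} (h : SgnOn (fun x => -g x) s) : SgnOn g s := by
  rcases h with h | h
  · exact Or.inr fun x hx => by have := h x hx; simp only at this; linarith
  · exact Or.inl fun x hx => by have := h x hx; simp only at this; linarith

lemma mono_split_aux {g : ℝ → ℝ} {α β : ℝ} (hαβ : α ≤ β)
    (hg : ContinuousOn g (Set.Icc α β)) (hm : MonotoneOn g (Set.Icc α β)) :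
    ∃ w, α ≤ w ∧ w ≤ β ∧ SgnOn g (Set.Icc α w) ∧ SgnOn g (Set.Icc w β) := by
  by_cases hT : ∃ x ∈ Set.Icc α β, g x ≤ 0
  case neg =>
    push_neg at hT
    refine ⟨α, le_refl α, hαβ, Or.inl fun x hx => ?_, Or.inl fun x hx => (hT x hx).le⟩
    have hxa : x = α := le_antisymm hx.2 hx.1
    rw [hxa]
    exact (hT α ⟨le_refl α, hαβ⟩).le
  case pos =>
    set T : Set ℝ := {x ∈ Set.Icc α β | g x ≤ 0} with hTdef
    have hTsub : T ⊆ Set.Icc α β := fun x hx => hx.1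
    have hTcl : IsClosed T := by
      have : T = Set.Icc α β ∩ g ⁻¹' Set.Iic 0 := by
        ext x; simp [hTdef, Set.mem_setOf_eq]
      rw [this]
      exact hg.preimage_isClosed_of_isClosed isClosed_Icc isClosed_Iic
    have hTne : T.Nonempty := by
      obtain ⟨x, hx, hgx⟩ := hT
      exact ⟨x, hx, hgx⟩
    have hTcp : IsCompact T := isCompact_Icc.of_isClosed_subset hTcl hTsub
    have hTbdd : BddAbove T := BddAbove.mono hTsub bddAbove_Icc
    set w : ℝ := sSup T with hw
    have hwT : w ∈ T := hTcp.sSup_mem hTne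
    have hwIcc : w ∈ Set.Icc α β := hTsub hwT
    refine ⟨w, hwIcc.1, hwIcc.2, Or.inr fun x hx => ?_, ?_⟩
    · have hxIcc : x ∈ Set.Icc α β := ⟨hx.1, le_trans hx.2 hwIcc.2⟩
      exact le_trans (hm hxIcc hwIcc hx.2) hwT.2
    · rcases eq_or_lt_of_le hwIcc.2 with heq | hlt
      · refine Or.inr fun x hx => ?_
        have hxw : x = w := le_antisymm (heq ▸ hx.2) hx.1
        rw [hxw]
        exact hwT.2
      · refine Or.inl (le_on_Icc_of_Ioo hlt (hg.mono (Set.Icc_subset_Icc hwIcc.1 (le_refl β)))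
          fun x hx => ?_)
        by_contra hgx
        push_neg at hgx
        have hxT : x ∈ T := ⟨⟨le_trans hwIcc.1 hx.1.le, hx.2.le⟩, hgx.le⟩
        have := le_csSup hTbdd hxT
        have := hx.1
        linarith

lemma mono_split {g : ℝ → ℝ} {α β : ℝ} (hαβ : α ≤ β)
    (hg : ContinuousOn g (Set.Icc α β))
    (hm : MonotoneOn g (Set.Icc α β) ∨ AntitoneOn g (Set.Icc α β)) :
    ∃ w, α ≤ w ∧ w ≤ β ∧ SgnOn g (Set.Icc α w) ∧ SgnOn g (Set.Icc w β) := by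
  rcases hm with hm | hm
  · exact mono_split_aux hαβ hg hm
  · have hm' : MonotoneOn (fun x => -g x) (Set.Icc α β) :=
      fun x hx y hy hxy => neg_le_neg (hm hx hy hxy)
    obtain ⟨w, h1, h2, h3, h4⟩ := mono_split_aux hαβ hg.neg hm'
    exact ⟨w, h1, h2, sgn_of_neg h3, sgn_of_neg h4⟩


lemma hasDeriv_interior {a b : ℝ} {f : ℝ → ℝ} (hf : ContDiffOn ℝ (⊤ : ℕ∞) f (Set.Icc a b)) {x : ℝ}
    (hx : x ∈ Set.Ioo a b) : HasDerivAt f (derivWithin f (Set.Icc a b) x) x := by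
  have hnb : Set.Icc a b ∈ nhds x := Icc_mem_nhds hx.1 hx.2
  have hdiff : DifferentiableWithinAt ℝ f (Set.Icc a b) x :=
    (hf.differentiableOn (by simp)) x (Set.Ioo_subset_Icc_self hx)
  have hda : DifferentiableAt ℝ f x := hdiff.differentiableAt hnb
  rw [derivWithin_of_mem_nhds hnb]
  exact hda.hasDerivAt

lemma mono_or_anti {a b : ℝ} {g g' : ℝ → ℝ}
    (hgc : ContinuousOn g (Set.Icc a b))
    (hgd : ∀ x ∈ Set.Ioo a b, HasDerivAt g (g' x) x)
    {α β : ℝ} (hs : Set.Icc α β ⊆ Set.Icc a b) (hαβ : α ≤ β)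
    (hsgn : SgnOn g' (Set.Icc α β)) :
    MonotoneOn g (Set.Icc α β) ∨ AntitoneOn g (Set.Icc α β) := by
  have hαm : α ∈ Set.Icc a b := hs ⟨le_refl α, hαβ⟩
  have hβm : β ∈ Set.Icc a b := hs ⟨hαβ, le_refl β⟩
  have hIoo : Set.Ioo α β ⊆ Set.Ioo a b := fun x hx =>
    ⟨lt_of_le_of_lt hαm.1 hx.1, lt_of_lt_of_le hx.2 hβm.2⟩
  rcases hsgn with hp | hn
  · left
    apply monotoneOn_of_deriv_nonneg (convex_Icc α β) (hgc.mono hs)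
    · intro x hx
      rw [interior_Icc] at hx
      exact ((hgd x (hIoo hx)).differentiableAt).differentiableWithinAt
    · intro x hx
      rw [interior_Icc] at hx
      rw [(hgd x (hIoo hx)).deriv]
      exact hp x (Set.Ioo_subset_Icc_self hx)
  · right
    apply antitoneOn_of_deriv_nonpos (convex_Icc α β) (hgc.mono hs)
    · intro x hx
      rw [interior_Icc] at hx
      exact ((hgd x (hIoo hx)).differentiableAt).differentiableWithinAt
    · intro x hx
      rw [interior_Icc] at hx
      rw [(hgd x (hIoo hx)).deriv]
      exact hn x (Set.Ioo_subset_Icc_self hx)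

lemma iter_hasDeriv {a b : ℝ} (hab : a < b) {f : ℝ → ℝ}
    (hf : ContDiffOn ℝ (⊤ : ℕ∞) f (Set.Icc a b)) (j : ℕ) :
    ∀ x ∈ Set.Ioo a b, HasDerivAt (iteratedDerivWithin j f (Set.Icc a b))
      (iteratedDerivWithin (j+1) f (Set.Icc a b) x) x := by
  intro x hx
  have hnb : Set.Icc a b ∈ nhds x := Icc_mem_nhds hx.1 hx.2
  have hdiff : DifferentiableOn ℝ (iteratedDerivWithin j f (Set.Icc a b)) (Set.Icc a b) :=
    hf.differentiableOn_iteratedDerivWithin (by exact WithTop.coe_lt_coe.2 (ENat.coe_lt_top j))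
      (uniqueDiffOn_Icc hab)
  have hda : DifferentiableAt ℝ (iteratedDerivWithin j f (Set.Icc a b)) x :=
    (hdiff x (Set.Ioo_subset_Icc_self hx)).differentiableAt hnb
  have heq : iteratedDerivWithin (j+1) f (Set.Icc a b) x
      = derivWithin (iteratedDerivWithin j f (Set.Icc a b)) (Set.Icc a b) x := by
    rw [iteratedDerivWithin_succ]
  rw [heq, derivWithin_of_mem_nhds hnb]
  exact hda.hasDerivAt

lemma iter_cont {a b : ℝ} (hab : a < b) {f : ℝ → ℝ}
    (hf : ContDiffOn ℝ (⊤ : ℕ∞) f (Set.Icc a b)) (j : ℕ) :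
    ContinuousOn (iteratedDerivWithin j f (Set.Icc a b)) (Set.Icc a b) :=
  hf.continuousOn_iteratedDerivWithin (by exact_mod_cast le_top) (uniqueDiffOn_Icc hab)

lemma descend {a b : ℝ} (hab : a < b) {f : ℝ → ℝ} (hf : ContDiffOn ℝ (⊤ : ℕ∞) f (Set.Icc a b))
    {N : ℕ} (hN : 2 ≤ N) {M k : ℕ} {t : ℕ → ℝ} (hk : k ≤ M + 1)
    (ht0 : t 0 = a) (htk : t k = b) (hstep : ∀ i < k, t i ≤ t (i+1))
    (hsgn : ∀ i < k, SgnOn (iteratedDerivWithin N f (Set.Icc a b)) (Set.Icc (t i) (t (i+1)))) :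
    ∃ k', k' ≤ (M+1) * 2^(N-1) ∧ ∃ s : ℕ → ℝ, s 0 = a ∧ s k' = b ∧
      (∀ i < k', s i ≤ s (i+1)) ∧
      ∀ i < k', SgnOn (iteratedDerivWithin 1 f (Set.Icc a b)) (Set.Icc (s i) (s (i+1))) ∧
        SgnOn (iteratedDerivWithin 2 f (Set.Icc a b)) (Set.Icc (s i) (s (i+1))) := by
  have hstep2 : ∀ j : ℕ, ∀ α β : ℝ, a ≤ α → α ≤ β → β ≤ b →
      SgnOn (iteratedDerivWithin (j+2) f (Set.Icc a b)) (Set.Icc α β) →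
      ∃ w, α ≤ w ∧ w ≤ β ∧
        SgnOn (iteratedDerivWithin (j+1) f (Set.Icc a b)) (Set.Icc α w) ∧
        SgnOn (iteratedDerivWithin (j+1) f (Set.Icc a b)) (Set.Icc w β) := by
    intro j α β haα hαβ hβb hsg
    have hsub : Set.Icc α β ⊆ Set.Icc a b := Set.Icc_subset_Icc haα hβb
    have hmono := mono_or_anti (iter_cont hab hf (j+1)) (iter_hasDeriv hab hf (j+1))
      hsub hαβ hsg
    exact mono_split hαβ ((iter_cont hab hf (j+1)).mono hsub) hmono
  have hdesc : ∀ i : ℕ, i ≤ N - 2 → ∃ k', k' ≤ (M+1) * 2^i ∧ ∃ s : ℕ → ℝ,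
      s 0 = a ∧ s k' = b ∧ (∀ l < k', s l ≤ s (l+1)) ∧
      ∀ l < k', SgnOn (iteratedDerivWithin (N - i) f (Set.Icc a b))
        (Set.Icc (s l) (s (l+1))) := by
    intro i
    induction i with
    | zero =>
      intro _
      refine ⟨k, by simpa using hk, t, ht0, htk, hstep, ?_⟩
      simpa using hsgn
    | succ i ihi =>
      intro hi
      have hNi : N - i = (N - i - 2) + 2 := by omega
      have hpre := prefine
        (Pc := fun α β => SgnOn (iteratedDerivWithin (N - i) f (Set.Icc a b)) (Set.Icc α β))
        (Pn := fun α β =>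
          SgnOn (iteratedDerivWithin (N - i - 2 + 1) f (Set.Icc a b)) (Set.Icc α β))
        (fun α β h1 h2 h3 h4 => by
          refine hstep2 (N - i - 2) α β h1 h2 h3 ?_
          rw [← hNi]
          exact h4)
        (ihi (by omega))
      obtain ⟨k'', hk'', s', r1, r2, r3, r4⟩ := hpre
      refine ⟨k'', ?_, s', r1, r2, r3, ?_⟩
      · calc k'' ≤ 2 * ((M+1) * 2^i) := hk''
          _ = (M+1) * 2^(i+1) := by ring
      · intro l hl
        have hr := r4 l hl
        have heq : N - i - 2 + 1 = N - (i+1) := by omega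
        rw [heq] at hr
        exact hr
  obtain ⟨k1, hk1, s1, hs10, hs1k, hstep1, hsgn1⟩ := hdesc (N-2) (le_refl _)
  have hN2 : N - (N - 2) = 2 := by omega
  rw [hN2] at hsgn1
  have hpre2 := prefine
    (Pc := fun α β => SgnOn (iteratedDerivWithin 2 f (Set.Icc a b)) (Set.Icc α β))
    (Pn := fun α β => SgnOn (iteratedDerivWithin 1 f (Set.Icc a b)) (Set.Icc α β) ∧
      SgnOn (iteratedDerivWithin 2 f (Set.Icc a b)) (Set.Icc α β))
    (fun α β h1 h2 h3 h4 => by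
      have hsub : Set.Icc α β ⊆ Set.Icc a b := Set.Icc_subset_Icc h1 h3
      have h4' : SgnOn (iteratedDerivWithin (1+1) f (Set.Icc a b)) (Set.Icc α β) := h4
      have hmono := mono_or_anti (iter_cont hab hf 1) (iter_hasDeriv hab hf 1) hsub h2 h4'
      obtain ⟨w, hw1, hw2, hw3, hw4⟩ :=
        mono_split h2 ((iter_cont hab hf 1).mono hsub) hmono
      exact ⟨w, hw1, hw2, ⟨hw3, h4.mono (Set.Icc_subset_Icc (le_refl α) hw2)⟩,
        ⟨hw4, h4.mono (Set.Icc_subset_Icc hw1 (le_refl β))⟩⟩)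
    ⟨k1, hk1, s1, hs10, hs1k, hstep1, hsgn1⟩
  obtain ⟨k2, hk2, s2, a1, a2, a3, a4⟩ := hpre2
  refine ⟨k2, ?_, s2, a1, a2, a3, a4⟩
  calc k2 ≤ 2 * ((M+1) * 2^(N-2)) := hk2
    _ = (M+1) * 2^(N-1) := by
        have h1 : N - 1 = (N-2) + 1 := by omega
        rw [h1, pow_succ]
        ring


lemma icc_int_eq {g : ℝ → ℂ} {w₁ w₂ : ℝ} (h : w₁ ≤ w₂) :
    ∫ x in Set.Icc w₁ w₂, g x = ∫ x in w₁..w₂, g x := by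
  rw [integral_Icc_eq_integral_Ioc, ← intervalIntegral.integral_of_le h]

lemma small_piece {a b : ℝ} (hab : a < b) {f : ℝ → ℝ} (hf : ContDiffOn ℝ (⊤ : ℕ∞) f (Set.Icc a b))
    {A δ : ℝ} (hA : 1 ≤ A) (hδ0 : 0 < δ) (hδ1 : δ < 1)
    (hosc : ∀ (lam : ℝ), lam ≠ 0 → ∀ (c e : ℝ), a ≤ c → c ≤ e → e ≤ b →
      ‖∫ x in Set.Icc c e, Complex.exp (Complex.I * (lam : ℂ) * (f x : ℂ))‖ ≤
        A * |lam| ^ (-δ))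
    {h w₁ w₂ : ℝ} (hh : 0 < h) (hw : w₁ ≤ w₂) (hw1 : a ≤ w₁) (hw2 : w₂ ≤ b)
    (hd1 : ∀ x ∈ Set.Icc w₁ w₂, |derivWithin f (Set.Icc a b) x| ≤ h) :
    w₂ - w₁ ≤ (2*A) ^ ((1:ℝ)/(1-δ)) * h ^ (δ/(1-δ)) := by
  set L : ℝ := w₂ - w₁ with hL
  have hA0 : 0 < A := lt_of_lt_of_le one_pos hA
  have h1δ : 0 < 1 - δ := by linarith
  rcases eq_or_lt_of_le hw with heq | hww
  · have hL0 : L = 0 := by rw [hL, ← heq, sub_self]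
    rw [hL0]
    positivity
  have hLpos : 0 < L := by simp only [hL]; linarith
  -- MVT bound
  have hsub : Set.Icc w₁ w₂ ⊆ Set.Icc a b := Set.Icc_subset_Icc hw1 hw2
  have hdiff : DifferentiableOn ℝ f (Set.Icc w₁ w₂) := (hf.differentiableOn (by simp)).mono hsub
  have hbound : ∀ x ∈ Set.Icc w₁ w₂, ‖derivWithin f (Set.Icc w₁ w₂) x‖ ≤ h := by
    intro x hx
    have heqd : derivWithin f (Set.Icc w₁ w₂) x = derivWithin f (Set.Icc a b) x :=
      derivWithin_subset hsub ((uniqueDiffOn_Icc hww) x hx)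
        ((hf.differentiableOn (by simp)) x (hsub hx))
    rw [Real.norm_eq_abs, heqd]
    exact hd1 x hx
  have hw1m : w₁ ∈ Set.Icc w₁ w₂ := ⟨le_refl w₁, hw⟩
  have hMVT : ∀ x ∈ Set.Icc w₁ w₂, |f x - f w₁| ≤ h * L := by
    intro x hx
    have := Convex.norm_image_sub_le_of_norm_derivWithin_le hdiff hbound
      (convex_Icc w₁ w₂) hw1m hx
    rw [Real.norm_eq_abs, Real.norm_eq_abs] at this
    refine this.trans ?_
    have hxL : |x - w₁| ≤ L := by
      rw [abs_of_nonneg (by linarith [hx.1])]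
      simp only [hL]
      linarith [hx.2]
    exact mul_le_mul_of_nonneg_left hxL hh.le
  set ε : ℝ := h * L with hε
  have hεpos : 0 < ε := mul_pos hh hLpos
  set lam0 : ℝ := ε⁻¹ with hlam0
  have hlam0pos : 0 < lam0 := inv_pos.2 hεpos
  have hosc0 := hosc lam0 hlam0pos.ne' w₁ w₂ hw1 hw hw2
  have hRHS : A * |lam0| ^ (-δ) = A * ε ^ δ := by
    rw [abs_of_pos hlam0pos, hlam0, Real.rpow_neg (inv_nonneg.2 hεpos.le),
      Real.inv_rpow hεpos.le, inv_inv]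
  rw [hRHS] at hosc0
  -- lower bound
  have hfc : ContinuousOn f (Set.Icc w₁ w₂) := hf.continuousOn.mono hsub
  have hintc : ContinuousOn (fun x => Complex.exp (Complex.I * (lam0 : ℂ) *
      (((f x - f w₁ : ℝ)) : ℂ))) (Set.Icc w₁ w₂) := by
    apply Complex.continuous_exp.comp_continuousOn
    exact continuousOn_const.mul
      (Complex.continuous_ofReal.comp_continuousOn (hfc.sub continuousOn_const))
  have hint : IntegrableOn (fun x => Complex.exp (Complex.I * (lam0 : ℂ) *
      (((f x - f w₁ : ℝ)) : ℂ))) (Set.Icc w₁ w₂) volume := hintc.integrableOn_compact isCompact_Icc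
  have hIeq : ∫ x in Set.Icc w₁ w₂, Complex.exp (Complex.I * (lam0 : ℂ) * ((f x : ℝ) : ℂ))
      = Complex.exp (Complex.I * (lam0 : ℂ) * ((f w₁ : ℝ) : ℂ))
        * ∫ x in Set.Icc w₁ w₂, Complex.exp (Complex.I * (lam0 : ℂ) *
            (((f x - f w₁ : ℝ)) : ℂ)) := by
    rw [← integral_const_mul]
    apply setIntegral_congr_fun measurableSet_Icc
    intro x _
    simp only [← Complex.exp_add]
    congr 1
    push_cast
    ring
  have hnorm_eq : ‖∫ x in Set.Icc w₁ w₂, Complex.exp (Complex.I * (lam0 : ℂ) * ((f x : ℝ) : ℂ))‖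
      = ‖∫ x in Set.Icc w₁ w₂, Complex.exp (Complex.I * (lam0 : ℂ) *
          (((f x - f w₁ : ℝ)) : ℂ))‖ := by
    rw [hIeq, norm_mul, norm_exp_I_mul, one_mul]
  -- real part
  have hre : (∫ x in Set.Icc w₁ w₂, Complex.exp (Complex.I * (lam0 : ℂ) *
      (((f x - f w₁ : ℝ)) : ℂ))).re
      = ∫ x in Set.Icc w₁ w₂, Real.cos (lam0 * (f x - f w₁)) := by
    have h0 := integral_re hint
    simp only [RCLike.re_to_complex] at h0
    rw [← h0]
    apply setIntegral_congr_fun measurableSet_Icc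
    intro x _
    show (Complex.exp (Complex.I * (lam0 : ℂ) * (((f x - f w₁ : ℝ)) : ℂ))).re
        = Real.cos (lam0 * (f x - f w₁))
    have harg : Complex.I * (lam0 : ℂ) * (((f x - f w₁ : ℝ)) : ℂ)
        = ((lam0 * (f x - f w₁) : ℝ) : ℂ) * Complex.I := by
      push_cast
      ring
    rw [harg]
    exact Complex.exp_ofReal_mul_I_re _
  have hcos : ∀ x ∈ Set.Icc w₁ w₂, (1/2 : ℝ) ≤ Real.cos (lam0 * (f x - f w₁)) := by
    intro x hx
    have h1 : |lam0 * (f x - f w₁)| ≤ 1 := by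
      rw [abs_mul, abs_of_pos hlam0pos]
      calc lam0 * |f x - f w₁| ≤ lam0 * ε :=
            mul_le_mul_of_nonneg_left (hMVT x hx) hlam0pos.le
        _ = 1 := by rw [hlam0]; field_simp
    have h2 := Real.one_sub_sq_div_two_le_cos (x := lam0 * (f x - f w₁))
    have h3 := sq_abs (lam0 * (f x - f w₁))
    have h4 : |lam0 * (f x - f w₁)| ^ 2 ≤ 1 := pow_le_one₀ (abs_nonneg _) h1
    linarith
  have hcosint : IntegrableOn (fun x => Real.cos (lam0 * (f x - f w₁)))
      (Set.Icc w₁ w₂) volume := by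
    apply ContinuousOn.integrableOn_compact isCompact_Icc
    exact Real.continuous_cos.comp_continuousOn
      (continuousOn_const.mul (hfc.sub continuousOn_const))
  have hlow2 : L / 2 ≤ ∫ x in Set.Icc w₁ w₂, Real.cos (lam0 * (f x - f w₁)) := by
    have hconst : ∫ _x in Set.Icc w₁ w₂, (1/2 : ℝ) = L / 2 := by
      rw [setIntegral_const]
      rw [Real.volume_real_Icc_of_le hw]
      simp only [smul_eq_mul, hL]
      ring
    rw [← hconst]
    exact setIntegral_mono_on (integrableOn_const (by rw [Real.volume_Icc]; exact ENNReal.ofReal_ne_top)) hcosint measurableSet_Icc hcos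
  have hchain : L / 2 ≤ A * ε ^ δ := by
    calc L / 2 ≤ ∫ x in Set.Icc w₁ w₂, Real.cos (lam0 * (f x - f w₁)) := hlow2
      _ = (∫ x in Set.Icc w₁ w₂, Complex.exp (Complex.I * (lam0 : ℂ) *
            (((f x - f w₁ : ℝ)) : ℂ))).re := hre.symm
      _ ≤ ‖∫ x in Set.Icc w₁ w₂, Complex.exp (Complex.I * (lam0 : ℂ) *
            (((f x - f w₁ : ℝ)) : ℂ))‖ := Complex.re_le_norm _
      _ = ‖∫ x in Set.Icc w₁ w₂, Complex.exp (Complex.I * (lam0 : ℂ) * ((f x : ℝ) : ℂ))‖ :=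
            hnorm_eq.symm
      _ ≤ A * ε ^ δ := hosc0
  -- algebra
  have hεδ : ε ^ δ = h ^ δ * L ^ δ := Real.mul_rpow hh.le hLpos.le
  have hkey : L ≤ 2 * A * h ^ δ * L ^ δ := by
    rw [hεδ] at hchain
    linarith
  have hLd : 0 < L ^ (δ : ℝ) := Real.rpow_pos_of_pos hLpos δ
  have hsplit : L ^ (δ:ℝ) * L ^ (1-δ) = L := by
    rw [← Real.rpow_add hLpos]
    norm_num
  have hstep : L ^ (1-δ) ≤ 2 * A * h ^ δ := by
    have h2 : L ^ (δ:ℝ) * L ^ (1-δ) ≤ L ^ (δ:ℝ) * (2 * A * h ^ δ) := by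
      rw [hsplit]
      calc L ≤ 2 * A * h ^ δ * L ^ δ := hkey
        _ = L ^ (δ:ℝ) * (2 * A * h ^ δ) := by ring
    exact le_of_mul_le_mul_left h2 hLd
  have hLeq : L = (L ^ ((1:ℝ)-δ)) ^ ((1:ℝ)/(1-δ)) := by
    rw [← Real.rpow_mul hLpos.le]
    rw [mul_one_div, div_self h1δ.ne', Real.rpow_one]
  rw [hLeq]
  calc (L ^ ((1:ℝ)-δ)) ^ ((1:ℝ)/(1-δ)) ≤ (2 * A * h ^ δ) ^ ((1:ℝ)/(1-δ)) := by
        apply Real.rpow_le_rpow (Real.rpow_pos_of_pos hLpos _).le hstep (by positivity)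
    _ = (2*A) ^ ((1:ℝ)/(1-δ)) * h ^ (δ/(1-δ)) := by
        rw [Real.mul_rpow (by positivity) (Real.rpow_pos_of_pos hh _).le,
          ← Real.rpow_mul hh.le]
        congr 2
        field_simp


lemma big_piece {a b : ℝ} (hab : a < b) {f : ℝ → ℝ} (hf : ContDiffOn ℝ (⊤ : ℕ∞) f (Set.Icc a b))
    {P : Polynomial ℝ} {d : ℕ} (hd : 2 ≤ d) (hdeg : P.natDegree = d) (hmon : P.derivative.Monic)
    {lam : ℝ} (hlam : 0 < lam)
    {h s t : ℝ} (hh : 0 < h) (hst : s ≤ t) (has : a ≤ s) (htb : t ≤ b)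
    (hlow : (∀ x ∈ Set.Ioo s t, h ≤ derivWithin f (Set.Icc a b) x) ∨
            (∀ x ∈ Set.Ioo s t, derivWithin f (Set.Icc a b) x ≤ -h))
    (hsgn : SgnOn (derivWithin (derivWithin f (Set.Icc a b)) (Set.Icc a b)) (Set.Icc s t)) :
    ‖∫ x in s..t, Complex.exp (Complex.I * lam * ((P.eval (f x) : ℝ) : ℂ))‖
      ≤ 4 * h⁻¹ * (7 * 2^d * lam ^ (-(1/(d:ℝ)))) := by
  rcases eq_or_lt_of_le hst with heq | hstlt
  · rw [← heq, intervalIntegral.integral_same, norm_zero]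
    positivity
  set d1 : ℝ → ℝ := derivWithin f (Set.Icc a b) with hd1def
  set d2 : ℝ → ℝ := derivWithin d1 (Set.Icc a b) with hd2def
  have hd1sm : ContDiffOn ℝ (⊤ : ℕ∞) d1 (Set.Icc a b) :=
    hf.derivWithin (uniqueDiffOn_Icc hab) (by simp)
  have hd1c : ContinuousOn d1 (Set.Icc a b) := hd1sm.continuousOn
  have hd2sm : ContDiffOn ℝ (⊤ : ℕ∞) d2 (Set.Icc a b) :=
    hd1sm.derivWithin (uniqueDiffOn_Icc hab) (by simp)
  have hd2c : ContinuousOn d2 (Set.Icc a b) := hd2sm.continuousOn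
  have hsub : Set.Icc s t ⊆ Set.Icc a b := Set.Icc_subset_Icc has htb
  have hIoo : Set.Ioo s t ⊆ Set.Ioo a b := fun x hx =>
    ⟨lt_of_le_of_lt has hx.1, lt_of_lt_of_le hx.2 htb⟩
  -- extend lower bound to the closed interval
  have hlowIcc : (∀ x ∈ Set.Icc s t, h ≤ d1 x) ∨ (∀ x ∈ Set.Icc s t, d1 x ≤ -h) := by
    rcases hlow with hl | hl
    · exact Or.inl (le_on_Icc_of_Ioo hstlt (hd1c.mono hsub) hl)
    · have h2 : ∀ x ∈ Set.Icc s t, h ≤ -d1 x := by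
        apply le_on_Icc_of_Ioo hstlt (ContinuousOn.neg (hd1c.mono hsub))
        intro x hx
        show h ≤ -d1 x
        linarith [hl x hx]
      exact Or.inr fun x hx => by linarith [h2 x hx]
  have habs : ∀ x ∈ Set.Icc s t, h ≤ |d1 x| := by
    intro x hx
    rcases hlowIcc with hl | hl
    · rw [abs_of_nonneg (by linarith [hl x hx])]
      exact hl x hx
    · rw [abs_of_nonpos (by linarith [hl x hx])]
      linarith [hl x hx]
  have hne : ∀ x ∈ Set.Icc s t, d1 x ≠ 0 := by
    intro x hx
    have := habs x hx
    intro h0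
    rw [h0, abs_zero] at this
    linarith
  -- primitive
  set B : ℝ := 7 * 2^d * lam ^ (-(1/(d:ℝ))) with hB
  set E : ℝ → ℂ := fun y => Complex.exp (Complex.I * lam * ((P.eval y : ℝ) : ℂ)) with hE
  set G : ℝ → ℂ := fun y => ∫ z in (0:ℝ)..y, E z with hG
  have hEc : Continuous E := exp_cont P lam
  have hGd : ∀ y : ℝ, HasDerivAt G (E y) y := fun y =>
    (hEc.integral_hasStrictDerivAt 0 y).hasDerivAt
  have hGc : Continuous G := by
    rw [continuous_iff_continuousAt]
    exact fun y => (hGd y).continuousAt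
  have hGb : ∀ y : ℝ, ‖G y‖ ≤ B := fun y => vdc_P hd hdeg hmon hlam 0 y
  have hfc : ContinuousOn f (Set.Icc s t) := hf.continuousOn.mono hsub
  have hfd : ∀ x ∈ Set.Ioo s t, HasDerivAt f (d1 x) x :=
    fun x hx => hasDeriv_interior hf (hIoo hx)
  have hd1d : ∀ x ∈ Set.Ioo s t, HasDerivAt d1 (d2 x) x :=
    fun x hx => hasDeriv_interior hd1sm (hIoo hx)
  have key := ibp (s := s) (t := t) (K := h⁻¹) (B := B) hst
    (α := fun x => (d1 x)⁻¹)
    (α' := fun x => -(d2 x) / (d1 x)^2)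
    (H := fun x => G (f x))
    (H' := fun x => (d1 x) • E (f x))
    (ψ := fun x => E (f x))
    ?hψ ?hαc ?hα'c ?hHc ?hH'c ?hαd ?hHd ?hsign ?hK ?hBb
  case hψ =>
    intro x hx
    show (((d1 x)⁻¹ : ℝ) : ℂ) * ((d1 x) • E (f x)) = E (f x)
    have hnex : ((d1 x : ℝ) : ℂ) ≠ 0 := Complex.ofReal_ne_zero.2 (hne x hx)
    rw [Complex.real_smul, Complex.ofReal_inv, ← mul_assoc, inv_mul_cancel₀ hnex, one_mul]
  case hαc => exact (hd1c.mono hsub).inv₀ hne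
  case hα'c =>
    exact ContinuousOn.div ((hd2c.mono hsub).neg) ((hd1c.mono hsub).pow 2)
      (fun x hx => pow_ne_zero 2 (hne x hx))
  case hHc => exact hGc.comp_continuousOn hfc
  case hH'c =>
    exact ContinuousOn.smul (hd1c.mono hsub) (hEc.comp_continuousOn hfc)
  case hαd =>
    intro x hx
    exact (hd1d x hx).inv (hne x (Set.Ioo_subset_Icc_self hx))
  case hHd =>
    intro x hx
    exact HasDerivAt.scomp x (hGd (f x)) (hfd x hx)
  case hsign =>
    rcases hsgn with hp | hn
    · right
      intro x hx
      show -(d2 x) / (d1 x)^2 ≤ 0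
      exact div_nonpos_of_nonpos_of_nonneg (neg_nonpos.2 (hp x hx)) (sq_nonneg _)
    · left
      intro x hx
      show 0 ≤ -(d2 x) / (d1 x)^2
      exact div_nonneg (neg_nonneg.2 (hn x hx)) (sq_nonneg _)
  case hK =>
    intro x hx
    show |(d1 x)⁻¹| ≤ h⁻¹
    rw [abs_inv]
    exact inv_anti₀ hh (habs x hx)
  case hBb =>
    intro x hx
    show ‖G (f x)‖ ≤ B
    exact hGb (f x)
  exact key


lemma piece_bound {a b : ℝ} (hab : a < b) {f : ℝ → ℝ} (hf : ContDiffOn ℝ (⊤ : ℕ∞) f (Set.Icc a b))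
    {A δ : ℝ} (hA : 1 ≤ A) (hδ0 : 0 < δ) (hδ1 : δ < 1)
    (hosc : ∀ (lam : ℝ), lam ≠ 0 → ∀ (c e : ℝ), a ≤ c → c ≤ e → e ≤ b →
      ‖∫ x in Set.Icc c e, Complex.exp (Complex.I * (lam : ℂ) * (f x : ℂ))‖ ≤
        A * |lam| ^ (-δ))
    {P : Polynomial ℝ} {d : ℕ} (hd : 2 ≤ d) (hdeg : P.natDegree = d) (hmon : P.derivative.Monic)
    {lam : ℝ} (hlam : 0 < lam) {h : ℝ} (hh : 0 < h)
    {u v : ℝ} (huv : u ≤ v) (hau : a ≤ u) (hvb : v ≤ b)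
    (hsgn1 : SgnOn (derivWithin f (Set.Icc a b)) (Set.Icc u v))
    (hsgn2 : SgnOn (derivWithin (derivWithin f (Set.Icc a b)) (Set.Icc a b)) (Set.Icc u v)) :
    ‖∫ x in u..v, Complex.exp (Complex.I * lam * ((P.eval (f x) : ℝ) : ℂ))‖
      ≤ (2*A) ^ ((1:ℝ)/(1-δ)) * h ^ (δ/(1-δ))
        + 8 * h⁻¹ * (7 * 2^d * lam ^ (-(1/(d:ℝ)))) := by
  have hA0 : 0 < A := lt_of_lt_of_le one_pos hA
  have h1δ : 0 < 1 - δ := by linarith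
  set d1 : ℝ → ℝ := derivWithin f (Set.Icc a b) with hd1def
  set d2 : ℝ → ℝ := derivWithin d1 (Set.Icc a b) with hd2def
  have hd1sm : ContDiffOn ℝ (⊤ : ℕ∞) d1 (Set.Icc a b) :=
    hf.derivWithin (uniqueDiffOn_Icc hab) (by simp)
  have hd1c : ContinuousOn d1 (Set.Icc a b) := hd1sm.continuousOn
  have hsub : Set.Icc u v ⊆ Set.Icc a b := Set.Icc_subset_Icc hau hvb
  have hS1 : (0:ℝ) ≤ (2*A) ^ ((1:ℝ)/(1-δ)) * h ^ (δ/(1-δ)) := by positivity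
  have hBpos : (0:ℝ) < 7 * 2^d * lam ^ (-(1/(d:ℝ))) := by positivity
  have hmono : MonotoneOn d1 (Set.Icc u v) ∨ AntitoneOn d1 (Set.Icc u v) :=
    mono_or_anti hd1c (fun x hx => hasDeriv_interior hd1sm hx) hsub huv hsgn2
  set T : Set ℝ := Set.Icc u v ∩ (fun x => |d1 x|) ⁻¹' Set.Iic h with hT
  have hTsub : T ⊆ Set.Icc u v := Set.inter_subset_left
  have hTcl : IsClosed T :=
    ((hd1c.mono hsub).abs).preimage_isClosed_of_isClosed isClosed_Icc isClosed_Iic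
  have hTcp : IsCompact T := isCompact_Icc.of_isClosed_subset hTcl hTsub
  have hintc : ContinuousOn (fun x => Complex.exp (Complex.I * lam * ((P.eval (f x) : ℝ) : ℂ)))
      (Set.Icc a b) := (exp_cont P lam).comp_continuousOn hf.continuousOn
  have hii : ∀ p q : ℝ, p ∈ Set.Icc a b → q ∈ Set.Icc a b →
      IntervalIntegrable (fun x => Complex.exp (Complex.I * lam * ((P.eval (f x) : ℝ) : ℂ)))
        volume p q := by
    intro p q hp hq
    exact (hintc.mono (Set.uIcc_subset_Icc hp hq)).intervalIntegrable
  by_cases hTne : T.Nonempty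
  · set w₁ : ℝ := sInf T with hw₁
    set w₂ : ℝ := sSup T with hw₂
    have hw1T : w₁ ∈ T := hTcp.sInf_mem hTne
    have hw2T : w₂ ∈ T := hTcp.sSup_mem hTne
    have hbddA : BddAbove T := BddAbove.mono hTsub bddAbove_Icc
    have hbddB : BddBelow T := BddBelow.mono hTsub bddBelow_Icc
    have hw12 : w₁ ≤ w₂ := csInf_le_csSup hTne hbddB hbddA
    have hw1Icc : w₁ ∈ Set.Icc u v := hTsub hw1T
    have hw2Icc : w₂ ∈ Set.Icc u v := hTsub hw2T
    have hmid : ∀ x ∈ Set.Icc w₁ w₂, |d1 x| ≤ h := by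
      intro x hx
      have hxuv : x ∈ Set.Icc u v := ⟨le_trans hw1Icc.1 hx.1, le_trans hx.2 hw2Icc.2⟩
      have hb1 : |d1 w₁| ≤ h := hw1T.2
      have hb2 : |d1 w₂| ≤ h := hw2T.2
      rw [abs_le] at hb1 hb2 ⊢
      rcases hmono with hm | hm
      · have l1 := hm hw1Icc hxuv hx.1
        have l2 := hm hxuv hw2Icc hx.2
        exact ⟨by linarith [hb1.1], by linarith [hb2.2]⟩
      · have l1 := hm hw1Icc hxuv hx.1
        have l2 := hm hxuv hw2Icc hx.2
        exact ⟨by linarith [hb2.1], by linarith [hb1.2]⟩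
    have hsmall := small_piece hab hf hA hδ0 hδ1 hosc hh hw12
      (le_trans hau hw1Icc.1) (le_trans hw2Icc.2 hvb) hmid
    have hmidnorm : ‖∫ x in w₁..w₂, Complex.exp (Complex.I * lam *
        ((P.eval (f x) : ℝ) : ℂ))‖ ≤ (2*A) ^ ((1:ℝ)/(1-δ)) * h ^ (δ/(1-δ)) := by
      have h1 : ‖∫ x in w₁..w₂, Complex.exp (Complex.I * lam * ((P.eval (f x) : ℝ) : ℂ))‖
          ≤ 1 * |w₂ - w₁| := by
        apply intervalIntegral.norm_integral_le_of_norm_le_const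
        intro x _
        exact le_of_eq (norm_exp_I_mul lam _)
      rw [one_mul, abs_of_nonneg (by linarith)] at h1
      linarith
    have hnotTL : ∀ x ∈ Set.Ioo u w₁, h < |d1 x| := by
      intro x hx
      by_contra hcon
      push_neg at hcon
      have hxT : x ∈ T := ⟨⟨hx.1.le, le_trans hx.2.le hw1Icc.2⟩, hcon⟩
      have := csInf_le hbddB hxT
      linarith [hx.2]
    have hbigL : (∀ x ∈ Set.Ioo u w₁, h ≤ d1 x) ∨ (∀ x ∈ Set.Ioo u w₁, d1 x ≤ -h) := by
      rcases hsgn1 with hp | hn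
      · left
        intro x hx
        have hxuv : x ∈ Set.Icc u v := ⟨hx.1.le, le_trans hx.2.le hw1Icc.2⟩
        have := hnotTL x hx
        rw [abs_of_nonneg (hp x hxuv)] at this
        linarith
      · right
        intro x hx
        have hxuv : x ∈ Set.Icc u v := ⟨hx.1.le, le_trans hx.2.le hw1Icc.2⟩
        have := hnotTL x hx
        rw [abs_of_nonpos (hn x hxuv)] at this
        linarith
    have hnotTR : ∀ x ∈ Set.Ioo w₂ v, h < |d1 x| := by
      intro x hx
      by_contra hcon
      push_neg at hcon
      have hxT : x ∈ T := ⟨⟨le_trans hw2Icc.1 hx.1.le, hx.2.le⟩, hcon⟩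
      have := le_csSup hbddA hxT
      linarith [hx.1]
    have hbigR : (∀ x ∈ Set.Ioo w₂ v, h ≤ d1 x) ∨ (∀ x ∈ Set.Ioo w₂ v, d1 x ≤ -h) := by
      rcases hsgn1 with hp | hn
      · left
        intro x hx
        have hxuv : x ∈ Set.Icc u v := ⟨le_trans hw2Icc.1 hx.1.le, hx.2.le⟩
        have := hnotTR x hx
        rw [abs_of_nonneg (hp x hxuv)] at this
        linarith
      · right
        intro x hx
        have hxuv : x ∈ Set.Icc u v := ⟨le_trans hw2Icc.1 hx.1.le, hx.2.le⟩
        have := hnotTR x hx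
        rw [abs_of_nonpos (hn x hxuv)] at this
        linarith
    have hleft := big_piece hab hf hd hdeg hmon hlam hh hw1Icc.1 hau
      (le_trans hw1Icc.2 hvb) hbigL (hsgn2.mono (Set.Icc_subset_Icc (le_refl u) hw1Icc.2))
    have hright := big_piece hab hf hd hdeg hmon hlam hh hw2Icc.2 (le_trans hau hw2Icc.1)
      hvb hbigR (hsgn2.mono (Set.Icc_subset_Icc hw2Icc.1 (le_refl v)))
    have hm1 : u ∈ Set.Icc a b := ⟨hau, le_trans huv hvb⟩
    have hm2 : w₁ ∈ Set.Icc a b := hsub hw1Icc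
    have hm3 : w₂ ∈ Set.Icc a b := hsub hw2Icc
    have hm4 : v ∈ Set.Icc a b := ⟨le_trans hau huv, hvb⟩
    have e2 : (∫ x in w₁..w₂, Complex.exp (Complex.I * lam * ((P.eval (f x) : ℝ) : ℂ)))
        + (∫ x in w₂..v, Complex.exp (Complex.I * lam * ((P.eval (f x) : ℝ) : ℂ)))
        = ∫ x in w₁..v, Complex.exp (Complex.I * lam * ((P.eval (f x) : ℝ) : ℂ)) :=
      intervalIntegral.integral_add_adjacent_intervals (hii w₁ w₂ hm2 hm3) (hii w₂ v hm3 hm4)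
    have e1 : (∫ x in u..w₁, Complex.exp (Complex.I * lam * ((P.eval (f x) : ℝ) : ℂ)))
        + (∫ x in w₁..v, Complex.exp (Complex.I * lam * ((P.eval (f x) : ℝ) : ℂ)))
        = ∫ x in u..v, Complex.exp (Complex.I * lam * ((P.eval (f x) : ℝ) : ℂ)) :=
      intervalIntegral.integral_add_adjacent_intervals (hii u w₁ hm1 hm2) (hii w₁ v hm2 hm4)
    rw [← e1, ← e2]
    have n1 := norm_add_le (∫ x in u..w₁, Complex.exp (Complex.I * lam * ((P.eval (f x) : ℝ) : ℂ)))
      ((∫ x in w₁..w₂, Complex.exp (Complex.I * lam * ((P.eval (f x) : ℝ) : ℂ)))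
        + (∫ x in w₂..v, Complex.exp (Complex.I * lam * ((P.eval (f x) : ℝ) : ℂ))))
    have n2 := norm_add_le (∫ x in w₁..w₂, Complex.exp (Complex.I * lam * ((P.eval (f x) : ℝ) : ℂ)))
      (∫ x in w₂..v, Complex.exp (Complex.I * lam * ((P.eval (f x) : ℝ) : ℂ)))
    have h4 : (0:ℝ) ≤ h⁻¹ := (inv_pos.2 hh).le
    calc ‖_ + _‖ ≤ _ := n1
      _ ≤ _ := by exact add_le_add (le_refl _) n2
      _ ≤ 4 * h⁻¹ * (7 * 2^d * lam ^ (-(1/(d:ℝ))))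
          + ((2*A) ^ ((1:ℝ)/(1-δ)) * h ^ (δ/(1-δ))
            + 4 * h⁻¹ * (7 * 2^d * lam ^ (-(1/(d:ℝ))))) := by
          exact add_le_add hleft (add_le_add hmidnorm hright)
      _ = (2*A) ^ ((1:ℝ)/(1-δ)) * h ^ (δ/(1-δ))
          + 8 * h⁻¹ * (7 * 2^d * lam ^ (-(1/(d:ℝ)))) := by ring
  · have hTe : ∀ x ∈ Set.Icc u v, h < |d1 x| := by
      intro x hx
      by_contra hcon
      push_neg at hcon
      exact hTne ⟨x, hx, hcon⟩
    have hbig : (∀ x ∈ Set.Ioo u v, h ≤ d1 x) ∨ (∀ x ∈ Set.Ioo u v, d1 x ≤ -h) := by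
      rcases hsgn1 with hp | hn
      · left
        intro x hx
        have hxuv := Set.Ioo_subset_Icc_self hx
        have := hTe x hxuv
        rw [abs_of_nonneg (hp x hxuv)] at this
        linarith
      · right
        intro x hx
        have hxuv := Set.Ioo_subset_Icc_self hx
        have := hTe x hxuv
        rw [abs_of_nonpos (hn x hxuv)] at this
        linarith
    have hbb := big_piece hab hf hd hdeg hmon hlam hh huv hau hvb hbig hsgn2
    have h4 : (0:ℝ) ≤ h⁻¹ := (inv_pos.2 hh).le
    refine hbb.trans ?_
    nlinarith [hBpos, hS1, h4]


lemma D1_eq {a b : ℝ} (hab : a < b) (f : ℝ → ℝ) :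
    ∀ x ∈ Set.Icc a b, iteratedDerivWithin 1 f (Set.Icc a b) x = derivWithin f (Set.Icc a b) x :=
  fun x hx => by rw [iteratedDerivWithin_one]

lemma D2_eq {a b : ℝ} (hab : a < b) (f : ℝ → ℝ) :
    ∀ x ∈ Set.Icc a b, iteratedDerivWithin 2 f (Set.Icc a b) x
      = derivWithin (derivWithin f (Set.Icc a b)) (Set.Icc a b) x := by
  intro x hx
  show iteratedDerivWithin (1+1) f (Set.Icc a b) x = _
  rw [iteratedDerivWithin_succ]
  exact derivWithin_congr (fun y hy => D1_eq hab f y hy) (D1_eq hab f x hx)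

lemma main_pos {N d : ℕ} (hN : 2 ≤ N) (hd : 2 ≤ d) {δ : ℝ} (hδ0 : 0 < δ) (hδ1 : δ < 1)
    {M : ℕ} {a b : ℝ} (hab : a < b) {f : ℝ → ℝ} (hf : ContDiffOn ℝ (⊤ : ℕ∞) f (Set.Icc a b))
    {k : ℕ} {t : ℕ → ℝ} (hk : k ≤ M + 1) (ht0 : t 0 = a) (htk : t k = b)
    (hstep : ∀ i < k, t i ≤ t (i + 1))
    (hsgnN : ∀ i < k, SgnOn (iteratedDerivWithin N f (Set.Icc a b)) (Set.Icc (t i) (t (i+1))))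
    {A : ℝ} (hA : 1 ≤ A)
    (hosc : ∀ (lam : ℝ), lam ≠ 0 → ∀ (c e : ℝ), a ≤ c → c ≤ e → e ≤ b →
      ‖∫ x in Set.Icc c e, Complex.exp (Complex.I * (lam : ℂ) * (f x : ℂ))‖ ≤ A * |lam| ^ (-δ))
    {P : Polynomial ℝ} (hdeg : P.natDegree = d) (hmon : P.derivative.Monic)
    {lam : ℝ} (hlam : 0 < lam) :
    ‖∫ x in Set.Icc a b, Complex.exp (Complex.I * (lam : ℂ) * ((P.eval (f x) : ℝ) : ℂ))‖ ≤
      (2 ^ (N-1) * ((2:ℝ) ^ ((1:ℝ)/(1-δ)) + 56 * 2 ^ d)) * (M + 1 : ℝ) * A ^ (1 / (1 - δ))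
        * lam ^ (-(δ / (d : ℝ))) := by
  have h1δ : 0 < 1 - δ := by linarith
  have hA0 : 0 < A := lt_of_lt_of_le one_pos hA
  set h : ℝ := lam ^ (-((1-δ)/(d:ℝ))) with hhdef
  have hh : 0 < h := Real.rpow_pos_of_pos hlam _
  obtain ⟨k', hk', ss, hs0, hsk, hstep', hsgn'⟩ := descend hab hf hN hk ht0 htk hstep hsgnN
  have hmemi : ∀ i ≤ k', a ≤ ss i ∧ ss i ≤ b := by
    intro i hi
    constructor
    · rw [← hs0]; exact chain_le hstep' 0 i (by omega) hi
    · rw [← hsk]; exact chain_le hstep' i k' hi (le_refl _)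
  set S : ℝ := (2*A) ^ ((1:ℝ)/(1-δ)) * h ^ (δ/(1-δ))
      + 8 * h⁻¹ * (7 * 2^d * lam ^ (-(1/(d:ℝ)))) with hSdef
  have hS0 : 0 ≤ S := by positivity
  have hPB : ∀ i < k', ‖∫ x in (ss i)..(ss (i+1)),
      Complex.exp (Complex.I * lam * ((P.eval (f x) : ℝ) : ℂ))‖ ≤ S := by
    intro i hi
    obtain ⟨h1, h2⟩ := hsgn' i hi
    have hmx : ∀ x ∈ Set.Icc (ss i) (ss (i+1)), x ∈ Set.Icc a b := by
      intro x hx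
      exact ⟨le_trans (hmemi i (by omega)).1 hx.1, le_trans hx.2 (hmemi (i+1) (by omega)).2⟩
    have hg1 : SgnOn (derivWithin f (Set.Icc a b)) (Set.Icc (ss i) (ss (i+1))) := by
      rcases h1 with hp | hn
      · exact Or.inl fun x hx => by rw [← D1_eq hab f x (hmx x hx)]; exact hp x hx
      · exact Or.inr fun x hx => by rw [← D1_eq hab f x (hmx x hx)]; exact hn x hx
    have hg2 : SgnOn (derivWithin (derivWithin f (Set.Icc a b)) (Set.Icc a b))
        (Set.Icc (ss i) (ss (i+1))) := by
      rcases h2 with hp | hn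
      · exact Or.inl fun x hx => by rw [← D2_eq hab f x (hmx x hx)]; exact hp x hx
      · exact Or.inr fun x hx => by rw [← D2_eq hab f x (hmx x hx)]; exact hn x hx
    exact piece_bound hab hf hA hδ0 hδ1 hosc hd hdeg hmon hlam hh
      (hstep' i hi) (hmemi i (by omega)).1 (hmemi (i+1) (by omega)).2 hg1 hg2
  have hintc : ContinuousOn (fun x => Complex.exp (Complex.I * lam * ((P.eval (f x) : ℝ) : ℂ)))
      (Set.Icc a b) := (exp_cont P lam).comp_continuousOn hf.continuousOn
  have hii : ∀ i < k', IntervalIntegrable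
      (fun x => Complex.exp (Complex.I * lam * ((P.eval (f x) : ℝ) : ℂ))) volume
      (ss i) (ss (i+1)) := by
    intro i hi
    apply (hintc.mono (Set.uIcc_subset_Icc ?_ ?_)).intervalIntegrable
    · exact ⟨(hmemi i (by omega)).1, (hmemi i (by omega)).2⟩
    · exact ⟨(hmemi (i+1) (by omega)).1, (hmemi (i+1) (by omega)).2⟩
  have hsum : ∫ x in Set.Icc a b, Complex.exp (Complex.I * lam * ((P.eval (f x) : ℝ) : ℂ))
      = ∑ i ∈ Finset.range k', ∫ x in (ss i)..(ss (i+1)),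
          Complex.exp (Complex.I * lam * ((P.eval (f x) : ℝ) : ℂ)) := by
    rw [icc_int_eq hab.le, intervalIntegral.sum_integral_adjacent_intervals hii, hs0, hsk]
  have hcast : (k' : ℝ) ≤ (M + 1 : ℝ) * 2 ^ (N-1) := by
    have := hk'
    calc (k' : ℝ) ≤ ((M+1) * 2^(N-1) : ℕ) := by exact_mod_cast this
      _ = (M + 1 : ℝ) * 2 ^ (N-1) := by push_cast; ring
  have htot : ‖∫ x in Set.Icc a b, Complex.exp (Complex.I * lam * ((P.eval (f x) : ℝ) : ℂ))‖
      ≤ (M + 1 : ℝ) * 2 ^ (N-1) * S := by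
    rw [hsum]
    calc ‖∑ i ∈ Finset.range k', ∫ x in (ss i)..(ss (i+1)),
        Complex.exp (Complex.I * lam * ((P.eval (f x) : ℝ) : ℂ))‖
        ≤ ∑ i ∈ Finset.range k', ‖∫ x in (ss i)..(ss (i+1)),
            Complex.exp (Complex.I * lam * ((P.eval (f x) : ℝ) : ℂ))‖ := norm_sum_le _ _
      _ ≤ ∑ _i ∈ Finset.range k', S :=
          Finset.sum_le_sum fun i hi => hPB i (Finset.mem_range.1 hi)
      _ = (k' : ℝ) * S := by rw [Finset.sum_const, Finset.card_range, nsmul_eq_mul]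
      _ ≤ (M + 1 : ℝ) * 2 ^ (N-1) * S := mul_le_mul_of_nonneg_right hcast hS0
  -- compute S
  have hd0 : ((d:ℝ)) ≠ 0 := by positivity
  have hc1 : h ^ (δ/(1-δ)) = lam ^ (-(δ / (d:ℝ))) := by
    rw [hhdef, ← Real.rpow_mul hlam.le]
    congr 1
    field_simp
  have hinv : h⁻¹ = lam ^ ((1-δ)/(d:ℝ)) := by
    rw [hhdef, Real.rpow_neg hlam.le, inv_inv]
  have hc2 : h⁻¹ * lam ^ (-(1/(d:ℝ))) = lam ^ (-(δ / (d:ℝ))) := by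
    rw [hinv, ← Real.rpow_add hlam]
    congr 1
    field_simp
    ring
  have hmr : (2*A : ℝ) ^ ((1:ℝ)/(1-δ)) = 2 ^ ((1:ℝ)/(1-δ)) * A ^ ((1:ℝ)/(1-δ)) :=
    Real.mul_rpow (by norm_num) (by linarith)
  have hA1 : (1:ℝ) ≤ A ^ ((1:ℝ)/(1-δ)) := by
    have := Real.rpow_le_rpow (by norm_num : (0:ℝ) ≤ 1) hA (by positivity : (0:ℝ) ≤ 1/(1-δ))
    rwa [Real.one_rpow] at this
  have hlamE : (0:ℝ) < lam ^ (-(δ / (d:ℝ))) := Real.rpow_pos_of_pos hlam _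
  have hSle : S ≤ ((2:ℝ) ^ ((1:ℝ)/(1-δ)) + 56 * 2 ^ d) * A ^ ((1:ℝ)/(1-δ))
      * lam ^ (-(δ / (d:ℝ))) := by
    have e1 : S = 2 ^ ((1:ℝ)/(1-δ)) * A ^ ((1:ℝ)/(1-δ)) * lam ^ (-(δ / (d:ℝ)))
        + 56 * 2 ^ d * lam ^ (-(δ / (d:ℝ))) := by
      rw [hSdef, hc1, hmr]
      have e2 : 8 * h⁻¹ * (7 * 2 ^ d * lam ^ (-(1/(d:ℝ))))
          = 56 * 2 ^ d * (h⁻¹ * lam ^ (-(1/(d:ℝ)))) := by ring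
      rw [e2, hc2]
    rw [e1]
    have h2e : (0:ℝ) < 2 ^ ((1:ℝ)/(1-δ)) := Real.rpow_pos_of_pos (by norm_num) _
    have h2d : (0:ℝ) < (2:ℝ) ^ d := by positivity
    nlinarith [mul_pos h2d hlamE]
  refine htot.trans ?_
  have h2N : (0:ℝ) ≤ (M + 1 : ℝ) * 2 ^ (N-1) := by positivity
  calc (M + 1 : ℝ) * 2 ^ (N-1) * S
      ≤ (M + 1 : ℝ) * 2 ^ (N-1) * (((2:ℝ) ^ ((1:ℝ)/(1-δ)) + 56 * 2 ^ d)
        * A ^ ((1:ℝ)/(1-δ)) * lam ^ (-(δ / (d:ℝ)))) := mul_le_mul_of_nonneg_left hSle h2N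
    _ = (2 ^ (N-1) * ((2:ℝ) ^ ((1:ℝ)/(1-δ)) + 56 * 2 ^ d)) * (M + 1 : ℝ)
        * A ^ (1 / (1 - δ)) * lam ^ (-(δ / (d : ℝ))) := by ring

end Stmt3

open Stmt3

/-- Let `N ≥ 2`, `0 < δ < 1`, `A ≥ 1`, `M ≥ 0`. Suppose `f` is smooth
on `I = [a, b]`, `I` can be partitioned into at most `M + 1` subintervals on each of
which `f^{(N)}` is single-signed, and `|∫_J e^{iλ f}| ≤ A |λ|^{-δ}` for all `λ ≠ 0` and
every subinterval `J ⊆ I`. Then there is `C = C(d, N, δ)` such that for every polynomial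
`P` of degree `d ≥ 2` with `P'` monic, and all `λ ≠ 0`,
`|∫_I e^{iλ P(f)}| ≤ C · (M+1) · A^{1/(1-δ)} · |λ|^{-δ/d}`. -/
theorem stmt_3 (N d : ℕ) (hN : 2 ≤ N) (hd : 2 ≤ d) (δ : ℝ) (hδ0 : 0 < δ) (hδ1 : δ < 1) :
    ∃ C : ℝ, 0 < C ∧
      ∀ (M : ℕ) (a b : ℝ), a ≤ b →
      ∀ f : ℝ → ℝ, ContDiffOn ℝ (⊤ : ℕ∞) f (Set.Icc a b) →
      (∃ (k : ℕ) (t : ℕ → ℝ), k ≤ M + 1 ∧ t 0 = a ∧ t k = b ∧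
        (∀ i < k, t i ≤ t (i + 1)) ∧
        (∀ i < k,
          (∀ x ∈ Set.Icc (t i) (t (i + 1)),
              0 ≤ iteratedDerivWithin N f (Set.Icc a b) x) ∨
          (∀ x ∈ Set.Icc (t i) (t (i + 1)),
              iteratedDerivWithin N f (Set.Icc a b) x ≤ 0))) →
      ∀ A : ℝ, 1 ≤ A →
      (∀ (lam : ℝ), lam ≠ 0 → ∀ (c e : ℝ), a ≤ c → c ≤ e → e ≤ b →
        ‖∫ x in Set.Icc c e, Complex.exp (Complex.I * (lam : ℂ) * (f x : ℂ))‖ ≤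
          A * |lam| ^ (-δ)) →
      ∀ P : Polynomial ℝ, P.natDegree = d → P.derivative.Monic →
      ∀ lam : ℝ, lam ≠ 0 →
        ‖∫ x in Set.Icc a b, Complex.exp (Complex.I * (lam : ℂ) * ((P.eval (f x) : ℝ) : ℂ))‖ ≤
          C * (M + 1 : ℝ) * A ^ (1 / (1 - δ)) * |lam| ^ (-(δ / (d : ℝ))) := by
  have h1δ : 0 < 1 - δ := by linarith
  refine ⟨2 ^ (N-1) * ((2:ℝ) ^ ((1:ℝ)/(1-δ)) + 56 * 2 ^ d), ?_, ?_⟩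
  · have h2e : (0:ℝ) < 2 ^ ((1:ℝ)/(1-δ)) := Real.rpow_pos_of_pos (by norm_num) _
    have h2d : (0:ℝ) < (2:ℝ) ^ d := by positivity
    positivity
  intro M a b hab f hf hpart A hA hosc P hdeg hmon lam hlam
  obtain ⟨k, t, hk, ht0, htk, hstep, hsgnN⟩ := hpart
  have hA0 : 0 < A := lt_of_lt_of_le one_pos hA
  have hRHS0 : 0 ≤ 2 ^ (N-1) * ((2:ℝ) ^ ((1:ℝ)/(1-δ)) + 56 * 2 ^ d) * (M + 1 : ℝ)
      * A ^ (1 / (1 - δ)) * |lam| ^ (-(δ / (d : ℝ))) := by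
    have h2e : (0:ℝ) < 2 ^ ((1:ℝ)/(1-δ)) := Real.rpow_pos_of_pos (by norm_num) _
    have h2d : (0:ℝ) < (2:ℝ) ^ d := by positivity
    have hAe : (0:ℝ) < A ^ (1/(1-δ)) := Real.rpow_pos_of_pos hA0 _
    have habs : (0:ℝ) < |lam| := abs_pos.2 hlam
    have hle : (0:ℝ) < |lam| ^ (-(δ / (d : ℝ))) := Real.rpow_pos_of_pos habs _
    positivity
  rcases eq_or_lt_of_le hab with heq | hab'
  · have h0 : ∫ x in Set.Icc a b, Complex.exp (Complex.I * (lam : ℂ)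
        * ((P.eval (f x) : ℝ) : ℂ)) = 0 := by
      have hz : (volume : Measure ℝ) (Set.Icc a b) = 0 := by
        rw [← heq, Set.Icc_self, Real.volume_singleton]
      rw [Measure.restrict_eq_zero.2 hz, integral_zero_measure]
    rw [h0, norm_zero]
    exact hRHS0
  rcases lt_trichotomy lam 0 with hneg | hzero | hpos
  · have hpos' : 0 < -lam := by linarith
    have hmain := main_pos hN hd hδ0 hδ1 hab' hf hk ht0 htk hstep
      (fun i hi => hsgnN i hi) hA hosc hdeg hmon hpos'
    have hpt : ∀ x : ℝ, Complex.exp (Complex.I * (lam : ℂ) * ((P.eval (f x) : ℝ) : ℂ))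
        = (starRingEnd ℂ) (Complex.exp (Complex.I * ((-lam : ℝ) : ℂ)
            * ((P.eval (f x) : ℝ) : ℂ))) := by
      intro x
      rw [← Complex.exp_conj]
      congr 1
      simp only [map_mul, map_neg, Complex.conj_I, Complex.conj_ofReal, Complex.ofReal_neg]
      ring
    have heqI : ‖∫ x in Set.Icc a b, Complex.exp (Complex.I * (lam : ℂ)
        * ((P.eval (f x) : ℝ) : ℂ))‖
        = ‖∫ x in Set.Icc a b, Complex.exp (Complex.I * ((-lam : ℝ) : ℂ)
            * ((P.eval (f x) : ℝ) : ℂ))‖ := by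
      simp_rw [hpt]
      rw [integral_conj]
      exact RCLike.norm_conj _
    rw [heqI]
    refine hmain.trans ?_
    rw [abs_of_neg hneg]
  · exact absurd hzero hlam
  · have hmain := main_pos hN hd hδ0 hδ1 hab' hf hk ht0 htk hstep
      (fun i hi => hsgnN i hi) hA hosc hdeg hmon hpos
    refine hmain.trans ?_
    rw [abs_of_pos hpos]
end

section
/- Let (X, μ) and (Y, ν) be finite measure spaces, let f : X → ℝ and g : Y → ℝ be measurable, and let A, B > 0 and 0 < δ < δ′ < 1. Suppose that for all real λ ≠ 0, |∫_X e^{iλ f(x)} dμ(x)| ≤ A |λ|^{-δ} and |∫_Y e^{iλ g(y)} dν(y)| ≤ B |λ|^{-δ′}. Then there is a constant C, depending only on δ and δ′, such that for all real λ ≠ 0, |∫_{X×Y} e^{iλ f(x) g(y)} dμ(x) dν(y)| ≤ C · A · (ν(Y) + B) · |λ|^{-δ}. -/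
/-!
Fubini writes the integral over `X × Y` as `∫_Y ψ dν` with `ψ y = ∫_X e^{iλ f(x) g(y)} dμ(x)`,
and the decay of the first integral at frequency `λ g(y)` gives
`|ψ y| ≤ A |λ|^{-δ} |g y|^{-δ}`. It remains to bound `∫_Y |g|^{-δ} dν` by `ν(Y) + C B`.

The decay of the second integral controls the small values of `g`: integrating
`Re ∫_Y e^{i l g} dν` against the Fejér weight `1 - l/T` over `0 < l < T` produces the kernel
`(1 - cos (T s)) / (T s²)`, which is nonnegative and at least `T/5` for `|s| ≤ 1/T`, whence
`ν{|g| ≤ t} ≤ 5 B t^{δ'} / (1 - δ')`. Summed over the dyadic levels `|g| ≤ 2^{-k}` with weights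
`2^{(k+1)δ}`, these bounds form a geometric series of ratio `2^{δ-δ'} < 1`.
-/

open MeasureTheory Real

namespace Real

lemma sq_div_five_le_one_sub_cos {x : ℝ} (hx : |x| ≤ π) : x ^ 2 / 5 ≤ 1 - cos x := by
  have hπ : π ^ 2 < 10 := by nlinarith [pi_lt_d2, pi_pos]
  have : x ^ 2 / 5 ≤ 2 / π ^ 2 * x ^ 2 := by
    rw [div_mul_eq_mul_div, div_le_div_iff₀ (by norm_num) (by positivity)]
    nlinarith [sq_nonneg x]
  linarith [cos_le_one_sub_mul_cos_sq hx]

end Real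

noncomputable def fejer (T s : ℝ) : ℝ := ∫ l in (0 : ℝ)..T, (1 - l / T) * cos (l * s)

lemma fejer_eq {T s : ℝ} (hT : T ≠ 0) (hs : s ≠ 0) :
    fejer T s = (1 - cos (T * s)) / (T * s ^ 2) := by
  have hderiv : ∀ l : ℝ, HasDerivAt (fun l ↦ (1 - l / T) * sin (l * s) / s
      - cos (l * s) / (T * s ^ 2)) ((1 - l / T) * cos (l * s)) l := by
    intro l
    have hls : HasDerivAt (fun l : ℝ ↦ l * s) s l := by simpa using (hasDerivAt_id l).mul_const s
    have hlin : HasDerivAt (fun l : ℝ ↦ 1 - l / T) (-(1 / T)) l := by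
      simpa using ((hasDerivAt_id l).div_const T).const_sub 1
    refine (((hlin.mul hls.sin).div_const s).sub (hls.cos.div_const (T * s ^ 2))).congr_deriv ?_
    field_simp
    ring
  rw [fejer, intervalIntegral.integral_eq_sub_of_hasDerivAt (fun l _ ↦ hderiv l)
    (by apply Continuous.intervalIntegrable; fun_prop)]
  simp only [zero_mul, sin_zero, cos_zero]
  field_simp
  ring

lemma fejer_zero_right {T : ℝ} (hT : T ≠ 0) : fejer T 0 = T / 2 := by
  simp only [fejer, mul_zero, cos_zero, mul_one]
  rw [intervalIntegral.integral_sub intervalIntegrable_const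
    (intervalIntegral.intervalIntegrable_id.div_const T), intervalIntegral.integral_div,
    integral_id, intervalIntegral.integral_const]
  simp only [sub_zero, smul_eq_mul, mul_one, ne_eq, OfNat.ofNat_ne_zero, not_false_eq_true,
    zero_pow]
  field_simp
  ring

lemma fejer_nonneg {T : ℝ} (hT : 0 < T) (s : ℝ) : 0 ≤ fejer T s := by
  rcases eq_or_ne s 0 with rfl | hs
  · rw [fejer_zero_right hT.ne']; positivity
  · rw [fejer_eq hT.ne' hs]
    exact div_nonneg (by linarith [cos_le_one (T * s)]) (by positivity)

lemma div_five_le_fejer {T s : ℝ} (hT : 0 < T) (hs : |s| * T ≤ 1) : T / 5 ≤ fejer T s := by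
  rcases eq_or_ne s 0 with rfl | hs0
  · rw [fejer_zero_right hT.ne']; linarith
  rw [fejer_eq hT.ne' hs0, le_div_iff₀ (by positivity)]
  have hTs : |T * s| ≤ π := by
    rw [abs_mul, abs_of_pos hT, mul_comm]; linarith [pi_gt_three]
  have := sq_div_five_le_one_sub_cos hTs
  nlinarith

section

variable {α : Type*} [MeasurableSpace α] {μ : Measure α}

lemma norm_exp_I_mul_ofReal_mul (a b : ℝ) : ‖Complex.exp (Complex.I * a * b)‖ = 1 := by
  rw [mul_assoc, ← Complex.ofReal_mul, Complex.norm_exp_I_mul_ofReal]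

lemma integrable_exp_I_mul [IsFiniteMeasure μ] {φ : α → ℝ} (hφ : Measurable φ) (l : ℝ) :
    Integrable (fun x ↦ Complex.exp (Complex.I * l * φ x)) μ :=
  .of_bound (by fun_prop) 1 (.of_forall fun x ↦ (norm_exp_I_mul_ofReal_mul l (φ x)).le)

lemma integral_cos_eq_re_integral_exp [IsFiniteMeasure μ] {φ : α → ℝ} (hφ : Measurable φ)
    (l : ℝ) : ∫ x, cos (l * φ x) ∂μ = (∫ x, Complex.exp (Complex.I * l * φ x) ∂μ).re := by
  rw [← RCLike.re_to_complex, ← integral_re (integrable_exp_I_mul hφ l)]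
  congr 1 with x
  rw [RCLike.re_to_complex, mul_assoc, ← Complex.ofReal_mul, mul_comm Complex.I,
    Complex.exp_ofReal_mul_I_re]

lemma integrable_fejer_integrand [IsFiniteMeasure μ] {g : α → ℝ} (hg : Measurable g) (T : ℝ) :
    Integrable (fun p : ℝ × α ↦ (1 - p.1 / T) * cos (p.1 * g p.2))
      ((volume.restrict (Set.Ioc 0 T)).prod μ) :=
  ((continuous_const.sub (continuous_id.div_const T)).integrableOn_Ioc.comp_fst μ).mul_bdd
    (by fun_prop) (c := 1) (.of_forall fun p ↦ abs_cos_le_one _)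

lemma integral_fejer_comp_le [IsFiniteMeasure μ] {g : α → ℝ} (hg : Measurable g) {B δ' T : ℝ}
    (hδ' : δ' < 1) (hT : 0 < T)
    (hdecay : ∀ l : ℝ, l ≠ 0 →
      ‖∫ x, Complex.exp (Complex.I * l * g x) ∂μ‖ ≤ B * |l| ^ (-δ')) :
    ∫ x, fejer T (g x) ∂μ ≤ B * T ^ (1 - δ') / (1 - δ') := by
  have hcos : ∀ l ∈ Set.Ioc 0 T, (1 - l / T) * ∫ x, cos (l * g x) ∂μ ≤ B * l ^ (-δ') := by
    rintro l ⟨hl, hlT⟩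
    have hbound := hdecay l hl.ne'
    rw [abs_of_pos hl] at hbound
    have hfactor : 1 - l / T ∈ Set.Icc 0 1 :=
      ⟨by rw [sub_nonneg]; exact div_le_one_of_le₀ hlT hT.le,
        by linarith [div_pos hl hT]⟩
    calc (1 - l / T) * ∫ x, cos (l * g x) ∂μ ≤ (1 - l / T) * (B * l ^ (-δ')) := by
          gcongr
          · exact hfactor.1
          · rw [integral_cos_eq_re_integral_exp hg]
            exact (Complex.re_le_norm _).trans hbound
      _ ≤ B * l ^ (-δ') := mul_le_of_le_one_left ((norm_nonneg _).trans hbound) hfactor.2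
  calc ∫ x, fejer T (g x) ∂μ
      = ∫ x, (∫ l in Set.Ioc 0 T, (1 - l / T) * cos (l * g x)) ∂μ := by
        simp only [fejer, intervalIntegral.integral_of_le hT.le]
    _ = ∫ l in Set.Ioc 0 T, (1 - l / T) * (∫ x, cos (l * g x) ∂μ) := by
        rw [← integral_integral_swap (integrable_fejer_integrand hg T)]
        simp only [integral_const_mul]
    _ ≤ ∫ l in Set.Ioc 0 T, B * l ^ (-δ') := by
        refine setIntegral_mono_on ?_ ?_ measurableSet_Ioc hcos
        · exact (integrable_fejer_integrand hg T).integral_prod_left.congr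
            (.of_forall fun l ↦ integral_const_mul (1 - l / T) _)
        · rw [← intervalIntegrable_iff_integrableOn_Ioc_of_le hT.le]
          exact (intervalIntegral.intervalIntegrable_rpow' (by linarith)).const_mul B
    _ = B * T ^ (1 - δ') / (1 - δ') := by
      rw [← intervalIntegral.integral_of_le hT.le, intervalIntegral.integral_const_mul,
        integral_rpow (.inl (by linarith)), zero_rpow (by linarith), neg_add_eq_sub]
      ring

lemma measureReal_abs_le_le_of_decay [IsFiniteMeasure μ] {g : α → ℝ} (hg : Measurable g)
    {B δ' t : ℝ} (hδ' : δ' < 1) (ht : 0 < t)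
    (hdecay : ∀ l : ℝ, l ≠ 0 →
      ‖∫ x, Complex.exp (Complex.I * l * g x) ∂μ‖ ≤ B * |l| ^ (-δ')) :
    μ.real {x | |g x| ≤ t} ≤ 5 / (1 - δ') * B * t ^ δ' := by
  set T := t⁻¹
  have hT : 0 < T := inv_pos.2 ht
  have hint : Integrable (fun x ↦ fejer T (g x)) μ :=
    (integrable_fejer_integrand hg T).integral_prod_right.congr
      (.of_forall fun x ↦ (intervalIntegral.integral_of_le hT.le).symm)
  have hlow : T / 5 * μ.real {x | |g x| ≤ t} ≤ ∫ x, fejer T (g x) ∂μ :=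
    calc T / 5 * μ.real {x | |g x| ≤ t} = ∫ x in {x | |g x| ≤ t}, T / 5 ∂μ := by
          rw [setIntegral_const, smul_eq_mul, mul_comm]
      _ ≤ ∫ x in {x | |g x| ≤ t}, fejer T (g x) ∂μ :=
          setIntegral_mono_on (integrable_const _).integrableOn hint.integrableOn
            (measurableSet_le hg.abs measurable_const) fun x hx ↦
              div_five_le_fejer hT (by rw [← mul_inv_cancel₀ ht.ne']; gcongr; exact hx)
      _ ≤ ∫ x, fejer T (g x) ∂μ :=
          setIntegral_le_integral hint (.of_forall fun x ↦ fejer_nonneg hT _)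
  have hTpow : T ^ (1 - δ') = T * t ^ δ' := by
    rw [inv_rpow ht.le, rpow_sub ht, rpow_one, inv_div, div_eq_mul_inv, mul_comm]
  have hboth := hlow.trans (integral_fejer_comp_le hg hδ' hT hdecay)
  rw [hTpow, show B * (T * t ^ δ') / (1 - δ') = T / 5 * (5 / (1 - δ') * B * t ^ δ') by ring]
    at hboth
  exact le_of_mul_le_mul_left hboth (by positivity)

lemma enorm_rpow_neg_le_one_add_tsum {δ : ℝ} (hδ : 0 < δ) (a : ℝ) :
    ‖a‖ₑ ^ (-δ) ≤ 1 + ∑' k : ℕ,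
      {b : ℝ | |b| ≤ 2⁻¹ ^ k}.indicator (fun _ ↦ ENNReal.ofReal (2 ^ (δ * (k + 1)))) a := by
  rcases eq_or_ne a 0 with rfl | ha
  · suffices ∑' _ : ℕ, (1 : ENNReal) ≤ ∑' k : ℕ,
        {b : ℝ | |b| ≤ 2⁻¹ ^ k}.indicator (fun _ ↦ ENNReal.ofReal (2 ^ (δ * (k + 1)))) 0 by
      rw [ENNReal.tsum_const_eq_top_of_ne_zero one_ne_zero, top_le_iff] at this
      rw [enorm_zero, ENNReal.zero_rpow_of_neg (neg_neg_of_pos hδ), this, add_top]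
    refine ENNReal.tsum_le_tsum fun k ↦ ?_
    rw [Set.indicator_of_mem (by simp), ENNReal.one_le_ofReal]
    exact one_le_rpow one_le_two (by positivity)
  rcases le_or_gt 1 |a| with h1 | h1
  · refine le_add_right (ENNReal.rpow_le_one_of_one_le_of_neg ?_ (by linarith))
    rwa [enorm_eq_ofReal_abs, ENNReal.one_le_ofReal]
  obtain ⟨n, hn, hn'⟩ := exists_nat_pow_near (one_le_inv₀ (abs_pos.2 ha) |>.2 h1.le) one_lt_two
  have hmem : a ∈ {b : ℝ | |b| ≤ 2⁻¹ ^ n} := by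
    rw [Set.mem_ofPred_eq, inv_pow]
    exact (le_inv_comm₀ (by positivity) (abs_pos.2 ha)).1 hn
  calc ‖a‖ₑ ^ (-δ) ≤ ENNReal.ofReal (2 ^ (δ * (n + 1))) := by
        rw [enorm_eq_ofReal_abs, ENNReal.ofReal_rpow_of_pos (abs_pos.2 ha)]
        refine ENNReal.ofReal_le_ofReal ?_
        rw [rpow_neg (abs_nonneg a), ← inv_rpow (abs_nonneg a), mul_comm, rpow_mul zero_le_two]
        exact rpow_le_rpow (by positivity) (by exact_mod_cast hn'.le) hδ.le
    _ = {b : ℝ | |b| ≤ 2⁻¹ ^ n}.indicator (fun _ ↦ ENNReal.ofReal (2 ^ (δ * (n + 1)))) a := by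
        rw [Set.indicator_of_mem hmem]
    _ ≤ _ := (ENNReal.le_tsum n).trans le_add_self

-- The `ℝ≥0∞`-valued power is `∞` where `g` vanishes (the real one would be `0` there).
lemma lintegral_enorm_rpow_neg_le [IsFiniteMeasure μ] {g : α → ℝ} (hg : Measurable g)
    {K δ δ' : ℝ} (hδ : 0 < δ) (hδδ' : δ < δ')
    (hsmall : ∀ t : ℝ, 0 < t → μ.real {x | |g x| ≤ t} ≤ K * t ^ δ') :
    ∫⁻ x, ‖g x‖ₑ ^ (-δ) ∂μ ≤ μ Set.univ + ENNReal.ofReal (K * (2 ^ δ / (1 - 2 ^ (δ - δ')))) := by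
  set r : ℝ := 2 ^ (δ - δ')
  have hr : r < 1 := rpow_lt_one_of_one_lt_of_neg one_lt_two (by linarith)
  have hlevel : ∀ k : ℕ, ENNReal.ofReal (2 ^ (δ * (k + 1))) * μ {x | |g x| ≤ 2⁻¹ ^ k} ≤
      ENNReal.ofReal K * ENNReal.ofReal (2 ^ δ * r ^ k) := by
    intro k
    have hscale : (2 : ℝ) ^ (δ * (k + 1)) * ((2⁻¹ : ℝ) ^ k) ^ δ' = 2 ^ δ * r ^ k := by
      rw [inv_pow, inv_rpow (by positivity), ← rpow_natCast, ← rpow_natCast,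
        ← rpow_mul zero_le_two, ← rpow_mul zero_le_two, ← rpow_neg zero_le_two,
        ← rpow_add two_pos, ← rpow_add two_pos]
      ring_nf
    rw [← ofReal_measureReal, ← ENNReal.ofReal_mul (by positivity),
      ← ENNReal.ofReal_mul' (by positivity)]
    refine ENNReal.ofReal_le_ofReal ?_
    calc 2 ^ (δ * (k + 1)) * μ.real {x | |g x| ≤ 2⁻¹ ^ k}
        ≤ 2 ^ (δ * (k + 1)) * (K * ((2⁻¹ : ℝ) ^ k) ^ δ') := by
          gcongr; exact hsmall _ (by positivity)
      _ = K * (2 ^ δ * r ^ k) := by rw [← hscale]; ring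
  calc ∫⁻ x, ‖g x‖ₑ ^ (-δ) ∂μ
      ≤ ∫⁻ x, 1 + ∑' k : ℕ, {x | |g x| ≤ 2⁻¹ ^ k}.indicator
          (fun _ ↦ ENNReal.ofReal (2 ^ (δ * (k + 1)))) x ∂μ :=
        lintegral_mono fun x ↦ enorm_rpow_neg_le_one_add_tsum hδ (g x)
    _ = μ Set.univ + ∑' k : ℕ, ENNReal.ofReal (2 ^ (δ * (k + 1))) * μ {x | |g x| ≤ 2⁻¹ ^ k} := by
        have hmeas (k : ℕ) : MeasurableSet {x | |g x| ≤ (2⁻¹ : ℝ) ^ k} :=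
          measurableSet_le hg.abs measurable_const
        rw [lintegral_add_left measurable_const, lintegral_const, one_mul,
          lintegral_tsum fun k ↦ (measurable_const.indicator (hmeas k)).aemeasurable]
        simp only [lintegral_indicator_const (hmeas _)]
    _ ≤ μ Set.univ + ∑' k : ℕ, ENNReal.ofReal K * ENNReal.ofReal (2 ^ δ * r ^ k) :=
        add_le_add_right (ENNReal.tsum_le_tsum hlevel) _
    _ = μ Set.univ + ENNReal.ofReal (K * (2 ^ δ / (1 - r))) := by
        rw [ENNReal.tsum_mul_left, ← ENNReal.ofReal_tsum_of_nonneg (fun k ↦ by positivity)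
          ((summable_geometric_of_lt_one (by positivity) hr).mul_left _), tsum_mul_left,
          tsum_geometric_of_lt_one (by positivity) hr, div_eq_mul_inv,
          ← ENNReal.ofReal_mul' (mul_nonneg (by positivity) (inv_nonneg.2 (by linarith)))]

lemma enorm_integral_prod_exp_mul_le {β : Type*} [MeasurableSpace β] {ν : Measure β}
    [IsFiniteMeasure μ] [IsFiniteMeasure ν] {f : α → ℝ} {g : β → ℝ} (hf : Measurable f)
    (hg : Measurable g) {A δ lam : ℝ} (hA : 0 < A) (hδ : 0 < δ) (hlam : lam ≠ 0)
    (hdecay : ∀ l : ℝ, l ≠ 0 →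
      ‖∫ x, Complex.exp (Complex.I * l * f x) ∂μ‖ ≤ A * |l| ^ (-δ)) :
    ‖∫ z, Complex.exp (Complex.I * lam * (f z.1 * g z.2 : ℝ)) ∂(μ.prod ν)‖ₑ ≤
      ENNReal.ofReal (A * |lam| ^ (-δ)) * ∫⁻ y, ‖g y‖ₑ ^ (-δ) ∂ν := by
  rw [integral_prod_symm _ (integrable_exp_I_mul (by fun_prop) lam),
    ← lintegral_const_mul' _ _ ENNReal.ofReal_ne_top]
  refine (enorm_integral_le_lintegral_enorm _).trans (lintegral_mono fun y ↦ ?_)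
  rcases eq_or_ne (g y) 0 with hy | hy
  · rw [hy, enorm_zero, ENNReal.zero_rpow_of_neg (neg_neg_of_pos hδ),
      ENNReal.mul_top (by simp only [ne_eq, ENNReal.ofReal_eq_zero, not_le]; positivity)]
    exact le_top
  have hbound := hdecay (lam * g y) (mul_ne_zero hlam hy)
  rw [abs_mul, mul_rpow (abs_nonneg _) (abs_nonneg _), ← mul_assoc] at hbound
  rw [enorm_eq_ofReal_abs (g y), ENNReal.ofReal_rpow_of_pos (abs_pos.2 hy),
    ← ENNReal.ofReal_mul (by positivity), ← ofReal_norm]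
  refine ENNReal.ofReal_le_ofReal (le_of_eq_of_le ?_ hbound)
  congr 3 with x
  push_cast
  ring_nf

end

/-- If `(X, μ)` and `(Y, ν)` are finite measure spaces, `f, g` are
measurable, `A, B > 0`, `0 < δ < δ' < 1`, and for all `λ ≠ 0` we have
`|∫_X e^{iλ f} dμ| ≤ A |λ|^{-δ}` and `|∫_Y e^{iλ g} dν| ≤ B |λ|^{-δ'}`, then there is a
constant `C = C(δ, δ')` such that for all `λ ≠ 0`,
`|∫_{X×Y} e^{iλ f(x) g(y)} dμ dν| ≤ C · A · (ν(Y) + B) · |λ|^{-δ}`. -/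
theorem stmt_6 (δ δ' : ℝ) (hδ0 : 0 < δ) (hδδ' : δ < δ') (hδ'1 : δ' < 1) :
    ∃ C : ℝ, 0 < C ∧
      ∀ (X Y : Type) (_ : MeasurableSpace X) (_ : MeasurableSpace Y)
        (μ : Measure X) (ν : Measure Y), IsFiniteMeasure μ → IsFiniteMeasure ν →
      ∀ (f : X → ℝ) (g : Y → ℝ), Measurable f → Measurable g →
      ∀ (A B : ℝ), 0 < A → 0 < B →
      (∀ lam : ℝ, lam ≠ 0 →
        ‖∫ x, Complex.exp (Complex.I * (lam : ℂ) * (f x : ℂ)) ∂μ‖ ≤ A * |lam| ^ (-δ)) →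
      (∀ lam : ℝ, lam ≠ 0 →
        ‖∫ y, Complex.exp (Complex.I * (lam : ℂ) * (g y : ℂ)) ∂ν‖ ≤ B * |lam| ^ (-δ')) →
      ∀ lam : ℝ, lam ≠ 0 →
        ‖∫ z, Complex.exp (Complex.I * (lam : ℂ) * ((f z.1 * g z.2 : ℝ) : ℂ)) ∂(μ.prod ν)‖ ≤
          C * A * ((ν Set.univ).toReal + B) * |lam| ^ (-δ) := by
  set c := 5 / (1 - δ') * (2 ^ δ / (1 - 2 ^ (δ - δ')))
  have hc : 0 < c := by
    have : (2 : ℝ) ^ (δ - δ') < 1 := rpow_lt_one_of_one_lt_of_neg one_lt_two (by linarith)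
    have : 0 < 1 - δ' := by linarith
    positivity
  refine ⟨1 + c, by positivity, ?_⟩
  intro X Y _ _ μ ν _ _ f g hf hg A B hA hB hf_decay hg_decay lam hlam
  have hsum := lintegral_enorm_rpow_neg_le hg hδ0 hδδ'
    fun t ht ↦ measureReal_abs_le_le_of_decay hg hδ'1 ht hg_decay
  rw [show 5 / (1 - δ') * B * (2 ^ δ / (1 - 2 ^ (δ - δ'))) = c * B by ring] at hsum
  have hbound := (enorm_integral_prod_exp_mul_le (ν := ν) hf hg hA hδ0 hlam hf_decay).trans
    (mul_le_mul_right hsum _)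
  rw [← ofReal_measureReal, ← ENNReal.ofReal_add (by positivity) (by positivity),
    ← ENNReal.ofReal_mul (by positivity), ← ofReal_norm,
    ENNReal.ofReal_le_ofReal_iff (by positivity)] at hbound
  refine hbound.trans ?_
  have hν : 0 ≤ ν.real Set.univ := measureReal_nonneg
  calc A * |lam| ^ (-δ) * (ν.real Set.univ + c * B)
      ≤ A * |lam| ^ (-δ) * ((1 + c) * (ν.real Set.univ + B)) := by gcongr; nlinarith
    _ = (1 + c) * A * ((ν Set.univ).toReal + B) * |lam| ^ (-δ) := by rw [measureReal_def]; ring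
end

section
/- Let (X, μ) be a measure space, let k ≥ 1, let f_1, …, f_k : X → ℂ be measurable, and suppose there are positive numbers C_i and δ_i, i = 1, …, k, such that for every ε > 0 and each i, μ({x ∈ X : |f_i(x)| ≤ ε}) ≤ C_i ε^{δ_i}. Set δ := (Σ_{i=1}^{k} δ_i^{-1})^{-1} and C := Σ_{i=1}^{k} C_i (k δ / δ_i)^{δ}. Then for every ε > 0, μ({x ∈ X : |f_1(x) ⋯ f_k(x)| ≤ ε}) ≤ C ε^{δ}. -/
/-!
With `δ = (∑ δᵢ⁻¹)⁻¹` the weights `wᵢ = δ / δᵢ` sum to `1`, and by weighted AM-GM the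
thresholds `aᵢ = (k wᵢ ε) ^ wᵢ` satisfy `∏ aᵢ ≥ ε`. Hence `|f₁ ⋯ f_k| ≤ ε` forces `|fᵢ| ≤ aᵢ`
for some `i`, and the union bound gives `∑ Cᵢ aᵢ ^ δᵢ`, which equals `∑ Cᵢ (k δ / δᵢ) ^ δ ε ^ δ`
because `wᵢ δᵢ = δ`.
-/

open MeasureTheory Finset

section Weights

variable {ι : Type*} [Fintype ι] {w : ι → ℝ}

theorem one_le_prod_card_mul_rpow_self (hw : ∀ i, 0 < w i) (hw1 : ∑ i, w i = 1) :
    1 ≤ ∏ i, (Fintype.card ι * w i) ^ w i := by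
  have : Nonempty ι := by
    by_contra h
    rw [not_nonempty_iff] at h
    simp at hw1
  set n : ℝ := (Fintype.card ι : ℝ)
  have hn : 0 < n := Nat.cast_pos.2 Fintype.card_pos
  have hnw : ∀ i, 0 < n * w i := fun i => mul_pos hn (hw i)
  -- weighted AM-GM for `zᵢ = (n wᵢ)⁻¹`, whose weighted mean is `1`
  have amgm : ∏ i, (n * w i)⁻¹ ^ w i ≤ ∑ i, w i * (n * w i)⁻¹ :=
    Real.geom_mean_le_arith_mean_weighted univ w _ (fun i _ => (hw i).le) hw1
      (fun i _ => (inv_pos.2 (hnw i)).le)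
  have mean_eq : ∑ i, w i * (n * w i)⁻¹ = 1 := by
    have term_eq : ∀ i, w i * (n * w i)⁻¹ = n⁻¹ := fun i => by field_simp [(hw i).ne']
    simp only [term_eq, sum_const, card_univ, nsmul_eq_mul]
    exact mul_inv_cancel₀ hn.ne'
  have inv_prod : ∏ i, (n * w i)⁻¹ ^ w i = (∏ i, (n * w i) ^ w i)⁻¹ := by
    rw [← prod_inv_distrib]
    exact prod_congr rfl fun i _ => Real.inv_rpow (hnw i).le _
  rwa [inv_prod, mean_eq, inv_le_one₀ (prod_pos fun i _ => Real.rpow_pos_of_pos (hnw i) _)]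
    at amgm

theorem le_prod_card_mul_mul_rpow_self (hw : ∀ i, 0 < w i) (hw1 : ∑ i, w i = 1) {ε : ℝ}
    (hε : 0 ≤ ε) : ε ≤ ∏ i, (Fintype.card ι * w i * ε) ^ w i := by
  have hnw : ∀ i, 0 ≤ (Fintype.card ι : ℝ) * w i := fun i => by positivity [(hw i).le]
  calc ε = 1 * ε ^ ∑ i, w i := by rw [hw1, Real.rpow_one, one_mul]
    _ ≤ (∏ i, (Fintype.card ι * w i) ^ w i) * ε ^ ∑ i, w i := by
      gcongr
      exact one_le_prod_card_mul_rpow_self hw hw1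
    _ = ∏ i, (Fintype.card ι * w i * ε) ^ w i := by
      rw [Real.rpow_sum_of_nonneg hε fun i _ => (hw i).le, ← prod_mul_distrib]
      exact prod_congr rfl fun i _ => (Real.mul_rpow (hnw i) hε).symm

end Weights

section Sublevel

variable {ι X R : Type*} [Fintype ι] [Nonempty ι]
  [SeminormedCommRing R] [NormMulClass R] [NormOneClass R]

theorem setOf_norm_prod_le_subset_iUnion (f : ι → X → R) {a : ι → ℝ} (ha : ∀ i, 0 < a i)
    {ε : ℝ} (hε : ε ≤ ∏ i, a i) :
    {x | ‖∏ i, f i x‖ ≤ ε} ⊆ ⋃ i, {x | ‖f i x‖ ≤ a i} := by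
  intro x hx
  by_contra hnot
  simp only [Set.mem_iUnion, Set.mem_ofPred_eq, not_exists, not_le] at hnot
  have : ∏ i, a i < ‖∏ i, f i x‖ := by
    rw [norm_prod]
    exact prod_lt_prod_of_nonempty (fun i _ => ha i) (fun i _ => hnot i) univ_nonempty
  exact (hx.trans hε).not_gt this

theorem measure_setOf_norm_prod_le_sum [MeasurableSpace X] (μ : Measure X) (f : ι → X → R)
    {a : ι → ℝ} (ha : ∀ i, 0 < a i) {ε : ℝ} (hε : ε ≤ ∏ i, a i) :
    μ {x | ‖∏ i, f i x‖ ≤ ε} ≤ ∑ i, μ {x | ‖f i x‖ ≤ a i} :=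
  (measure_mono (setOf_norm_prod_le_subset_iUnion f ha hε)).trans
    (measure_iUnion_fintype_le μ _)

theorem measure_setOf_norm_prod_le_of_weights [MeasurableSpace X] (μ : Measure X)
    (f : ι → X → R) {C δ w : ι → ℝ} (hC : ∀ i, 0 ≤ C i) (hw : ∀ i, 0 < w i)
    (hw1 : ∑ i, w i = 1)
    (hsub : ∀ i, ∀ ε : ℝ, 0 < ε → μ {x | ‖f i x‖ ≤ ε} ≤ ENNReal.ofReal (C i * ε ^ δ i))
    {ε : ℝ} (hε : 0 < ε) :
    μ {x | ‖∏ i, f i x‖ ≤ ε} ≤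
      ENNReal.ofReal (∑ i, C i * (Fintype.card ι * w i * ε) ^ (w i * δ i)) := by
  set a : ι → ℝ := fun i => (Fintype.card ι * w i * ε) ^ w i
  have hbase : ∀ i, 0 < (Fintype.card ι : ℝ) * w i * ε := fun i =>
    mul_pos (mul_pos (Nat.cast_pos.2 Fintype.card_pos) (hw i)) hε
  have ha : ∀ i, 0 < a i := fun i => Real.rpow_pos_of_pos (hbase i) _
  calc μ {x | ‖∏ i, f i x‖ ≤ ε}
      ≤ ∑ i, μ {x | ‖f i x‖ ≤ a i} :=
        measure_setOf_norm_prod_le_sum μ f ha (le_prod_card_mul_mul_rpow_self hw hw1 hε.le)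
    _ ≤ ∑ i, ENNReal.ofReal (C i * a i ^ δ i) := sum_le_sum fun i _ => hsub i _ (ha i)
    _ = ENNReal.ofReal (∑ i, C i * a i ^ δ i) :=
        (ENNReal.ofReal_sum_of_nonneg fun i _ =>
          mul_nonneg (hC i) (Real.rpow_nonneg (ha i).le _)).symm
    _ = ENNReal.ofReal (∑ i, C i * (Fintype.card ι * w i * ε) ^ (w i * δ i)) := by
        simp only [a, ← Real.rpow_mul (hbase _).le]

end Sublevel

theorem stmt_9_general (X : Type*) [MeasurableSpace X] (μ : Measure X)
    (k : ℕ) (hk : 1 ≤ k) (f : Fin k → X → ℂ)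
    (C₀ δ₀ : Fin k → ℝ) (hC : ∀ i, 0 < C₀ i) (hδ : ∀ i, 0 < δ₀ i)
    (hsub : ∀ i, ∀ ε : ℝ, 0 < ε →
      μ {x : X | ‖f i x‖ ≤ ε} ≤ ENNReal.ofReal (C₀ i * ε ^ δ₀ i)) :
    ∀ ε : ℝ, 0 < ε →
      μ {x : X | ‖∏ i, f i x‖ ≤ ε} ≤
        ENNReal.ofReal
          ((∑ i, C₀ i * ((k : ℝ) * (∑ j, (δ₀ j)⁻¹)⁻¹ / δ₀ i) ^ (∑ j, (δ₀ j)⁻¹)⁻¹) *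
            ε ^ (∑ j, (δ₀ j)⁻¹)⁻¹) := by
  intro ε hε
  have : Nonempty (Fin k) := ⟨⟨0, hk⟩⟩
  set δ : ℝ := (∑ j, (δ₀ j)⁻¹)⁻¹
  have hδpos : 0 < δ := inv_pos.2 (sum_pos (fun j _ => inv_pos.2 (hδ j)) univ_nonempty)
  have hw1 : ∑ i, δ / δ₀ i = 1 := by
    simp only [div_eq_mul_inv, ← mul_sum, δ]
    exact inv_mul_cancel₀ (inv_pos.1 hδpos).ne'
  have key := measure_setOf_norm_prod_le_of_weights μ f (fun i => (hC i).le)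
    (fun i => div_pos hδpos (hδ i)) hw1 hsub hε
  convert key using 2
  rw [sum_mul]
  refine sum_congr rfl fun i _ => ?_
  rw [div_mul_cancel₀ _ (hδ i).ne', Fintype.card_fin, mul_assoc, mul_div_assoc,
    Real.mul_rpow (by positivity [(hδ i).le]) hε.le]

/-- If the measurable functions `f_i : X → ℂ` satisfy the sublevel set
estimates `μ {x : |f_i(x)| ≤ ε} ≤ C_i ε^{δ_i}` with `C_i, δ_i > 0`, then with
`δ := (Σ δ_i⁻¹)⁻¹` and `C := Σ C_i (k δ / δ_i)^δ`, for every `ε > 0`,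
`μ {x : |f_1 ⋯ f_k(x)| ≤ ε} ≤ C ε^δ`. -/
theorem stmt_9 (X : Type*) [MeasurableSpace X] (μ : Measure X)
    (k : ℕ) (hk : 1 ≤ k) (f : Fin k → X → ℂ) (hf : ∀ i, Measurable (f i))
    (C₀ δ₀ : Fin k → ℝ) (hC : ∀ i, 0 < C₀ i) (hδ : ∀ i, 0 < δ₀ i)
    (hsub : ∀ i, ∀ ε : ℝ, 0 < ε →
      μ {x : X | ‖f i x‖ ≤ ε} ≤ ENNReal.ofReal (C₀ i * ε ^ δ₀ i)) :
    ∀ ε : ℝ, 0 < ε →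
      μ {x : X | ‖∏ i, f i x‖ ≤ ε} ≤
        ENNReal.ofReal
          ((∑ i, C₀ i * ((k : ℝ) * (∑ j, (δ₀ j)⁻¹)⁻¹ / δ₀ i) ^ (∑ j, (δ₀ j)⁻¹)⁻¹) *
            ε ^ (∑ j, (δ₀ j)⁻¹)⁻¹) :=
  stmt_9_general X μ k hk f C₀ δ₀ hC hδ hsub
end

section
/- For every integer d ≥ 1 there is a constant B_d, depending only on d, with the following property: if P(x) = a_d x^d + a_{d−1} x^{d−1} + … + a_1 x + a_0 is a real semi-non-degenerating (SND) polynomial and 0 < ε < 1, then {x ∈ ℝ : |P(x)| ≤ ε^d} ⊆ ⋃_j {x ∈ ℝ : |x − z_j| ≤ B_d ε}, where the union is over the (possibly complex) roots z_j of P and |x − z_j| denotes the complex modulus. -/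
/-!
Over `ℂ` write `P = c ∏ (X - z)` and put `m = d - j`, so that `1 ≤ |a_m|` and `d ≤ 2m`.
Mahler's coefficient bound applied to `P(ρX)` gives `ρ^m ≤ 2^d c ∏ max(ρ, |z|)` for every
`ρ > 0`, and since all coefficients are at most `1`, the Mahler measure `c ∏ max(1, |z|)` is at
most `d + 1`. Let `x` be at distance at least `Bε` from every root, `B = 8^(d+1)`.
If `|x| ≤ B/2`, then `|x - z| ≥ (ε/2) max(B, |z|)` for every root, and the first estimate with
`ρ = B` gives `|P(x)| ≥ ε^d B^m / 4^d > ε^d`.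
If `|x| > B/2`, put `ρ = |x|/2`: roots in the disc of radius `ρ` are at distance at least `ρ`
from `x`, the others at distance at least `(Bε/6ρ)|z|`. Comparing the two estimates shows that at
most `m` roots lie outside the disc, whence `|P(x)| ≥ (Bε/6)^m / 2^d > ε^d`.
-/

/-- A real polynomial `P = a_d x^d + … + a_0`, viewed as having formal degree `d`
(so `P.natDegree ≤ d`), is semi-non-degenerating (SND) relative to `d` if
`max_j |a_{d-j}| = 1` and this maximum is attained by some `j` with `j ≤ d/2`. -/
def IsSNDOfDegree (d : ℕ) (P : Polynomial ℝ) : Prop :=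
  P.natDegree ≤ d ∧ (∀ i, |P.coeff i| ≤ 1) ∧ ∃ j, 2 * j ≤ d ∧ |P.coeff (d - j)| = 1

open Polynomial

theorem Multiset.prod_map_ite_const {α M : Type*} [CommMonoid M] (s : Multiset α) (q : α → Prop)
    [DecidablePred q] (a b : M) :
    (s.map fun x => if q x then a else b).prod = a ^ s.countP q * b ^ s.countP (¬ q ·) := by
  induction s using Multiset.induction_on with
  | empty => simp
  | cons x s ih => by_cases h : q x <;> simp [h, ih, pow_succ', mul_assoc, mul_left_comm]

section NormEstimates

variable {E : Type*} [SeminormedAddCommGroup E] {x z : E}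

theorem half_mul_max_le_norm_sub {ρ ε : ℝ} (hx : 2 * ‖x‖ ≤ ρ) (hε0 : 0 ≤ ε) (hε1 : ε ≤ 1)
    (hz : ρ * ε ≤ ‖x - z‖) : ε / 2 * max ρ ‖z‖ ≤ ‖x - z‖ := by
  have htri : ‖z‖ - ‖x‖ ≤ ‖x - z‖ := norm_sub_rev z x ▸ norm_sub_norm_le z x
  rcases le_total ‖z‖ ρ with h | h
  · rw [max_eq_left h]
    nlinarith [norm_nonneg x]
  · rw [max_eq_right h]
    nlinarith [norm_nonneg z]

theorem ite_mul_max_le_norm_sub {ρ a : ℝ} (hρ : 0 < ρ) (hx : ‖x‖ = 2 * ρ) (ha : a ≤ 4 * ρ)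
    (hz : a ≤ ‖x - z‖) : (if ρ < ‖z‖ then a / (6 * ρ) else 1) * max ρ ‖z‖ ≤ ‖x - z‖ := by
  split_ifs with h
  · -- `a ‖z‖ ≤ a (‖x - z‖ + ‖x‖) ≤ 4ρ ‖x - z‖ + 2ρ ‖x - z‖`
    have htri : ‖z‖ - ‖x‖ ≤ ‖x - z‖ := norm_sub_rev z x ▸ norm_sub_norm_le z x
    rw [max_eq_right h.le, div_mul_eq_mul_div, div_le_iff₀ (by positivity)]
    rcases le_total 0 a with ha0 | ha0
    · nlinarith [norm_nonneg (x - z)]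
    · nlinarith [norm_nonneg (x - z), norm_nonneg z]
  · have htri : ‖x‖ - ‖z‖ ≤ ‖x - z‖ := norm_sub_norm_le x z
    rw [one_mul, max_eq_left (not_lt.1 h)]
    linarith

end NormEstimates

namespace Polynomial

theorem norm_eval_eq_norm_leadingCoeff_mul_prod_roots (p : ℂ[X]) (x : ℂ) :
    ‖p.eval x‖ = ‖p.leadingCoeff‖ * (p.roots.map fun z => ‖x - z‖).prod := by
  rw [(IsAlgClosed.splits p).eval_eq_prod_roots, norm_mul]
  exact congrArg _ (Multiset.prod_hom' p.roots (normHom : ℂ →*₀ ℝ) (x - ·)).symm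

theorem mahlerMeasure_le_natDegree_add_one {p : ℂ[X]} (hp : ∀ i, ‖p.coeff i‖ ≤ 1) :
    p.mahlerMeasure ≤ p.natDegree + 1 := by
  calc p.mahlerMeasure ≤ p.sum fun _ a => ‖a‖ := mahlerMeasure_le_sum_norm_coeff p
    _ ≤ ∑ _i ∈ p.support, (1 : ℝ) := by rw [sum_def]; exact Finset.sum_le_sum fun i _ => hp i
    _ ≤ p.natDegree + 1 := by
        simpa using (Nat.cast_le (α := ℝ)).2 (card_supp_le_succ_natDegree p)

/-- `norm_coeff_le_choose_mul_mahlerMeasure` at scale `ρ`, i.e. for `p.scaleRoots ρ⁻¹`. -/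
theorem norm_coeff_mul_pow_le (p : ℂ[X]) {ρ : ℝ} (hρ : 0 < ρ) (i : ℕ) :
    ‖p.coeff i‖ * ρ ^ i ≤
      p.natDegree.choose i * (‖p.leadingCoeff‖ * (p.roots.map fun z => max ρ ‖z‖).prod) := by
  rcases lt_or_ge p.natDegree i with hi | hi
  · simp [coeff_eq_zero_of_natDegree_lt hi, Nat.choose_eq_zero_of_lt hi]
  have hρ' : (ρ⁻¹ : ℂ) ≠ 0 := by exact_mod_cast (inv_pos.2 hρ).ne'
  have key := norm_coeff_le_choose_mul_mahlerMeasure i (p.scaleRoots (ρ⁻¹ : ℂ))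
  rw [mahlerMeasure_eq_leadingCoeff_mul_prod_roots, roots_scaleRoots _ (isUnit_iff_ne_zero.2 hρ'),
    coeff_scaleRoots, natDegree_scaleRoots, leadingCoeff_scaleRoots, Multiset.map_map] at key
  simp only [Function.comp_def, norm_mul, norm_pow, norm_inv, Complex.norm_real,
    Real.norm_eq_abs, abs_of_pos hρ] at key
  have hprod : (p.roots.map fun z => max ρ ‖z‖).prod =
      ρ ^ p.natDegree * (p.roots.map fun z => max 1 (ρ⁻¹ * ‖z‖)).prod := by
    rw [← splits_iff_card_roots.1 (IsAlgClosed.splits p), ← Multiset.prod_replicate,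
      ← Multiset.map_const', ← Multiset.prod_map_mul]
    refine congrArg _ (Multiset.map_congr rfl fun z _ => ?_)
    rw [mul_max_of_nonneg _ _ hρ.le]
    field_simp
  have hn : ρ ^ p.natDegree = ρ ^ (p.natDegree - i) * ρ ^ i := by
    rw [← pow_add, Nat.sub_add_cancel hi]
  calc ‖p.coeff i‖ * ρ ^ i = ‖p.coeff i‖ * ρ⁻¹ ^ (p.natDegree - i) * ρ ^ p.natDegree := by
        rw [hn, inv_pow]; field_simp
    _ ≤ _ := mul_le_mul_of_nonneg_right key (by positivity)
    _ = _ := by rw [hprod]; ring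

theorem prod_max_le_pow_countP_mul_prod_max_one (s : Multiset ℂ) {ρ : ℝ} (hρ : 1 ≤ ρ) :
    (s.map fun z => max ρ ‖z‖).prod ≤
      ρ ^ s.countP (fun z => ¬ ρ < ‖z‖) * (s.map fun z => max 1 ‖z‖).prod := by
  have hite := Multiset.prod_map_ite_const s (fun z => ρ < ‖z‖) (1 : ℝ) ρ
  rw [one_pow, one_mul] at hite
  rw [← hite, ← Multiset.prod_map_mul]
  refine Multiset.prod_map_le_prod_map₀ _ _ (fun z _ => by positivity) fun z _ => ?_
  split_ifs with h
  · rw [one_mul, max_eq_right h.le]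
    exact le_max_right _ _
  · rw [max_eq_left (not_lt.1 h)]
    exact le_mul_of_one_le_right (by linarith) (le_max_left _ _)

variable {p : ℂ[X]} {d m : ℕ}

theorem pow_le_two_pow_mul_prod_max (hn : p.natDegree ≤ d) (hcm : 1 ≤ ‖p.coeff m‖) {ρ : ℝ}
    (hρ : 0 < ρ) :
    ρ ^ m ≤ 2 ^ d * (‖p.leadingCoeff‖ * (p.roots.map fun z => max ρ ‖z‖).prod) := by
  have hchoose : (p.natDegree.choose m : ℝ) ≤ 2 ^ d := by
    calc (p.natDegree.choose m : ℝ) ≤ 2 ^ p.natDegree := by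
          exact_mod_cast Nat.choose_le_two_pow _ _
      _ ≤ 2 ^ d := pow_le_pow_right₀ one_le_two hn
  have hQ : 0 ≤ (p.roots.map fun z => max ρ ‖z‖).prod :=
    Multiset.prod_map_nonneg fun z _ => by positivity
  calc ρ ^ m ≤ ‖p.coeff m‖ * ρ ^ m := le_mul_of_one_le_left (by positivity) hcm
    _ ≤ _ := norm_coeff_mul_pow_le p hρ m
    _ ≤ _ := by gcongr

theorem pow_mul_pow_le_four_pow_mul_norm_eval (hn : p.natDegree ≤ d) (hcm : 1 ≤ ‖p.coeff m‖)
    {ρ ε : ℝ} {x : ℂ} (hρ : 0 < ρ) (hx : 2 * ‖x‖ ≤ ρ) (hε0 : 0 ≤ ε) (hε1 : ε ≤ 1)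
    (hroots : ∀ z ∈ p.roots, ρ * ε ≤ ‖x - z‖) :
    ε ^ d * ρ ^ m ≤ 4 ^ d * ‖p.eval x‖ := by
  set c := ‖p.leadingCoeff‖
  set Q := (p.roots.map fun z => max ρ ‖z‖).prod
  have hQ : 0 ≤ Q := Multiset.prod_map_nonneg fun z _ => by positivity
  have hprod : (ε / 2) ^ p.natDegree * Q ≤ (p.roots.map fun z => ‖x - z‖).prod := by
    rw [← splits_iff_card_roots.1 (IsAlgClosed.splits p), ← Multiset.prod_replicate,
      ← Multiset.map_const', ← Multiset.prod_map_mul]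
    exact Multiset.prod_map_le_prod_map₀ _ _ (fun z _ => by positivity)
      fun z hz => half_mul_max_le_norm_sub hx hε0 hε1 (hroots z hz)
  calc ε ^ d * ρ ^ m ≤ ε ^ p.natDegree * (2 ^ d * (c * Q)) :=
        mul_le_mul (pow_le_pow_of_le_one hε0 hε1 hn) (pow_le_two_pow_mul_prod_max hn hcm hρ)
          (by positivity) (by positivity)
    _ = 2 ^ d * 2 ^ p.natDegree * (c * ((ε / 2) ^ p.natDegree * Q)) := by
        rw [div_pow]; field_simp
    _ ≤ 2 ^ d * 2 ^ d * (c * (p.roots.map fun z => ‖x - z‖).prod) := by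
        gcongr 2 ^ d * ?_ * (_ * ?_)
        exact pow_le_pow_right₀ (by norm_num) hn
    _ = 4 ^ d * ‖p.eval x‖ := by
        rw [norm_eval_eq_norm_leadingCoeff_mul_prod_roots, ← mul_pow]
        norm_num [c]

theorem div_six_pow_le_two_pow_mul_norm_eval (hn : p.natDegree ≤ d) (hdm : d ≤ 2 * m)
    (hcm : 1 ≤ ‖p.coeff m‖) (hM : p.mahlerMeasure ≤ d + 1) {ρ a : ℝ} {x : ℂ}
    (hρ : 2 ^ d * (d + 1) < ρ) (hx : ‖x‖ = 2 * ρ) (ha0 : 0 ≤ a) (ha : a ≤ 4 * ρ)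
    (hroots : ∀ z ∈ p.roots, a ≤ ‖x - z‖) :
    (a / 6) ^ m ≤ 2 ^ d * ‖p.eval x‖ := by
  set c := ‖p.leadingCoeff‖
  set Q := (p.roots.map fun z => max ρ ‖z‖).prod
  set f := p.roots.countP fun z => ρ < ‖z‖
  set g := p.roots.countP fun z => ¬ ρ < ‖z‖
  set κ := a / (6 * ρ) with hκ
  have hρ1 : 1 ≤ ρ := by
    have : (1 : ℝ) ≤ 2 ^ d * (d + 1) := one_le_mul_of_one_le_of_one_le (one_le_pow₀ one_le_two)
      (by linarith [(Nat.cast_nonneg d : (0 : ℝ) ≤ d)])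
    linarith
  have hQ : 0 ≤ Q := Multiset.prod_map_nonneg fun z _ => by positivity
  have hfg : f + g = p.natDegree := by
    rw [← Multiset.card_eq_countP_add_countP, splits_iff_card_roots.1 (IsAlgClosed.splits p)]
  have hlower : ρ ^ m ≤ 2 ^ d * (c * Q) := pow_le_two_pow_mul_prod_max hn hcm (by linarith)
  have hupper : c * Q ≤ (d + 1) * ρ ^ g := by
    calc c * Q ≤ c * (ρ ^ g * (p.roots.map fun z => max 1 ‖z‖).prod) :=
          mul_le_mul_of_nonneg_left (prod_max_le_pow_countP_mul_prod_max_one _ hρ1) (norm_nonneg _)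
      _ = ρ ^ g * p.mahlerMeasure := by rw [mahlerMeasure_eq_leadingCoeff_mul_prod_roots]; ring
      _ ≤ ρ ^ g * (d + 1) := by gcongr
      _ = (d + 1) * ρ ^ g := mul_comm _ _
  -- The SND coefficient allows at most `p.natDegree - m` roots outside the disc of radius `ρ`.
  have hgm : m ≤ g := by
    by_contra! hlt
    have h1 : ρ * ρ ^ g ≤ ρ ^ m := by rw [← pow_succ']; exact pow_le_pow_right₀ hρ1 hlt
    have h2 := mul_lt_mul_of_pos_right hρ (pow_pos (by linarith : (0 : ℝ) < ρ) g)
    have h3 := mul_le_mul_of_nonneg_left hupper (by positivity : (0 : ℝ) ≤ 2 ^ d)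
    nlinarith
  have hfm : f ≤ m := by omega
  have hprod : κ ^ f * Q ≤ (p.roots.map fun z => ‖x - z‖).prod := by
    have hite := Multiset.prod_map_ite_const p.roots (fun z => ρ < ‖z‖) κ (1 : ℝ)
    rw [one_pow, mul_one] at hite
    rw [← hite, ← Multiset.prod_map_mul]
    refine Multiset.prod_map_le_prod_map₀ _ _ (fun z _ => ?_)
      fun z hz => ite_mul_max_le_norm_sub (by linarith) hx ha (hroots z hz)
    split_ifs <;> positivity
  have hκ1 : κ ≤ 1 := by rw [div_le_one (by linarith)]; linarith
  calc (a / 6) ^ m = κ ^ m * ρ ^ m := by rw [← mul_pow, hκ]; field_simp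
    _ ≤ κ ^ f * (2 ^ d * (c * Q)) :=
        mul_le_mul (pow_le_pow_of_le_one (by positivity) hκ1 hfm) hlower (by positivity)
          (by positivity)
    _ = 2 ^ d * (c * (κ ^ f * Q)) := by ring
    _ ≤ 2 ^ d * (c * (p.roots.map fun z => ‖x - z‖).prod) := by gcongr
    _ = 2 ^ d * ‖p.eval x‖ := by rw [norm_eval_eq_norm_leadingCoeff_mul_prod_roots]

theorem exists_mem_roots_norm_sub_lt (hn : p.natDegree ≤ d) (hcoeff : ∀ i, ‖p.coeff i‖ ≤ 1)
    (hm : 0 < m) (hdm : d ≤ 2 * m) (hcm : 1 ≤ ‖p.coeff m‖) {ε : ℝ} (hε0 : 0 < ε) (hε1 : ε ≤ 1)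
    {x : ℂ} (hx : ‖p.eval x‖ ≤ ε ^ d) : ∃ z ∈ p.roots, ‖x - z‖ < 8 ^ (d + 1) * ε := by
  by_contra! hroots
  set B : ℝ := 8 ^ (d + 1)
  have hmd : m ≤ d := (le_natDegree_of_ne_zero (norm_pos_iff.1 (one_pos.trans_le hcm))).trans hn
  have hB8 : B = 8 * 8 ^ d := pow_succ' 8 d
  have h1 : (1 : ℝ) ≤ 8 ^ d := one_le_pow₀ (by norm_num)
  have h4 : (4 : ℝ) ^ d ≤ 8 ^ d := pow_le_pow_left₀ (by norm_num) (by norm_num) d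
  have hεd : 0 < ε ^ d := pow_pos hε0 d
  rcases le_or_gt (2 * ‖x‖) B with hxB | hxB
  · have key := pow_mul_pow_le_four_pow_mul_norm_eval hn hcm (by positivity) hxB hε0.le hε1 hroots
    have hBm : 4 ^ d < B ^ m :=
      (h4.trans_lt (by linarith)).trans_le (le_self_pow₀ (by linarith) hm.ne')
    nlinarith [mul_lt_mul_of_pos_left hBm hεd,
      mul_le_mul_of_nonneg_left hx (by positivity : (0 : ℝ) ≤ 4 ^ d)]
  · have hd : (2 : ℝ) ^ d * (d + 1) ≤ 8 ^ d := by
      calc (2 : ℝ) ^ d * (d + 1) ≤ 2 ^ d * 2 ^ d := by gcongr; exact_mod_cast Nat.lt_two_pow_self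
        _ = 4 ^ d := by rw [← mul_pow]; norm_num
        _ ≤ 8 ^ d := h4
    have key := div_six_pow_le_two_pow_mul_norm_eval hn hdm hcm
      ((mahlerMeasure_le_natDegree_add_one hcoeff).trans (by exact_mod_cast Nat.succ_le_succ hn))
      (ρ := ‖x‖ / 2) (a := B * ε) (by linarith) (by ring) (by positivity) (by nlinarith) hroots
    have hBm : B / 6 * ε ^ d ≤ (B * ε / 6) ^ m := by
      rw [mul_div_right_comm, mul_pow]
      exact mul_le_mul (le_self_pow₀ (by linarith) hm.ne') (pow_le_pow_of_le_one hε0.le hε1 hmd)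
        hεd.le (by positivity)
    have h2B : (2 : ℝ) ^ d < B / 6 :=
      (pow_le_pow_left₀ (by norm_num) (by norm_num : (2 : ℝ) ≤ 8) d).trans_lt (by linarith)
    nlinarith [mul_lt_mul_of_pos_right h2B hεd,
      mul_le_mul_of_nonneg_left hx (by positivity : (0 : ℝ) ≤ 2 ^ d)]

end Polynomial

/-- For every `d ≥ 1` there is a constant `B_d` depending only on `d`
such that for every real SND polynomial `P = a_d x^d + … + a_0` and every `0 < ε < 1`,
`{x ∈ ℝ : |P(x)| ≤ ε^d} ⊆ ⋃_j {x ∈ ℝ : |x - z_j| ≤ B_d ε}`, the union being over the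
(possibly complex) roots `z_j` of `P`. -/
theorem stmt_11 (d : ℕ) (hd : 1 ≤ d) :
    ∃ B : ℝ, 0 < B ∧
      ∀ P : Polynomial ℝ, IsSNDOfDegree d P →
      ∀ ε : ℝ, 0 < ε → ε < 1 →
      ∀ x : ℝ, |P.eval x| ≤ ε ^ d →
        ∃ z ∈ (P.map (Complex.ofRealHom : ℝ →+* ℂ)).roots,
          ‖(x : ℂ) - z‖ ≤ B * ε := by
  refine ⟨8 ^ (d + 1), by positivity, fun P ⟨hdeg, hcoeff, j, hj, hPj⟩ ε hε0 hε1 x hx => ?_⟩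
  have hcoeff' (i : ℕ) : ‖(P.map Complex.ofRealHom).coeff i‖ = |P.coeff i| := by simp
  have heval : ‖(P.map Complex.ofRealHom).eval (x : ℂ)‖ = |P.eval x| := by
    rw [eval_map, ← Complex.ofRealHom_eq_coe, eval₂_at_apply, Complex.ofRealHom_eq_coe,
      Complex.norm_real, Real.norm_eq_abs]
  obtain ⟨z, hz, hlt⟩ := exists_mem_roots_norm_sub_lt (m := d - j) (by rwa [natDegree_map])
    (fun i => (hcoeff' i).trans_le (hcoeff i)) (by omega) (by omega) (by rw [hcoeff', hPj])
    hε0 hε1.le (heval.trans_le hx)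
  exact ⟨z, hz, hlt.le⟩
end

section
/- Let I = [a, b] be a compact interval, let r > 0, let 0 < δ < 1 and B > 0, and let f : I → ℝ be differentiable with |f′(x)| ≤ r for all x ∈ I. Suppose that for every α > 0 and every c ∈ ℝ, the Lebesgue measure of {x ∈ I : |f(x) − c| ≤ α} is at most B α^δ. Then the length of I satisfies |I| ≤ (B / 2^δ)^{1/(1−δ)} · r^{δ/(1−δ)}. -/
/-! On `[a, b]` the function `f` stays within `r (b - a) / 2` of its value at the midpoint, so for
`c = f ((a + b) / 2)` and `α = r (b - a) / 2` the sublevel set is the whole interval. Hence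
`b - a ≤ B (r (b - a) / 2)^δ`, and since `δ < 1` this can be solved for `b - a`. -/

open MeasureTheory Set

lemma le_rpow_of_le_mul_rpow {L C δ : ℝ} (hL : 0 < L) (hδ : δ < 1) (h : L ≤ C * L ^ δ) :
    L ≤ C ^ (1 / (1 - δ)) := by
  have hpow : L ^ (1 - δ) ≤ C := by
    rwa [Real.rpow_sub hL, Real.rpow_one, div_le_iff₀ (Real.rpow_pos_of_pos hL δ)]
  calc L = (L ^ (1 - δ)) ^ (1 / (1 - δ)) := by
        rw [← Real.rpow_mul hL.le, mul_one_div_cancel (sub_pos.mpr hδ).ne', Real.rpow_one]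
    _ ≤ C ^ (1 / (1 - δ)) :=
        Real.rpow_le_rpow (Real.rpow_nonneg hL.le _) hpow (one_div_nonneg.mpr (sub_pos.mpr hδ).le)

lemma abs_sub_midpoint_le {a b r : ℝ} {f f' : ℝ → ℝ}
    (hderiv : ∀ x ∈ Icc a b, HasDerivWithinAt f (f' x) (Icc a b) x)
    (hbound : ∀ x ∈ Icc a b, |f' x| ≤ r) {x : ℝ} (hx : x ∈ Icc a b) :
    |f x - f ((a + b) / 2)| ≤ r * ((b - a) / 2) := by
  have hm : (a + b) / 2 ∈ Icc a b := ⟨by linarith [hx.1, hx.2], by linarith [hx.1, hx.2]⟩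
  have hdist : |x - (a + b) / 2| ≤ (b - a) / 2 :=
    abs_le.mpr ⟨by linarith [hx.1], by linarith [hx.2]⟩
  calc |f x - f ((a + b) / 2)| ≤ r * |x - (a + b) / 2| :=
        (convex_Icc a b).norm_image_sub_le_of_norm_hasDerivWithin_le hderiv hbound hm hx
    _ ≤ r * ((b - a) / 2) := by
        gcongr
        exact (abs_nonneg _).trans (hbound x hx)

lemma rpow_mul_div_rpow {B r δ p : ℝ} (hB : 0 ≤ B) (hr : 0 ≤ r) :
    (B * (r / 2) ^ δ) ^ p = (B / 2 ^ δ) ^ p * r ^ (δ * p) := by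
  rw [Real.div_rpow hr zero_le_two, mul_div_assoc', ← div_mul_eq_mul_div,
    Real.mul_rpow (by positivity) (by positivity), Real.rpow_mul hr]

theorem stmt_12_general (a b r δ B : ℝ) (hr : 0 < r)
    (hδ1 : δ < 1) (hB : 0 < B) (f f' : ℝ → ℝ)
    (hderiv : ∀ x ∈ Set.Icc a b, HasDerivWithinAt f (f' x) (Set.Icc a b) x)
    (hbound : ∀ x ∈ Set.Icc a b, |f' x| ≤ r)
    (hsub : ∀ α : ℝ, 0 < α → ∀ c : ℝ,
      (volume {x ∈ Set.Icc a b | |f x - c| ≤ α}).toReal ≤ B * α ^ δ) :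
    b - a ≤ (B / 2 ^ δ) ^ (1 / (1 - δ)) * r ^ (δ / (1 - δ)) := by
  rcases le_or_gt (b - a) 0 with hL | hL
  · exact hL.trans (by positivity)
  have hsublevel : {x ∈ Icc a b | |f x - f ((a + b) / 2)| ≤ r * ((b - a) / 2)} = Icc a b :=
    sep_eq_self_iff_mem_true.mpr fun x hx => abs_sub_midpoint_le hderiv hbound hx
  have hkey : b - a ≤ B * (r / 2) ^ δ * (b - a) ^ δ := by
    have := hsub (r * ((b - a) / 2)) (by positivity) (f ((a + b) / 2))
    rw [hsublevel, Real.volume_Icc, ENNReal.toReal_ofReal hL.le] at this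
    calc b - a ≤ B * (r * ((b - a) / 2)) ^ δ := this
      _ = B * (r / 2) ^ δ * (b - a) ^ δ := by
        rw [← mul_div_assoc, mul_div_right_comm, Real.mul_rpow (by positivity) hL.le, mul_assoc]
  calc b - a ≤ (B * (r / 2) ^ δ) ^ (1 / (1 - δ)) := le_rpow_of_le_mul_rpow hL hδ1 hkey
    _ = (B / 2 ^ δ) ^ (1 / (1 - δ)) * r ^ (δ / (1 - δ)) := by
        rw [rpow_mul_div_rpow hB.le hr.le, mul_one_div]

/-- Let `I = [a, b]`, `r > 0`, `0 < δ < 1`, `B > 0`, and let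
`f : I → ℝ` be differentiable with `|f'| ≤ r` on `I`. If for every `α > 0` and `c ∈ ℝ`
the Lebesgue measure of `{x ∈ I : |f x - c| ≤ α}` is at most `B α^δ`, then
`|I| = b - a ≤ (B / 2^δ)^{1/(1-δ)} · r^{δ/(1-δ)}`. -/
theorem stmt_12 (a b r δ B : ℝ) (hab : a ≤ b) (hr : 0 < r)
    (hδ0 : 0 < δ) (hδ1 : δ < 1) (hB : 0 < B) (f f' : ℝ → ℝ)
    (hderiv : ∀ x ∈ Set.Icc a b, HasDerivWithinAt f (f' x) (Set.Icc a b) x)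
    (hbound : ∀ x ∈ Set.Icc a b, |f' x| ≤ r)
    (hsub : ∀ α : ℝ, 0 < α → ∀ c : ℝ,
      (volume {x ∈ Set.Icc a b | |f x - c| ≤ α}).toReal ≤ B * α ^ δ) :
    b - a ≤ (B / 2 ^ δ) ^ (1 / (1 - δ)) * r ^ (δ / (1 - δ)) :=
  stmt_12_general a b r δ B hr hδ1 hB f f' hderiv hbound hsub
end

section
/- Let N ≥ 1 and let f be a smooth real-valued function on a compact interval I = [a, b] whose N-th derivative f^{(N)} is single-signed on I. Then for every c ∈ ℝ and every ε > 0, the set {x ∈ I : |f(x) − c| ≤ ε} is a union of at most N intervals. -/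
open Set

private def AltGaps (S : Set ℝ) : ℕ → Prop
  | 0 => S.Nonempty
  | (m+1) => ∃ z, z ∉ S ∧ (S ∩ Set.Iio z).Nonempty ∧ AltGaps (S ∩ Set.Ioi z) m

private lemma altGaps_nonempty {S : Set ℝ} : ∀ {m : ℕ}, AltGaps S m → S.Nonempty
  | 0, h => h
  | (_+1), ⟨_, _, ⟨x, hx⟩, _⟩ => ⟨x, hx.1⟩

private lemma altGaps_glue : ∀ (m₁ : ℕ) {m₂ : ℕ} {S : Set ℝ} {z : ℝ}, z ∉ S →
    AltGaps (S ∩ Iio z) m₁ → AltGaps (S ∩ Ioi z) m₂ → AltGaps S (m₁ + m₂ + 1) := by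
  intro m₁
  induction m₁ with
  | zero =>
    intro m₂ S z hz h1 h2
    exact ⟨z, hz, h1, by simpa using h2⟩
  | succ m₁ ih =>
    intro m₂ S z hz h1 h2
    obtain ⟨z', hz', ⟨x, hx⟩, h1'⟩ := h1
    obtain ⟨w, hw⟩ := altGaps_nonempty h1'
    have hwz : w < z := hw.1.2
    have hz'w : z' < w := hw.2
    have hz'z : z' < z := hz'w.trans hwz
    have hz'S : z' ∉ S := fun h => hz' ⟨h, hz'z⟩
    have e1 : S ∩ Iio z ∩ Ioi z' = (S ∩ Ioi z') ∩ Iio z := by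
      ext t; simp only [mem_inter_iff, mem_Iio, mem_Ioi]; tauto
    have e2 : (S ∩ Ioi z') ∩ Ioi z = S ∩ Ioi z := by
      ext t; simp only [mem_inter_iff, mem_Ioi]
      exact ⟨fun h => ⟨h.1.1, h.2⟩, fun h => ⟨⟨h.1, hz'z.trans h.2⟩, h.2⟩⟩
    have key : AltGaps (S ∩ Ioi z') (m₁ + m₂ + 1) :=
      ih (fun h => hz h.1 : z ∉ S ∩ Ioi z') (e1 ▸ h1') (e2.symm ▸ h2)
    have : AltGaps S ((m₁ + m₂ + 1) + 1) := ⟨z', hz'S, ⟨x, hx.1.1, hx.2⟩, key⟩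
    rw [show m₁ + 1 + m₂ + 1 = (m₁ + m₂ + 1) + 1 by omega]
    exact this

private lemma altGaps_cover : ∀ (m : ℕ) (S : Set ℝ), ¬ AltGaps S m →
    ∃ t : Fin m → Set ℝ, (∀ i, (t i).OrdConnected) ∧ S = ⋃ i, t i := by
  intro m
  induction m using Nat.strong_induction_on with
  | _ m IH =>
  intro S hS
  match m with
  | 0 =>
    refine ⟨fun i => i.elim0, fun i => i.elim0, ?_⟩
    have : S = ∅ := not_nonempty_iff_eq_empty.1 hS
    simp [this]
  | (n+1) =>
    by_cases hoc : S.OrdConnected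
    · exact ⟨fun _ => S, fun _ => hoc, by simp [Set.iUnion_const]⟩
    · rw [Set.ordConnected_iff] at hoc
      push_neg at hoc
      obtain ⟨x, hx, y, hy, hxy, hnot⟩ := hoc
      obtain ⟨z, hzI, hzS⟩ := not_subset.1 hnot
      have hxz : x < z := lt_of_le_of_ne hzI.1 (fun h => hzS (h ▸ hx))
      have hzy : z < y := lt_of_le_of_ne hzI.2 (fun h => hzS (h.symm ▸ hy))
      classical
      set S₁ := S ∩ Iio z with hS₁
      set S₂ := S ∩ Ioi z with hS₂
      have h10 : AltGaps S₁ 0 := ⟨x, hx, hxz⟩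
      have h20 : AltGaps S₂ 0 := ⟨y, hy, hzy⟩
      set m₁ := Nat.findGreatest (AltGaps S₁) n with hm₁
      have hm₁le : m₁ ≤ n := Nat.findGreatest_le n
      have h1 : AltGaps S₁ m₁ := Nat.findGreatest_spec (Nat.zero_le n) h10
      have hm₁lt : m₁ < n := by
        rcases lt_or_eq_of_le hm₁le with h | h
        · exact h
        · exact absurd (by
            have := altGaps_glue m₁ hzS h1 h20
            rw [show m₁ + 0 + 1 = n + 1 by omega] at this
            exact this : AltGaps S (n+1)) hS
      have h1n : ¬ AltGaps S₁ (m₁ + 1) :=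
        Nat.findGreatest_is_greatest (Nat.lt_succ_self m₁) hm₁lt
      have h2n : ¬ AltGaps S₂ (n - m₁) := by
        intro h2
        have := altGaps_glue m₁ hzS h1 h2
        rw [show m₁ + (n - m₁) + 1 = n + 1 by omega] at this
        exact hS this
      obtain ⟨t₁, ht₁o, ht₁⟩ := IH (m₁+1) (by omega) S₁ h1n
      obtain ⟨t₂, ht₂o, ht₂⟩ := IH (n - m₁) (by omega) S₂ h2n
      refine ⟨fun i => if h : (i : ℕ) < m₁ + 1 then t₁ ⟨i, h⟩
        else t₂ ⟨(i : ℕ) - (m₁+1), by omega⟩, fun i => ?_, ?_⟩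
      · dsimp only; split
        · exact ht₁o _
        · exact ht₂o _
      · have hSu : S = S₁ ∪ S₂ := by
          ext t; simp only [hS₁, hS₂, mem_union, mem_inter_iff, mem_Iio, mem_Ioi]
          constructor
          · intro h
            rcases lt_trichotomy t z with h' | h' | h'
            · exact Or.inl ⟨h, h'⟩
            · exact absurd (h' ▸ h) hzS
            · exact Or.inr ⟨h, h'⟩
          · tauto
        ext w
        simp only [hSu, mem_union, ht₁, ht₂, mem_iUnion]
        constructor
        · rintro (⟨j, hj⟩ | ⟨j, hj⟩)
          · exact ⟨⟨j, by omega⟩, by simp [j.isLt, hj]⟩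
          · refine ⟨⟨m₁ + 1 + j, by omega⟩, ?_⟩
            rw [dif_neg (by simp; omega)]
            simpa using hj
        · rintro ⟨i, hi⟩
          by_cases h : (i : ℕ) < m₁ + 1
          · rw [dif_pos h] at hi; exact Or.inl ⟨_, hi⟩
          · rw [dif_neg h] at hi; exact Or.inr ⟨_, hi⟩

private def AltPack (a b : ℝ) (G : ℝ → ℝ) (m : ℕ) : Prop :=
  ∃ (s : ℝ) (u : ℕ → ℝ), (s = 1 ∨ s = -1) ∧ (∀ i ≤ m, u i ∈ Set.Ioo a b) ∧
    (∀ i, i + 1 ≤ m → u i < u (i+1)) ∧ (∀ i ≤ m, 0 < s * (-1)^i * G (u i))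

private lemma hder_main {a b : ℝ} (hab : a < b) {f : ℝ → ℝ}
    (hf : ContDiffOn ℝ (⊤ : ℕ∞) f (Set.Icc a b)) :
    ∀ (k : ℕ), ∀ x ∈ Ioo a b, HasDerivAt (iteratedDerivWithin k f (Icc a b))
      (iteratedDerivWithin (k+1) f (Icc a b) x) x := by
  intro k x hx
  have hdiff : DifferentiableOn ℝ (iteratedDerivWithin k f (Icc a b)) (Icc a b) :=
    hf.differentiableOn_iteratedDerivWithin (by exact_mod_cast WithTop.coe_lt_top _)
      (uniqueDiffOn_Icc hab)
  have hx' : x ∈ Icc a b := Ioo_subset_Icc_self hx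
  have h1 : HasDerivAt (iteratedDerivWithin k f (Icc a b))
      (derivWithin (iteratedDerivWithin k f (Icc a b)) (Icc a b) x) x :=
    ((hdiff x hx').hasDerivWithinAt).hasDerivAt (Icc_mem_nhds hx.1 hx.2)
  rwa [iteratedDerivWithin_succ]

private lemma cascadeStep {a b : ℝ} {G G' : ℝ → ℝ}
    (hg : ∀ x ∈ Ioo a b, HasDerivAt G (G' x) x) {m : ℕ}
    (h : AltPack a b G (m+1)) : AltPack a b G' m := by
  obtain ⟨s, u, hs, hio, hmono, hsgn⟩ := h
  have H : ∀ i, i ≤ m → ∃ w, w ∈ Ioo (u i) (u (i+1)) ∧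
      G' w = (G (u (i+1)) - G (u i)) / (u (i+1) - u i) := by
    intro i hi
    have hui : u i ∈ Ioo a b := hio i (by omega)
    have hui1 : u (i+1) ∈ Ioo a b := hio (i+1) (by omega)
    have hlt : u i < u (i+1) := hmono i (by omega)
    have hsub : Icc (u i) (u (i+1)) ⊆ Ioo a b := fun t ht =>
      ⟨lt_of_lt_of_le hui.1 ht.1, lt_of_le_of_lt ht.2 hui1.2⟩
    have hcont : ContinuousOn G (Icc (u i) (u (i+1))) := fun t ht =>
      ((hg t (hsub ht)).continuousAt).continuousWithinAt
    exact exists_hasDerivAt_eq_slope G G' hlt hcont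
      (fun t ht => hg t (hsub (Ioo_subset_Icc_self ht)))
  choose v hv using H
  refine ⟨-s, fun i => if h : i ≤ m then v i h else 0, ?_, ?_, ?_, ?_⟩
  · rcases hs with h | h <;> simp [h]
  · intro i hi
    dsimp only
    rw [dif_pos hi]
    have := (hv i hi).1
    exact ⟨lt_trans (hio i (by omega)).1 this.1, lt_trans this.2 (hio (i+1) (by omega)).2⟩
  · intro i hi
    dsimp only
    rw [dif_pos (by omega : i ≤ m), dif_pos (by omega : i + 1 ≤ m)]
    exact lt_trans (hv i (by omega)).1.2 (hv (i+1) (by omega)).1.1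
  · intro i hi
    dsimp only
    rw [dif_pos hi, (hv i hi).2]
    have hA := hsgn i (by omega)
    have hB := hsgn (i+1) (by omega)
    have hden : 0 < u (i+1) - u i := sub_pos.2 (hmono i (by omega))
    have hnum : 0 < s * (-1)^(i+1) * (G (u (i+1)) - G (u i)) := by
      have e : (-1:ℝ)^(i+1) = -(-1)^i := by ring
      rw [e] at hB ⊢
      nlinarith [hA, hB]
    have e2 : (-s) * (-1)^i * ((G (u (i+1)) - G (u i)) / (u (i+1) - u i))
        = (s * (-1)^(i+1) * (G (u (i+1)) - G (u i))) / (u (i+1) - u i) := by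
      rw [pow_succ]; ring
    rw [e2]
    exact div_pos hnum hden

private lemma cascade {a b : ℝ} {G : ℕ → ℝ → ℝ}
    (hg : ∀ k, ∀ x ∈ Ioo a b, HasDerivAt (G k) (G (k+1) x) x) :
    ∀ (j k m : ℕ), AltPack a b (G k) (m + j) → AltPack a b (G (k + j)) m := by
  intro j
  induction j with
  | zero => intro k m h; simpa using h
  | succ j ih =>
    intro k m h
    have h1 : AltPack a b (G (k+1)) (m + j) := by
      have := cascadeStep (hg k) (m := m + j) (by
        rw [show m + j + 1 = m + (j+1) by omega]; exact h)
      exact this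
    have := ih (k+1) m h1
    rwa [show k + 1 + j = k + (j+1) by omega] at this

private lemma PQ {a b c ε : ℝ} {f : ℝ → ℝ}
    (hf : ContDiffOn ℝ (⊤ : ℕ∞) f (Set.Icc a b))
    (hd : ∀ t ∈ Ioo a b, HasDerivAt f (iteratedDerivWithin 1 f (Icc a b) t) t)
    {x w z : ℝ}
    (hx : x ∈ {t ∈ Set.Icc a b | |f t - c| ≤ ε}) (hw : w ∈ {t ∈ Set.Icc a b | |f t - c| ≤ ε})
    (hxz : x < z) (hzw : z < w) (hz : z ∉ {t ∈ Set.Icc a b | |f t - c| ≤ ε}) :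
    ∃ p q : ℝ, p ∈ Ioo x z ∧ q ∈ Ioo z w ∧
      ((0 < iteratedDerivWithin 1 f (Icc a b) p ∧ iteratedDerivWithin 1 f (Icc a b) q < 0) ∨
       (iteratedDerivWithin 1 f (Icc a b) p < 0 ∧ 0 < iteratedDerivWithin 1 f (Icc a b) q)) := by
  set g1 := iteratedDerivWithin 1 f (Icc a b) with hg1
  have hxI : x ∈ Icc a b := hx.1
  have hwI : w ∈ Icc a b := hw.1
  have hzI : z ∈ Icc a b := ⟨hxI.1.trans hxz.le, hzw.le.trans hwI.2⟩
  have hzband : ε < |f z - c| := by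
    by_contra h
    exact hz ⟨hzI, not_lt.1 h⟩
  have hsub1 : Ioo x z ⊆ Ioo a b := fun t ht =>
    ⟨lt_of_le_of_lt hxI.1 ht.1, lt_of_lt_of_le ht.2 (hzw.le.trans hwI.2)⟩
  have hsub2 : Ioo z w ⊆ Ioo a b := fun t ht =>
    ⟨lt_of_le_of_lt (hxI.1.trans hxz.le) ht.1, lt_of_lt_of_le ht.2 hwI.2⟩
  have hcont := hf.continuousOn
  have hc1 : ContinuousOn f (Icc x z) := hcont.mono (Icc_subset_Icc hxI.1 hzI.2)
  have hc2 : ContinuousOn f (Icc z w) := hcont.mono (Icc_subset_Icc hzI.1 hwI.2)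
  obtain ⟨p, hp, hpe⟩ := exists_hasDerivAt_eq_slope f g1 hxz hc1 (fun t ht => hd t (hsub1 ht))
  obtain ⟨q, hq, hqe⟩ := exists_hasDerivAt_eq_slope f g1 hzw hc2 (fun t ht => hd t (hsub2 ht))
  have hxb : |f x - c| ≤ ε := hx.2
  have hwb : |f w - c| ≤ ε := hw.2
  rw [abs_le] at hxb hwb
  refine ⟨p, q, hp, hq, ?_⟩
  rcases lt_or_ge ε (f z - c) with hcase | hcase
  · left
    constructor
    · rw [hpe]
      apply div_pos (by linarith) (by linarith)
    · rw [hqe]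
      apply div_neg_of_neg_of_pos (by linarith) (by linarith)
  · have hcase' : f z - c < -ε := by
      rcases lt_or_ge (f z - c) (-ε) with h | h
      · exact h
      · exact absurd (abs_le.2 ⟨h, hcase⟩) (not_le.2 hzband)
    right
    constructor
    · rw [hpe]
      apply div_neg_of_neg_of_pos (by linarith) (by linarith)
    · rw [hqe]
      apply div_pos (by linarith) (by linarith)

private lemma claimA {a b c ε : ℝ} {f : ℝ → ℝ}
    (hf : ContDiffOn ℝ (⊤ : ℕ∞) f (Set.Icc a b))
    (hd : ∀ t ∈ Ioo a b, HasDerivAt f (iteratedDerivWithin 1 f (Icc a b) t) t) :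
    ∀ (m : ℕ) (z₀ : ℝ), AltGaps ({t ∈ Set.Icc a b | |f t - c| ≤ ε} ∩ Ioi z₀) (m+1) →
    ∃ (s : ℝ) (u : ℕ → ℝ), (s = 1 ∨ s = -1) ∧ (∀ i ≤ m+1, u i ∈ Ioo a b) ∧
      (∀ i, i + 1 ≤ m+1 → u i < u (i+1)) ∧
      (∀ i ≤ m+1, 0 < s * (-1)^i * iteratedDerivWithin 1 f (Icc a b) (u i)) ∧
      ∃ w ∈ {t ∈ Set.Icc a b | |f t - c| ≤ ε} ∩ Ioi z₀, w < u 0 := by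
  set S := {t ∈ Set.Icc a b | |f t - c| ≤ ε} with hSdef
  set g1 := iteratedDerivWithin 1 f (Icc a b) with hg1
  intro m
  induction m with
  | zero =>
    intro z₀ h
    obtain ⟨z, hz, ⟨x, hx⟩, hne⟩ := h
    obtain ⟨w, hw⟩ := (hne : (S ∩ Ioi z₀ ∩ Ioi z).Nonempty)
    have hxS : x ∈ S := hx.1.1
    have hxz : x < z := hx.2
    have hzw : z < w := hw.2
    have hwS : w ∈ S := hw.1.1
    have hzS : z ∉ S := fun h => hz ⟨h, hx.1.2.trans hxz⟩
    obtain ⟨p, q, hp, hq, hpat⟩ := PQ hf hd hxS hwS hxz hzw hzS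
    have hpI : p ∈ Ioo a b := ⟨lt_of_le_of_lt hxS.1.1 hp.1,
      lt_of_lt_of_le (hp.2.trans (hzw.trans_le (le_refl w))) hwS.1.2⟩
    have hqI : q ∈ Ioo a b := ⟨lt_of_le_of_lt hxS.1.1 (hxz.trans hq.1),
      lt_of_lt_of_le hq.2 hwS.1.2⟩
    have hpq : p < q := hp.2.trans hq.1
    rcases hpat with ⟨h1, h2⟩ | ⟨h1, h2⟩
    · refine ⟨1, fun i => if i = 0 then p else q, Or.inl rfl, ?_, ?_, ?_,
        ⟨x, hx.1, by simpa using hp.1⟩⟩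
      · intro i hi
        rcases i with _ | _ | i
        · simpa using hpI
        · simpa using hqI
        · exact absurd hi (by omega)
      · intro i hi
        rcases i with _ | i
        · simpa using hpq
        · exact absurd hi (by omega)
      · intro i hi
        rcases i with _ | _ | i
        · simpa [hg1] using h1
        · simpa [hg1] using h2
        · exact absurd hi (by omega)
    · refine ⟨-1, fun i => if i = 0 then p else q, Or.inr rfl, ?_, ?_, ?_,
        ⟨x, hx.1, by simpa using hp.1⟩⟩
      · intro i hi
        rcases i with _ | _ | i
        · simpa using hpI
        · simpa using hqI
        · exact absurd hi (by omega)
      · intro i hi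
        rcases i with _ | i
        · simpa using hpq
        · exact absurd hi (by omega)
      · intro i hi
        rcases i with _ | _ | i
        · simpa [hg1] using h1
        · simpa [hg1] using h2
        · exact absurd hi (by omega)
  | succ m ih =>
    intro z₀ h
    obtain ⟨z, hz, ⟨x, hx⟩, h'⟩ := h
    have hxS : x ∈ S := hx.1.1
    have hz₀x : z₀ < x := hx.1.2
    have hxz : x < z := hx.2
    have hzS : z ∉ S := fun h => hz ⟨h, hz₀x.trans hxz⟩
    have e : S ∩ Ioi z₀ ∩ Ioi z = S ∩ Ioi z := by
      ext t; simp only [mem_inter_iff, mem_Ioi]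
      exact ⟨fun h => ⟨h.1.1, h.2⟩, fun h => ⟨⟨h.1, (hz₀x.trans hxz).trans h.2⟩, h.2⟩⟩
    rw [e] at h'
    obtain ⟨s, u, hs, hio, hmono, hsgn, w, hwS, hwu⟩ := ih z h'
    have hwz : z < w := hwS.2
    obtain ⟨p, q, hp, hq, hpat⟩ := PQ hf hd hxS hwS.1 hxz hwz hzS
    have hpI : p ∈ Ioo a b := ⟨lt_of_le_of_lt hxS.1.1 hp.1,
      lt_of_lt_of_le (hp.2.trans hwz) hwS.1.1.2⟩
    have hqI : q ∈ Ioo a b := ⟨lt_of_le_of_lt hxS.1.1 (hxz.trans hq.1),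
      lt_of_lt_of_le hq.2 hwS.1.1.2⟩
    have hpu : p < u 0 := (hp.2.trans hwz).trans hwu
    have hqu : q < u 0 := hq.2.trans hwu
    have hxp : x < p := hp.1
    have hxq : x < q := hxz.trans hq.1
    -- choose the point to prepend
    have hr : ∃ r, r ∈ Ioo a b ∧ x < r ∧ r < u 0 ∧ 0 < (-s) * g1 r := by
      rcases hpat with ⟨h1, h2⟩ | ⟨h1, h2⟩ <;> rcases hs with hs1 | hs1 <;> subst hs1
      · exact ⟨q, hqI, hxq, hqu, by simpa [hg1] using h2⟩
      · exact ⟨p, hpI, hxp, hpu, by simpa [hg1] using h1⟩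
      · exact ⟨p, hpI, hxp, hpu, by simpa [hg1] using h1⟩
      · exact ⟨q, hqI, hxq, hqu, by simpa [hg1] using h2⟩
    obtain ⟨r, hrI, hxr, hru, hrsgn⟩ := hr
    refine ⟨-s, fun i => if i = 0 then r else u (i-1), ?_, ?_, ?_, ?_,
      ⟨x, hx.1, by simpa using hxr⟩⟩
    · rcases hs with h | h <;> simp [h]
    · intro i hi
      match i with
      | 0 => simpa using hrI
      | (j+1) => simpa using hio j (by omega)
    · intro i hi
      match i with
      | 0 => simpa using hru
      | (j+1) =>
        simpa using hmono j (by omega)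
    · intro i hi
      match i with
      | 0 => simpa using hrsgn
      | (j+1) =>
        have h := hsgn j (by omega)
        dsimp only
        rw [if_neg (Nat.succ_ne_zero j), Nat.add_sub_cancel]
        have e2 : (-s) * (-1:ℝ)^(j+1) * g1 (u j) = s * (-1)^j * g1 (u j) := by
          rw [pow_succ]; ring
        rw [e2]; exact h

/-- Let `N ≥ 1` and let `f` be smooth on `I = [a, b]` with `f^{(N)}`
single-signed on `I`. Then for every `c ∈ ℝ` and `ε > 0`, the set
`{x ∈ I : |f x - c| ≤ ε}` is a union of at most `N` (possibly empty) intervals. -/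
theorem stmt_14 (N : ℕ) (hN : 1 ≤ N) (a b : ℝ) (hab : a ≤ b) (f : ℝ → ℝ)
    (hf : ContDiffOn ℝ (⊤ : ℕ∞) f (Set.Icc a b))
    (hsign : (∀ x ∈ Set.Icc a b, 0 ≤ iteratedDerivWithin N f (Set.Icc a b) x) ∨
      (∀ x ∈ Set.Icc a b, iteratedDerivWithin N f (Set.Icc a b) x ≤ 0))
    (c : ℝ) (ε : ℝ) (hε : 0 < ε) :
    ∃ t : Fin N → Set ℝ, (∀ i, (t i).OrdConnected) ∧
      {x ∈ Set.Icc a b | |f x - c| ≤ ε} = ⋃ i, t i := by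
  set S := {x ∈ Set.Icc a b | |f x - c| ≤ ε} with hSdef
  rcases eq_or_lt_of_le hab with heq | hlt
  · -- degenerate case a = b
    subst heq
    have hss : S.OrdConnected := by
      constructor
      intro x hx y hy
      have hx' : x = a := le_antisymm hx.1.2 hx.1.1
      have hy' : y = a := le_antisymm hy.1.2 hy.1.1
      subst hx'; rw [hy']
      intro t ht
      have : t = x := le_antisymm ht.2 ht.1
      rw [this]; exact hx
    haveI : Nonempty (Fin N) := ⟨⟨0, hN⟩⟩
    exact ⟨fun _ => S, fun _ => hss, by rw [Set.iUnion_const]⟩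
  · apply altGaps_cover N S
    intro hA
    have hd : ∀ t ∈ Ioo a b, HasDerivAt f (iteratedDerivWithin 1 f (Icc a b) t) t := by
      intro t ht
      have := hder_main hlt hf 0 t ht
      rwa [iteratedDerivWithin_zero] at this
    have hA' : AltGaps (S ∩ Ioi (a - 1)) ((N - 1) + 1) := by
      have hSsub : S ∩ Ioi (a-1) = S := by
        apply inter_eq_self_of_subset_left
        intro t ht
        exact lt_of_lt_of_le (by linarith) ht.1.1
      rw [hSsub, show N - 1 + 1 = N by omega]
      exact hA
    obtain ⟨s, u, hs, hio, hmono, hsgn, -⟩ := claimA hf hd (N-1) (a-1) hA'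
    have hpack : AltPack a b (iteratedDerivWithin 1 f (Icc a b)) (1 + (N-1)) := by
      refine ⟨s, u, hs, ?_, ?_, ?_⟩ <;> intro i <;> intro hi
      · exact hio i (by omega)
      · exact hmono i (by omega)
      · exact hsgn i (by omega)
    have hfinal := cascade (G := fun k => iteratedDerivWithin k f (Icc a b))
      (hder_main hlt hf) (N-1) 1 1 hpack
    rw [show 1 + (N - 1) = N by omega] at hfinal
    obtain ⟨s', u', hs', hio', -, hsgn'⟩ := hfinal
    have h0 := hsgn' 0 (by omega)
    have h1 := hsgn' 1 (by omega)
    simp only [pow_zero, pow_one, mul_one] at h0 h1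
    have hu0 : u' 0 ∈ Icc a b := Ioo_subset_Icc_self (hio' 0 (by omega))
    have hu1 : u' 1 ∈ Icc a b := Ioo_subset_Icc_self (hio' 1 (by omega))
    rcases hsign with hpos | hneg <;> rcases hs' with h | h <;> subst h
    · have := hpos (u' 1) hu1; nlinarith
    · have := hpos (u' 0) hu0; nlinarith
    · have := hneg (u' 0) hu0; nlinarith
    · have := hneg (u' 1) hu1; nlinarith
end
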